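/- arXiv:math/0511079 — 11 statements merged into one kernel-verified Lean document; each statement's English description precedes it below -/
import Mathlib

section
/- For every complex polynomial f there exist polynomials g0 and g1 with (1−2x)·(g0(x) − t0·f(x)) = (c−x)(d−x)·(f(1−x) − f(x)) and 2x·(g1(x) − t1·f(x)) = (a+x)(b+x)·(f(−x) − f(x)) for all x (so T0 f := g0 and T1 f := g1 are well-defined polynomials), and the resulting linear operators on ℂ[x] satisfy T0(T0 f) = t0²·f and T1(T1 f) = t1²·f for every polynomial f. -/
open Polynomial

/-- For every complex polynomial `f` there exist polynomials `g0`, `g1` with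
`(1−2x)·(g0(x) − t0·f(x)) = (c−x)(d−x)·(f(1−x) − f(x))` and
`2x·(g1(x) − t1·f(x)) = (a+x)(b+x)·(f(−x) − f(x))` for all `x` (so `T0 f := g0` and
`T1 f := g1` are well-defined polynomials), and the resulting operators satisfy
`T0(T0 f) = t0²·f` and `T1(T1 f) = t1²·f`. -/
theorem statement1 (t0 u0 t1 u1 a b c d : ℂ)
    (ha : a = t1 + u1) (hb : b = t1 - u1)
    (hc : c = t0 + u0 + 1/2) (hd : d = t0 - u0 + 1/2) :
    (∀ f : Polynomial ℂ, ∃ g0 g1 : Polynomial ℂ,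
      (∀ x : ℂ, (1 - 2*x) * (g0.eval x - t0 * f.eval x) =
        (c - x) * (d - x) * (f.eval (1 - x) - f.eval x)) ∧
      (∀ x : ℂ, (2*x) * (g1.eval x - t1 * f.eval x) =
        (a + x) * (b + x) * (f.eval (-x) - f.eval x))) ∧
    (∀ T0 T1 : Polynomial ℂ → Polynomial ℂ,
      (∀ (f : Polynomial ℂ) (x : ℂ),
        (1 - 2*x) * ((T0 f).eval x - t0 * f.eval x) =
          (c - x) * (d - x) * (f.eval (1 - x) - f.eval x)) →
      (∀ (f : Polynomial ℂ) (x : ℂ),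
        (2*x) * ((T1 f).eval x - t1 * f.eval x) =
          (a + x) * (b + x) * (f.eval (-x) - f.eval x)) →
      ∀ f : Polynomial ℂ, T0 (T0 f) = t0^2 • f ∧ T1 (T1 f) = t1^2 • f) := by
  constructor
  · intro f
    -- construct g0
    have h0 : (X - C ((1:ℂ)/2)) ∣ (f.comp (1 - X) - f) := by
      rw [dvd_iff_isRoot]
      simp [IsRoot, eval_comp]
      norm_num
    obtain ⟨q0, hq0⟩ := h0
    have h1 : (X : Polynomial ℂ) ∣ (f.comp (-X) - f) := by
      rw [X_dvd_iff, coeff_zero_eq_eval_zero]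
      simp [eval_comp]
    obtain ⟨q1, hq1⟩ := h1
    refine ⟨C t0 * f - C (1/2) * (C c - X) * (C d - X) * q0,
            C t1 * f + C (1/2) * (C a + X) * (C b + X) * q1, ?_, ?_⟩
    · intro x
      have e0 : f.eval (1 - x) - f.eval x = (x - 1/2) * q0.eval x := by
        have := congrArg (eval x) hq0
        simpa [eval_comp] using this
      simp only [eval_sub, eval_mul, eval_add, eval_C, eval_X]
      rw [e0]; ring
    · intro x
      have e1 : f.eval (-x) - f.eval x = x * q1.eval x := by
        have := congrArg (eval x) hq1
        simpa [eval_comp] using this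
      simp only [eval_sub, eval_mul, eval_add, eval_C, eval_X]
      rw [e1]; ring
  · intro T0 T1 hT0 hT1 f
    constructor
    · apply Polynomial.eq_of_infinite_eval_eq
      apply Set.Infinite.mono (s := {(1/2 : ℂ)}ᶜ)
      · intro x hx
        have hs : (1 : ℂ) - 2*x ≠ 0 := by
          intro h
          apply hx
          have : x = 1/2 := by linear_combination -h/2
          simp [this]
        have h1 := hT0 f x
        have h2 := hT0 f (1 - x)
        have h3 := hT0 (T0 f) x
        simp only [show (1:ℂ) - (1 - x) = x by ring] at h2
        have key : (1 - 2*x)^2 * ((T0 (T0 f)).eval x - t0^2 * f.eval x) = 0 := by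
          subst hc hd
          linear_combination (1 - 2*x) * h3
            + (t0*(1-2*x) - (t0 + u0 + 1/2 - x) * (t0 - u0 + 1/2 - x)) * h1
            - (t0 + u0 + 1/2 - x) * (t0 - u0 + 1/2 - x) * h2
        have := mul_eq_zero.mp key
        rcases this with h | h
        · exact absurd h (pow_ne_zero 2 hs)
        · simp only [Set.mem_setOf_eq, eval_smul, smul_eq_mul]
          linear_combination h
      · exact (Set.finite_singleton _).infinite_compl
    · apply Polynomial.eq_of_infinite_eval_eq
      apply Set.Infinite.mono (s := {(0 : ℂ)}ᶜ)
      · intro x hx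
        have hs : (2 : ℂ) * x ≠ 0 := by
          intro h
          apply hx
          have : x = 0 := by linear_combination h/2
          simp [this]
        have h1 := hT1 f x
        have h2 := hT1 f (-x)
        have h3 := hT1 (T1 f) x
        simp only [neg_neg] at h2
        have key : (2*x)^2 * ((T1 (T1 f)).eval x - t1^2 * f.eval x) = 0 := by
          subst ha hb
          linear_combination (2*x) * h3
            + (t1*(2*x) - (t1 + u1 + x) * (t1 - u1 + x)) * h1
            - (t1 + u1 + x) * (t1 - u1 + x) * h2
        have := mul_eq_zero.mp key
        rcases this with h | h
        · exact absurd h (pow_ne_zero 2 hs)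
        · simp only [Set.mem_setOf_eq, eval_smul, smul_eq_mul]
          linear_combination h
      · exact (Set.finite_singleton _).infinite_compl
end

section
/- The operator Y = T0 + T1 is triangular on ℂ[x]: for every m ∈ ℤ≥0 the polynomial Y(x^m) − γ_m·x^m has degree strictly less than m, where γ_{2n} = t0+t1+n and γ_{2n−1} = −(t0+t1+n). -/
/-!
Multiplying by `2x(1 - 2x)` clears the denominators of `T0` and `T1`, so
`2x(1 - 2x) (Y(x^m) - γ x^m)` is an explicit polynomial of degree at most `m + 3`.
Its `x^(m+3)`-coefficient cancels identically, and its `x^(m+2)`-coefficient is a linear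
expression in `(-1)^m`, `m` and `γ` which vanishes exactly for `γ = γ_m`; the parity of `m`
enters only through `(-1)^m`. Dividing by the quadratic factor again gives degree `< m`.
-/

open Polynomial

section DegreeBounds

variable {R : Type*}

lemma degree_mul_lt_of_le_of_lt [Semiring R] {p q : R[X]} {a b : ℕ}
    (hp : p.degree ≤ a) (hq : q.degree < b) : (p * q).degree < (a + b : ℕ) := by
  rcases eq_or_ne q 0 with rfl | hq0
  · simp
  rw [degree_eq_natDegree hq0, Nat.cast_lt] at hq
  calc (p * q).degree ≤ (a + q.natDegree : ℕ) := by
        rw [Nat.cast_add]; exact degree_mul_le_of_le hp degree_le_natDegree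
    _ < (a + b : ℕ) := by exact_mod_cast Nat.add_lt_add_left hq a

lemma degree_lt_of_degree_mul_lt [Semiring R] [NoZeroDivisors R] {p q : R[X]} {k m : ℕ}
    (hp : p.degree = k) (h : (p * q).degree < (m + k : ℕ)) : q.degree < m := by
  rcases eq_or_ne q 0 with rfl | hq0
  · simp
  rw [degree_mul, hp, degree_eq_natDegree hq0, ← Nat.cast_add, Nat.cast_lt] at h
  rw [degree_eq_natDegree hq0, Nat.cast_lt]
  omega

lemma degree_X_mul_one_sub_X_pow_sub_lt [CommRing R] (m : ℕ) :
    (X * (1 - X) ^ m - (-1) ^ m * X ^ (m + 1) + (-1) ^ m * (m : R[X]) * X ^ m).degree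
      < (m : WithBot ℕ) := by
  induction m with
  | zero => simp
  | succ m ih =>
    have hrec : X * (1 - X) ^ (m + 1) - (-1) ^ (m + 1) * X ^ (m + 1 + 1)
          + (-1) ^ (m + 1) * ((m + 1 : ℕ) : R[X]) * X ^ (m + 1)
        = (1 - X) * (X * (1 - X) ^ m - (-1) ^ m * X ^ (m + 1) + (-1) ^ m * (m : R[X]) * X ^ m)
          - (-1) ^ m * (m : R[X]) * X ^ m := by
      push_cast; ring
    rw [hrec]
    refine (degree_sub_le _ _).trans_lt (max_lt ?_ ?_)
    · have := degree_mul_lt_of_le_of_lt (p := (1 - X : R[X])) (a := 1) (by compute_degree!) ih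
      rwa [add_comm 1 m] at this
    · calc ((-1) ^ m * (m : R[X]) * X ^ m).degree ≤ (m : WithBot ℕ) := by compute_degree!
        _ < (m + 1 : ℕ) := by exact_mod_cast Nat.lt_succ_self m

lemma degree_lt_of_eigenvalue_relation [CommRing R] (a b c d k : R) (m : ℕ)
    (hrel : ((-1) ^ m - 1) * (1 - 2 * (a + b) - 2 * (c + d)) = 2 * (-1) ^ m * m + 4 * k) :
    (2 * (C c - X) * (C d - X) * (X * ((1 - X) ^ m - X ^ m))
      + (1 - 2 * X) * (C a + X) * (C b + X) * C ((-1) ^ m - 1) * X ^ m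
      + 2 * X * (1 - 2 * X) * C k * X ^ m).degree < ((m + 2 : ℕ) : WithBot ℕ) := by
  set ε : R := (-1) ^ m
  have hsplit : 2 * (C c - X) * (C d - X) * (X * ((1 - X) ^ m - X ^ m))
      + (1 - 2 * X) * (C a + X) * (C b + X) * C (ε - 1) * X ^ m
      + 2 * X * (1 - 2 * X) * C k * X ^ m
      = 2 * (C c - X) * (C d - X)
          * (X * (1 - X) ^ m - (-1) ^ m * X ^ (m + 1) + (-1) ^ m * (m : R[X]) * X ^ m)
        + C ((ε - 1) * a * b - 2 * ε * m * c * d) * X ^ m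
        + C (2 * (ε - 1) * c * d + 2 * ε * m * (c + d) + (ε - 1) * (a + b - 2 * a * b) + 2 * k)
          * X ^ (m + 1) := by
    -- the `X ^ (m + 2)`-coefficient of the difference is the defect of `hrel`
    have hC := congrArg C hrel
    simp only [ε, map_mul, map_sub, map_add, map_pow, map_neg, map_one, map_natCast,
      map_ofNat] at hC ⊢
    linear_combination X ^ (m + 2) * hC
  rw [hsplit]
  refine (degree_add_le _ _).trans_lt (max_lt ((degree_add_le _ _).trans_lt (max_lt ?_ ?_)) ?_)
  · have := degree_mul_lt_of_le_of_lt (p := 2 * (C c - X) * (C d - X)) (a := 2)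
      (by compute_degree!) (degree_X_mul_one_sub_X_pow_sub_lt (R := R) m)
    rwa [add_comm 2 m] at this
  · exact (degree_C_mul_X_pow_le _ _).trans_lt (by exact_mod_cast (by omega : m < m + 2))
  · exact (degree_C_mul_X_pow_le _ _).trans_lt (by exact_mod_cast (by omega : m + 1 < m + 2))

end DegreeBounds

lemma mul_T0_add_T1_X_pow_sub_smul {t0 t1 a b c d : ℂ} {T0 T1 : ℂ[X] → ℂ[X]}
    (hT0 : ∀ (f : ℂ[X]) (x : ℂ),
      (1 - 2 * x) * ((T0 f).eval x - t0 * f.eval x) =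
        (c - x) * (d - x) * (f.eval (1 - x) - f.eval x))
    (hT1 : ∀ (f : ℂ[X]) (x : ℂ),
      (2 * x) * ((T1 f).eval x - t1 * f.eval x) =
        (a + x) * (b + x) * (f.eval (-x) - f.eval x))
    (γ : ℂ) (m : ℕ) :
    2 * X * (1 - 2 * X) * (T0 (X ^ m) + T1 (X ^ m) - γ • X ^ m) =
      2 * (C c - X) * (C d - X) * (X * ((1 - X) ^ m - X ^ m))
        + (1 - 2 * X) * (C a + X) * (C b + X) * C ((-1) ^ m - 1) * X ^ m
        + 2 * X * (1 - 2 * X) * C (t0 + t1 - γ) * X ^ m := by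
  refine Polynomial.funext fun x => ?_
  have h0 := hT0 (X ^ m) x
  have h1 := hT1 (X ^ m) x
  simp only [eval_pow, eval_X] at h0 h1
  simp only [eval_mul, eval_add, eval_sub, eval_pow, eval_X, eval_C, eval_one, eval_smul,
    smul_eq_mul, eval_ofNat]
  linear_combination (2 * x) * h0 + (1 - 2 * x) * h1
    + (1 - 2 * x) * (a + x) * (b + x) * neg_pow x m

lemma eigenvalue_relation {t0 u0 t1 u1 a b c d : ℂ}
    (ha : a = t1 + u1) (hb : b = t1 - u1)
    (hc : c = t0 + u0 + 1/2) (hd : d = t0 - u0 + 1/2)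
    {γ : ℕ → ℂ}
    (hγe : ∀ n : ℕ, γ (2*n) = t0 + t1 + n)
    (hγo : ∀ n : ℕ, γ (2*n+1) = -(t0 + t1 + (n+1))) (m : ℕ) :
    ((-1) ^ m - 1) * (1 - 2 * (a + b) - 2 * (c + d))
      = 2 * (-1) ^ m * m + 4 * (t0 + t1 - γ m) := by
  subst ha hb hc hd
  obtain ⟨n, rfl | rfl⟩ := Nat.even_or_odd' m
  · rw [hγe, pow_mul, neg_one_sq, one_pow]
    push_cast
    ring
  · rw [hγo, pow_succ, pow_mul, neg_one_sq, one_pow]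
    push_cast
    ring

/-- `Y = T0 + T1` is triangular on `ℂ[x]`: for every `m` the polynomial
`Y(x^m) − γ_m·x^m` has degree strictly less than `m`, where `γ_{2n} = t0+t1+n` and
`γ_{2n+1} = −(t0+t1+n+1)`. -/
theorem statement2 (t0 u0 t1 u1 a b c d : ℂ)
    (ha : a = t1 + u1) (hb : b = t1 - u1)
    (hc : c = t0 + u0 + 1/2) (hd : d = t0 - u0 + 1/2)
    (T0 T1 : Polynomial ℂ → Polynomial ℂ)
    (hT0 : ∀ (f : Polynomial ℂ) (x : ℂ),
      (1 - 2*x) * ((T0 f).eval x - t0 * f.eval x) =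
        (c - x) * (d - x) * (f.eval (1 - x) - f.eval x))
    (hT1 : ∀ (f : Polynomial ℂ) (x : ℂ),
      (2*x) * ((T1 f).eval x - t1 * f.eval x) =
        (a + x) * (b + x) * (f.eval (-x) - f.eval x))
    (γ : ℕ → ℂ)
    (hγe : ∀ n : ℕ, γ (2*n) = t0 + t1 + n)
    (hγo : ∀ n : ℕ, γ (2*n+1) = -(t0 + t1 + (n+1))) :
    ∀ m : ℕ, (T0 (X^m) + T1 (X^m) - γ m • (X^m : Polynomial ℂ)).degree
      < (m : WithBot ℕ) := by
  intro m
  refine degree_lt_of_degree_mul_lt (p := 2 * X * (1 - 2 * X)) (k := 2) (by compute_degree!) ?_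
  rw [mul_T0_add_T1_X_pow_sub_smul hT0 hT1]
  exact degree_lt_of_eigenvalue_relation a b c d _ m (eigenvalue_relation ha hb hc hd hγe hγo m)
end

section
/- Assume 2(t0+t1) is not a nonpositive integer. Then for every m ∈ ℤ≥0 there exists a unique monic polynomial p_m of degree m such that Y p_m = γ_m·p_m (the non-symmetric Wilson polynomial of degree m). -/
/-!
Clearing the denominators `(1 - 2x)` and `2x` turns the formulas for `T0` and `T1` into one
polynomial identity for `Y = T0 + T1`. It shows that `Y` is linear and that
`Y xᵏ = γₖ xᵏ + (terms of degree < k)`: the `x^(k+1)` terms of `T0 xᵏ` and `T1 xᵏ` cancel.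
So `Y` is triangular in the monomial basis with diagonal `γ`, and the hypothesis on `t0 + t1`
makes the `γₖ` pairwise distinct. Hence `Y - γₘ` is injective, so bijective, on the polynomials
of degree `< m`; solving `(Y - γₘ) q = -(Y - γₘ) xᵐ` there gives `pₘ = xᵐ + q`, and injectivity
gives uniqueness.
-/

open Polynomial

namespace Polynomial

section Semiring

variable {R : Type*} [Semiring R]

theorem mul_mem_degreeLT {Q f : R[X]} {n d : ℕ} (hQ : Q.natDegree ≤ d)
    (hf : f ∈ degreeLT R n) : Q * f ∈ degreeLT R (n + d) := by
  rcases eq_or_ne f 0 with rfl | hf0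
  · simp
  have hfn : f.natDegree < n := (natDegree_lt_iff_degree_lt hf0).2 (mem_degreeLT.1 hf)
  refine mem_degreeLT.2 (degree_le_natDegree.trans_lt ?_)
  exact_mod_cast natDegree_mul_le.trans_lt (by omega : Q.natDegree + f.natDegree < n + d)

theorem mem_degreeLT_of_mul_mem [NoZeroDivisors R] {Q f : R[X]} {n : ℕ} (hQ : Q ≠ 0)
    (h : Q * f ∈ degreeLT R (n + Q.natDegree)) : f ∈ degreeLT R n := by
  rcases eq_or_ne f 0 with rfl | hf
  · exact Submodule.zero_mem _
  rw [mem_degreeLT, degree_eq_natDegree (mul_ne_zero hQ hf), natDegree_mul hQ hf] at h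
  have h' : Q.natDegree + f.natDegree < n + Q.natDegree := by exact_mod_cast h
  rw [mem_degreeLT, degree_eq_natDegree hf]
  exact_mod_cast (by omega : f.natDegree < n)

theorem degreeLT_le_comap_of_X_pow_mem {M : Type*} [AddCommMonoid M] [Module R M]
    {L : R[X] →ₗ[R] M} {S : Submodule R M} {n : ℕ} (h : ∀ k < n, L (X ^ k) ∈ S) :
    degreeLT R n ≤ S.comap L := by
  classical
  refine degreeLT_eq_span_X_pow.le.trans (Submodule.span_le.2 ?_)
  rw [Finset.coe_image, Set.image_subset_iff]
  exact fun k hk => h k (Finset.mem_range.1 hk)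

theorem C_mul_X_pow_mem_degreeLT {k n : ℕ} (h : k < n) (a : R) : C a * X ^ k ∈ degreeLT R n :=
  mem_degreeLT.2 ((degree_C_mul_X_pow_le k a).trans_lt (by exact_mod_cast h))

theorem X_pow_mem_degreeLT {k n : ℕ} (h : k < n) : (X ^ k : R[X]) ∈ degreeLT R n := by
  simpa using C_mul_X_pow_mem_degreeLT h (1 : R)

end Semiring

theorem Monic.sub_mem_degreeLT {R : Type*} [Ring R] [Nontrivial R] {p q : R[X]} {m : ℕ}
    (hp : p.Monic) (hq : q.Monic) (hpm : p.natDegree = m) (hqm : q.natDegree = m) :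
    p - q ∈ degreeLT R m := by
  rw [mem_degreeLT, ← hpm, ← degree_eq_natDegree hp.ne_zero]
  exact degree_sub_lt_left (by rw [degree_eq_natDegree hp.ne_zero, degree_eq_natDegree hq.ne_zero,
    hpm, hqm]) hp.ne_zero (by rw [hp.leadingCoeff, hq.leadingCoeff])

theorem X_mul_one_sub_X_pow_sub_mem_degreeLT {R : Type*} [CommRing R] (k : ℕ) :
    X * (1 - X) ^ k - C ((-1) ^ k) * (X ^ (k + 1) - C (k : R) * X ^ k) ∈ degreeLT R k := by
  induction k with
  | zero => simp
  | succ k ih =>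
    have hstep := mul_mem_degreeLT (Q := 1 - X) (d := 1) (by compute_degree) ih
    convert Submodule.sub_mem _ hstep
      (C_mul_X_pow_mem_degreeLT k.lt_succ_self ((-1) ^ k * (k : R))) using 1
    simp only [map_mul, map_pow, map_neg, map_one, map_natCast, Nat.cast_succ, map_add]
    ring

theorem isLinearMap_of_mul_eq {R : Type*} [CommRing R] [NoZeroDivisors R] {Q : R[X]}
    (hQ : Q ≠ 0) (L : R[X] →ₗ[R] R[X]) {T : R[X] → R[X]} (hT : ∀ f, Q * T f = L f) :
    IsLinearMap R T where
  map_add f g := mul_left_cancel₀ hQ (by rw [mul_add, hT, hT, hT, map_add])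
  map_smul r f := mul_left_cancel₀ hQ (by rw [mul_smul_comm, hT, hT, map_smul])

section Triangular

variable {K : Type*} [Field K] {Y : K[X] →ₗ[K] K[X]} {γ : ℕ → K}

theorem map_mem_degreeLT_of_triangular (hY : ∀ k, Y (X ^ k) - γ k • X ^ k ∈ degreeLT K k)
    {n : ℕ} {f : K[X]} (hf : f ∈ degreeLT K n) : Y f ∈ degreeLT K n := by
  refine degreeLT_le_comap_of_X_pow_mem (L := Y) (S := degreeLT K n) (fun k hk => ?_) hf
  simpa using Submodule.add_mem _ (degreeLT_mono hk.le (hY k))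
    (Submodule.smul_mem _ (γ k) (X_pow_mem_degreeLT hk))

theorem sub_smul_mem_degreeLT_of_triangular
    (hY : ∀ k, Y (X ^ k) - γ k • X ^ k ∈ degreeLT K k) {n : ℕ} {f : K[X]}
    (hf : f ∈ degreeLT K (n + 1)) : Y f - γ n • f ∈ degreeLT K n := by
  refine degreeLT_le_comap_of_X_pow_mem (L := Y - γ n • LinearMap.id) (S := degreeLT K n)
    (fun k hk => ?_) hf
  rcases (Nat.lt_succ_iff.1 hk).lt_or_eq with hk | rfl
  · exact Submodule.sub_mem _ (map_mem_degreeLT_of_triangular hY (X_pow_mem_degreeLT hk))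
      (Submodule.smul_mem _ _ (X_pow_mem_degreeLT hk))
  · exact hY k

theorem eq_zero_of_triangular (hY : ∀ k, Y (X ^ k) - γ k • X ^ k ∈ degreeLT K k) {m : ℕ}
    (hγ : ∀ k < m, γ k ≠ γ m) {f : K[X]} (hf : f ∈ degreeLT K m) (hfY : Y f = γ m • f) :
    f = 0 := by
  by_contra hf0
  have hn : f.natDegree < m := (natDegree_lt_iff_degree_lt hf0).2 (mem_degreeLT.1 hf)
  have hlow := sub_smul_mem_degreeLT_of_triangular hY
    (mem_degreeLT.2 (degree_le_natDegree.trans_lt (by exact_mod_cast f.natDegree.lt_succ_self)))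
  rw [hfY, ← sub_smul, smul_eq_C_mul, mem_degreeLT, degree_C_mul (sub_ne_zero.2 (hγ _ hn).symm),
    degree_eq_natDegree hf0] at hlow
  exact (lt_irrefl _) (by exact_mod_cast hlow)

theorem existsUnique_monic_eigenvector_of_triangular
    (hY : ∀ k, Y (X ^ k) - γ k • X ^ k ∈ degreeLT K k) {m : ℕ}
    (hγ : ∀ k < m, γ k ≠ γ m) :
    ∃! p : K[X], p.Monic ∧ p.natDegree = m ∧ Y p = γ m • p := by
  set A : K[X] →ₗ[K] K[X] := Y - γ m • LinearMap.id
  have hA : ∀ f, Y f = γ m • f ↔ A f = 0 := fun f => by simp [A, sub_eq_zero]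
  have hAm : ∀ f ∈ degreeLT K m, A f ∈ degreeLT K m := fun f hf =>
    Submodule.sub_mem _ (map_mem_degreeLT_of_triangular hY hf) (Submodule.smul_mem _ _ hf)
  have hinj : Function.Injective (A.restrict hAm) := by
    rw [← LinearMap.ker_eq_bot, LinearMap.ker_eq_bot']
    rintro ⟨f, hf⟩ h
    exact Subtype.ext (eq_zero_of_triangular hY hγ hf ((hA f).2 (congrArg Subtype.val h)))
  have hXm : -A (X ^ m) ∈ degreeLT K m := by simpa [A] using neg_mem (hY m)
  obtain ⟨⟨q, hq⟩, hAq⟩ := LinearMap.injective_iff_surjective.1 hinj ⟨_, hXm⟩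
  have hAq : A q = -A (X ^ m) := congrArg Subtype.val hAq
  have hqm : q.degree < m := mem_degreeLT.1 hq
  refine existsUnique_of_exists_of_unique ⟨X ^ m + q, monic_X_pow_add hqm, ?_, ?_⟩ ?_
  · rw [natDegree_add_eq_left_of_degree_lt (by rwa [degree_X_pow]), natDegree_X_pow]
  · rw [hA, map_add, hAq, add_neg_cancel]
  · rintro p p' ⟨hp, hpm, hpY⟩ ⟨hp', hp'm, hp'Y⟩
    refine sub_eq_zero.1 (eq_zero_of_triangular hY hγ (hp.sub_mem_degreeLT hp' hpm hp'm) ?_)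
    rw [map_sub, hpY, hp'Y, smul_sub]

end Triangular

end Polynomial

section Wilson

noncomputable def wilsonDenominator : ℂ[X] := (1 - 2 * X) * (2 * X)

noncomputable def wilsonNumerator (a b c d : ℂ) : ℂ[X] →ₗ[ℂ] ℂ[X] where
  toFun f := 2 * X * (C c - X) * (C d - X) * (f.comp (1 - X) - f)
    + (1 - 2 * X) * (C a + X) * (C b + X) * (f.comp (-X) - f)
  map_add' f g := by simp only [add_comp]; ring
  map_smul' r f := by simp only [RingHom.id_apply, smul_eq_C_mul, mul_comp, C_comp]; ring

noncomputable def wilsonEigenvalue (t : ℂ) (k : ℕ) : ℂ :=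
  (-1) ^ k * (t + k / 2) + ((-1) ^ k - 1) / 4

theorem natDegree_wilsonDenominator : wilsonDenominator.natDegree = 2 := by
  unfold wilsonDenominator
  compute_degree!

theorem wilsonDenominator_ne_zero : wilsonDenominator ≠ 0 :=
  ne_zero_of_natDegree_gt (n := 0) (by rw [natDegree_wilsonDenominator]; norm_num)

theorem wilsonEigenvalue_two_mul (t : ℂ) (n : ℕ) : wilsonEigenvalue t (2 * n) = t + n := by
  simp only [wilsonEigenvalue, pow_mul]
  push_cast
  ring

theorem wilsonEigenvalue_two_mul_add_one (t : ℂ) (n : ℕ) :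
    wilsonEigenvalue t (2 * n + 1) = -(t + (n + 1)) := by
  simp only [wilsonEigenvalue, pow_succ, pow_mul]
  push_cast
  ring

theorem wilsonEigenvalue_injective {t : ℂ} (ht : ∀ k : ℕ, 2 * t ≠ -k) :
    Function.Injective (wilsonEigenvalue t) := by
  intro i j hij
  obtain ⟨p, rfl | rfl⟩ := Nat.even_or_odd' i <;>
    obtain ⟨q, rfl | rfl⟩ := Nat.even_or_odd' j <;>
    simp only [wilsonEigenvalue_two_mul, wilsonEigenvalue_two_mul_add_one] at hij
  · have : p = q := by exact_mod_cast (by linear_combination hij : (p : ℂ) = q)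
    rw [this]
  · exact absurd (by push_cast; linear_combination hij) (ht (p + q + 1))
  · exact absurd (by push_cast; linear_combination -hij) (ht (p + q + 1))
  · have : p = q := by exact_mod_cast (by linear_combination -hij : (p : ℂ) = q)
    rw [this]

variable {t0 t1 a b c d : ℂ}

theorem mul_sub_eq_wilsonNumerator {T0 T1 : ℂ[X] → ℂ[X]}
    (hT0 : ∀ (f : ℂ[X]) (x : ℂ), (1 - 2 * x) * ((T0 f).eval x - t0 * f.eval x) =
      (c - x) * (d - x) * (f.eval (1 - x) - f.eval x))
    (hT1 : ∀ (f : ℂ[X]) (x : ℂ), (2 * x) * ((T1 f).eval x - t1 * f.eval x) =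
      (a + x) * (b + x) * (f.eval (-x) - f.eval x)) (f : ℂ[X]) :
    wilsonDenominator * (T0 f + T1 f - C (t0 + t1) * f) = wilsonNumerator a b c d f := by
  refine Polynomial.funext fun x => ?_
  simp only [wilsonDenominator, wilsonNumerator, LinearMap.coe_mk, AddHom.coe_mk, eval_mul,
    eval_add, eval_sub, eval_comp, eval_C, eval_X, eval_one, eval_ofNat, eval_neg]
  linear_combination (2 * x) * hT0 f x + (1 - 2 * x) * hT1 f x

theorem isLinearMap_of_mul_sub_eq_wilsonNumerator {Y : ℂ[X] → ℂ[X]}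
    (hY : ∀ f, wilsonDenominator * (Y f - C (t0 + t1) * f) = wilsonNumerator a b c d f) :
    IsLinearMap ℂ Y := by
  refine isLinearMap_of_mul_eq (Q := wilsonDenominator)
    (L := LinearMap.mulLeft ℂ (wilsonDenominator * C (t0 + t1)) + wilsonNumerator a b c d)
    wilsonDenominator_ne_zero fun f => ?_
  rw [LinearMap.add_apply, LinearMap.mulLeft_apply, ← hY]; ring

theorem wilsonNumerator_X_pow (k : ℕ) (lam : ℂ) :
    wilsonNumerator a b c d (X ^ k) - wilsonDenominator * (C lam * X ^ k) =
      2 * (C c - X) * (C d - X) *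
          (X * (1 - X) ^ k - C ((-1) ^ k) * (X ^ (k + 1) - C (k : ℂ) * X ^ k))
        + C (-2 * ((-1) ^ k - 1) * (c + d) - 2 * (-1) ^ k * k + ((-1) ^ k - 1) * (1 - 2 * (a + b))
            + 4 * lam) * X ^ (k + 2)
        + C (2 * ((-1) ^ k - 1) * (c * d) + 2 * (-1) ^ k * k * (c + d)
            + ((-1) ^ k - 1) * (a + b - 2 * (a * b)) - 2 * lam) * X ^ (k + 1)
        + C (-2 * (-1) ^ k * k * (c * d) + ((-1) ^ k - 1) * (a * b)) * X ^ k := by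
  simp only [wilsonNumerator, wilsonDenominator, LinearMap.coe_mk, AddHom.coe_mk, X_pow_comp,
    neg_pow (X : ℂ[X]), map_add, map_sub, map_mul, map_pow, map_neg, map_one, map_ofNat,
    map_natCast]
  ring

theorem triangular_of_mul_sub_eq_wilsonNumerator (hab : a + b = 2 * t1) (hcd : c + d = 2 * t0 + 1)
    {Y : ℂ[X] → ℂ[X]}
    (hY : ∀ f, wilsonDenominator * (Y f - C (t0 + t1) * f) = wilsonNumerator a b c d f)
    (k : ℕ) : Y (X ^ k) - wilsonEigenvalue (t0 + t1) k • X ^ k ∈ degreeLT ℂ k := by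
  refine mem_degreeLT_of_mul_mem wilsonDenominator_ne_zero ?_
  set lam := wilsonEigenvalue (t0 + t1) k - (t0 + t1)
  -- The `X ^ (k + 3)` terms cancel identically; the `X ^ (k + 2)` coefficient is what fixes `γ k`.
  have hlead : -2 * ((-1) ^ k - 1) * (c + d) - 2 * (-1) ^ k * k
      + ((-1) ^ k - 1) * (1 - 2 * (a + b)) + 4 * lam = 0 := by
    simp only [lam, wilsonEigenvalue]
    linear_combination (-2 * ((-1) ^ k - 1)) * hcd - 2 * ((-1) ^ k - 1) * hab
  have h : wilsonDenominator * (Y (X ^ k) - wilsonEigenvalue (t0 + t1) k • X ^ k) =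
      wilsonNumerator a b c d (X ^ k) - wilsonDenominator * (C lam * X ^ k) := by
    rw [← hY, smul_eq_C_mul, show wilsonEigenvalue (t0 + t1) k = t0 + t1 + lam by ring, C_add]
    ring
  rw [h, wilsonNumerator_X_pow, natDegree_wilsonDenominator, hlead, C_0, zero_mul,
    add_zero]
  refine add_mem (add_mem ?_ (C_mul_X_pow_mem_degreeLT (by omega) _))
    (C_mul_X_pow_mem_degreeLT (by omega) _)
  exact mul_mem_degreeLT (by compute_degree) (X_mul_one_sub_X_pow_sub_mem_degreeLT k)

end Wilson

/-- If `2(t0+t1)` is not a nonpositive integer, then for every `m ∈ ℤ≥0`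
there exists a unique monic polynomial `p_m` of degree `m` with `Y p_m = γ_m·p_m`. -/
theorem statement3 (t0 u0 t1 u1 a b c d : ℂ)
    (ha : a = t1 + u1) (hb : b = t1 - u1)
    (hc : c = t0 + u0 + 1/2) (hd : d = t0 - u0 + 1/2)
    (hreg : ∀ k : ℕ, 2*(t0 + t1) ≠ -(k : ℂ))
    (T0 T1 : Polynomial ℂ → Polynomial ℂ)
    (hT0 : ∀ (f : Polynomial ℂ) (x : ℂ),
      (1 - 2*x) * ((T0 f).eval x - t0 * f.eval x) =
        (c - x) * (d - x) * (f.eval (1 - x) - f.eval x))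
    (hT1 : ∀ (f : Polynomial ℂ) (x : ℂ),
      (2*x) * ((T1 f).eval x - t1 * f.eval x) =
        (a + x) * (b + x) * (f.eval (-x) - f.eval x))
    (γ : ℕ → ℂ)
    (hγe : ∀ n : ℕ, γ (2*n) = t0 + t1 + n)
    (hγo : ∀ n : ℕ, γ (2*n+1) = -(t0 + t1 + (n+1))) :
    ∀ m : ℕ, ∃! p : Polynomial ℂ,
      p.Monic ∧ p.natDegree = m ∧ T0 p + T1 p = γ m • p := by
  have hY := mul_sub_eq_wilsonNumerator hT0 hT1
  have hab : a + b = 2 * t1 := by rw [ha, hb]; ring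
  have hcd : c + d = 2 * t0 + 1 := by rw [hc, hd]; ring
  have hγ : γ = wilsonEigenvalue (t0 + t1) := by
    funext k
    obtain ⟨n, rfl | rfl⟩ := Nat.even_or_odd' k
    · rw [hγe, wilsonEigenvalue_two_mul]
    · rw [hγo, wilsonEigenvalue_two_mul_add_one]
  subst hγ
  intro m
  let Y := (isLinearMap_of_mul_sub_eq_wilsonNumerator hY).mk'
  exact existsUnique_monic_eigenvector_of_triangular (Y := Y)
    (triangular_of_mul_sub_eq_wilsonNumerator hab hcd hY)
    fun k hk => (wilsonEigenvalue_injective hreg).ne hk.ne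
end

section
/- One has T1 p_0 = t1·p_0, and for m ≥ 1: if m is odd then T1 p_m = −p_{m+1} + b_m·p_m, while if m is even then T1 p_m = b_m·p_m + (b_m² − t1²)·p_{m−1}, where b_m = (γ_m+t1+t0)(γ_m+t1−t0)/(2γ_m) − t1. -/
open Polynomial Finset

private lemma poly_ext_aux (z : ℂ) {f g : ℂ[X]} (h : ∀ x : ℂ, x ≠ z → f.eval x = g.eval x) :
    f = g := by
  apply Polynomial.eq_of_infinite_eval_eq
  have h1 : ({z}ᶜ : Set ℂ) ⊆ {x | Polynomial.eval x f = Polynomial.eval x g} :=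
    fun x hx => h x hx
  exact Set.Infinite.mono h1 ((Set.finite_singleton z).infinite_compl)

private lemma T1_lin3 {T1 : ℂ[X] → ℂ[X]} {t1 a b : ℂ}
    (hT1 : ∀ (f : ℂ[X]) (x : ℂ), (2*x) * ((T1 f).eval x - t1 * f.eval x) =
      (a + x) * (b + x) * (f.eval (-x) - f.eval x))
    (r s w : ℂ) (f g h : ℂ[X]) :
    T1 (r • f + s • g + w • h) = r • T1 f + s • T1 g + w • T1 h := by
  apply poly_ext_aux 0
  intro x hx
  have h1 := hT1 f x
  have h2 := hT1 g x
  have h3 := hT1 h x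
  have h4 := hT1 (r • f + s • g + w • h) x
  simp only [eval_add, eval_smul, smul_eq_mul] at h4 ⊢
  have h2x : (2:ℂ) * x ≠ 0 := mul_ne_zero two_ne_zero hx
  apply mul_left_cancel₀ h2x
  linear_combination h4 - r * h1 - s * h2 - w * h3

private lemma T0_lin3 {T0 : ℂ[X] → ℂ[X]} {t0 c d : ℂ}
    (hT0 : ∀ (f : ℂ[X]) (x : ℂ), (1 - 2*x) * ((T0 f).eval x - t0 * f.eval x) =
      (c - x) * (d - x) * (f.eval (1 - x) - f.eval x))
    (r s w : ℂ) (f g h : ℂ[X]) :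
    T0 (r • f + s • g + w • h) = r • T0 f + s • T0 g + w • T0 h := by
  apply poly_ext_aux (1/2)
  intro x hx
  have hD : (1:ℂ) - 2*x ≠ 0 := by
    intro h0; exact hx (by linear_combination (-(1:ℂ)/2) * h0)
  have h1 := hT0 f x
  have h2 := hT0 g x
  have h3 := hT0 h x
  have h4 := hT0 (r • f + s • g + w • h) x
  simp only [eval_add, eval_smul, smul_eq_mul] at h4 ⊢
  apply mul_left_cancel₀ hD
  linear_combination h4 - r * h1 - s * h2 - w * h3

private lemma T1_sq {T1 : ℂ[X] → ℂ[X]} {t1 a b : ℂ} (hab : a + b = 2*t1)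
    (hT1 : ∀ (f : ℂ[X]) (x : ℂ), (2*x) * ((T1 f).eval x - t1 * f.eval x) =
      (a + x) * (b + x) * (f.eval (-x) - f.eval x))
    (f : ℂ[X]) : T1 (T1 f) = (t1^2) • f := by
  apply poly_ext_aux 0
  intro x hx
  have h1 := hT1 f x
  have h2 := hT1 f (-x)
  have h3 := hT1 (T1 f) x
  simp only [neg_neg] at h2
  simp only [eval_smul, smul_eq_mul]
  have hx2 : (4:ℂ) * x^2 ≠ 0 := by
    apply mul_ne_zero (by norm_num)
    exact pow_ne_zero 2 hx
  apply mul_left_cancel₀ hx2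
  linear_combination (2*t1*x - (a+x)*(b+x)) * h1 - (a+x)*(b+x) * h2 + (2*x) * h3
    - ((f.eval (-x) - f.eval x) * (a+x)*(b+x) * (2*x)) * hab

private lemma T0_sq {T0 : ℂ[X] → ℂ[X]} {t0 c d : ℂ} (hcd : c + d = 2*t0 + 1)
    (hT0 : ∀ (f : ℂ[X]) (x : ℂ), (1 - 2*x) * ((T0 f).eval x - t0 * f.eval x) =
      (c - x) * (d - x) * (f.eval (1 - x) - f.eval x))
    (f : ℂ[X]) : T0 (T0 f) = (t0^2) • f := by
  apply poly_ext_aux (1/2)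
  intro x hx
  have hD : (1:ℂ) - 2*x ≠ 0 := by
    intro h0; exact hx (by linear_combination (-(1:ℂ)/2) * h0)
  have h1 := hT0 f x
  have h2 := hT0 f (1-x)
  have h3 := hT0 (T0 f) x
  have e : (1:ℂ) - (1 - x) = x := by ring
  rw [e] at h2
  simp only [eval_smul, smul_eq_mul]
  have hD2 : ((1:ℂ) - 2*x)^2 ≠ 0 := pow_ne_zero 2 hD
  apply mul_left_cancel₀ hD2
  linear_combination (t0*(1-2*x) - (c-x)*(d-x)) * h1 - (c-x)*(d-x) * h2 + (1-2*x) * h3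
    - ((f.eval (1-x) - f.eval x) * (c-x)*(d-x) * (1-2*x)) * hcd

private lemma T1_one {T1 : ℂ[X] → ℂ[X]} {t1 a b : ℂ}
    (hT1 : ∀ (f : ℂ[X]) (x : ℂ), (2*x) * ((T1 f).eval x - t1 * f.eval x) =
      (a + x) * (b + x) * (f.eval (-x) - f.eval x)) :
    T1 (1 : ℂ[X]) = t1 • (1 : ℂ[X]) := by
  apply poly_ext_aux 0
  intro x hx
  have h1 := hT1 1 x
  simp only [eval_one] at h1
  simp only [eval_smul, eval_one, smul_eq_mul, mul_one]
  have h2x : (2:ℂ) * x ≠ 0 := mul_ne_zero two_ne_zero hx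
  apply mul_left_cancel₀ h2x
  linear_combination h1

private lemma T1_deg {T1 : ℂ[X] → ℂ[X]} {t1 u1 : ℂ}
    (hT1 : ∀ (f : ℂ[X]) (x : ℂ), (2*x) * ((T1 f).eval x - t1 * f.eval x) =
      ((t1+u1) + x) * ((t1-u1) + x) * (f.eval (-x) - f.eval x))
    (f : ℂ[X]) :
    (T1 f).natDegree ≤ f.natDegree + 1 ∧
      (Odd f.natDegree → f.Monic → (T1 f).coeff (f.natDegree + 1) = -1) := by
  set h : ℂ[X] := f.comp (-X) - f with hh
  have key : C (2:ℂ) * (T1 f * X) =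
      C (2*t1) * (f * X) + ((h * X) * X + C (2*t1) * (h * X) + C (t1^2 - u1^2) * h) := by
    apply Polynomial.funext
    intro x
    simp only [eval_mul, eval_add, eval_sub, eval_comp, eval_neg, eval_X, eval_C, hh]
    linear_combination hT1 f x
  have hdegh : h.natDegree ≤ f.natDegree := by
    refine le_trans (natDegree_sub_le _ _) ?_
    simp [natDegree_comp]
  have hcoeff : ∀ i : ℕ, 2 * (T1 f).coeff (i+2) =
      2*t1 * f.coeff (i+2) + (h.coeff (i+1) + 2*t1 * h.coeff (i+2)
        + (t1^2-u1^2) * h.coeff (i+3)) := by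
    intro i
    have e := congrArg (fun q : ℂ[X] => q.coeff (i+3)) key
    simp only [coeff_add, coeff_C_mul] at e
    have ea1 : (T1 f * X).coeff (i+3) = (T1 f).coeff (i+2) := coeff_mul_X (T1 f) (i+2)
    have ea2 : (f * X).coeff (i+3) = f.coeff (i+2) := coeff_mul_X f (i+2)
    have ea3 : (h * X * X).coeff (i+3) = (h*X).coeff (i+2) := coeff_mul_X (h*X) (i+2)
    have ea4 : (h * X).coeff (i+2) = h.coeff (i+1) := coeff_mul_X h (i+1)
    have ea5 : (h * X).coeff (i+3) = h.coeff (i+2) := coeff_mul_X h (i+2)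
    rw [ea1, ea2, ea3, ea4, ea5] at e
    linear_combination e
  constructor
  · rw [natDegree_le_iff_coeff_eq_zero]
    intro j hj
    obtain ⟨i, rfl⟩ : ∃ i, j = i + 2 := ⟨j - 2, by omega⟩
    have hi : f.natDegree ≤ i := by omega
    have hc := hcoeff i
    rw [coeff_eq_zero_of_natDegree_lt (by omega : f.natDegree < i+2),
        coeff_eq_zero_of_natDegree_lt (by omega : h.natDegree < i+1),
        coeff_eq_zero_of_natDegree_lt (by omega : h.natDegree < i+2),
        coeff_eq_zero_of_natDegree_lt (by omega : h.natDegree < i+3)] at hc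
    linear_combination hc / 2
  · intro hodd hmon
    obtain ⟨s, hs⟩ := id hodd
    have hm1 : f.natDegree = (f.natDegree - 1) + 1 := by omega
    set i : ℕ := f.natDegree - 1 with hi
    have him : i + 1 = f.natDegree := by omega
    have hcompdeg : (f.comp (-X : ℂ[X])).natDegree = f.natDegree := by
      simp [natDegree_comp]
    have hcomp_coeff : (f.comp (-X : ℂ[X])).coeff f.natDegree = -1 := by
      have h1 : (f.comp (-X : ℂ[X])).coeff f.natDegree = (f.comp (-X : ℂ[X])).leadingCoeff := by
        rw [leadingCoeff, hcompdeg]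
      rw [h1, leadingCoeff_comp (by simp : (-X : ℂ[X]).natDegree ≠ 0)]
      rw [hmon.leadingCoeff, leadingCoeff_neg, leadingCoeff_X]
      simp [hodd.neg_one_pow]
    have hcm : h.coeff f.natDegree = -2 := by
      rw [hh, coeff_sub, hcomp_coeff, hmon.coeff_natDegree]; ring
    have hc := hcoeff i
    rw [show i + 1 = f.natDegree from him] at hc
    rw [hcm] at hc
    rw [coeff_eq_zero_of_natDegree_lt (by omega : f.natDegree < i+2),
        coeff_eq_zero_of_natDegree_lt (by omega : h.natDegree < i+2),
        coeff_eq_zero_of_natDegree_lt (by omega : h.natDegree < i+3)] at hc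
    have h2 : (T1 f).coeff (i + 2) = -1 := by
      have h3 : (2:ℂ) * (T1 f).coeff (i+2) = -2 := by linear_combination hc
      linear_combination h3 / 2
    rw [show f.natDegree + 1 = i + 2 by omega]
    exact h2

private lemma span_p (p : ℕ → ℂ[X]) (hmon : ∀ m, (p m).Monic) (hdeg : ∀ m, (p m).natDegree = m) :
    ∀ N (q : ℂ[X]), q.natDegree ≤ N → ∃ cf : ℕ → ℂ, q = ∑ k ∈ Finset.range (N+1), cf k • p k := by
  intro N
  induction N with
  | zero =>
    intro q hq
    refine ⟨fun _ => q.coeff 0, ?_⟩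
    have hp0 : p 0 = 1 := (hmon 0).natDegree_eq_zero.mp (hdeg 0)
    rw [Finset.sum_range_one, hp0, smul_eq_C_mul, mul_one]
    exact eq_C_of_natDegree_le_zero hq
  | succ N ih =>
    intro q hq
    have hpc : (p (N+1)).coeff (N+1) = 1 := by
      have := (hmon (N+1)).coeff_natDegree
      rwa [hdeg (N+1)] at this
    have hdr : (q - q.coeff (N+1) • p (N+1)).natDegree ≤ N := by
      rw [natDegree_le_iff_coeff_eq_zero]
      intro j hj
      rw [coeff_sub, coeff_smul, smul_eq_mul]
      rcases eq_or_lt_of_le (Nat.succ_le_of_lt hj) with hje | hjl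
      · rw [← hje, hpc, mul_one, sub_self]
      · rw [coeff_eq_zero_of_natDegree_lt (by omega : q.natDegree < j),
            coeff_eq_zero_of_natDegree_lt (by rw [hdeg]; omega : (p (N+1)).natDegree < j)]
        ring
    obtain ⟨cf, hcf⟩ := ih _ hdr
    refine ⟨fun k => if k = N+1 then q.coeff (N+1) else cf k, ?_⟩
    rw [Finset.sum_range_succ]
    beta_reduce
    rw [if_pos rfl]
    have hsum : ∑ k ∈ Finset.range (N+1), (if k = N+1 then q.coeff (N+1) else cf k) • p k
        = ∑ k ∈ Finset.range (N+1), cf k • p k := by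
      refine Finset.sum_congr rfl fun k hk => ?_
      rw [if_neg (by simp at hk; omega)]
    rw [hsum, ← hcf]
    abel

private lemma indep_p (p : ℕ → ℂ[X]) (hmon : ∀ m, (p m).Monic) (hdeg : ∀ m, (p m).natDegree = m) :
    ∀ N (cf : ℕ → ℂ), (∑ k ∈ Finset.range (N+1), cf k • p k) = 0 → ∀ k ≤ N, cf k = 0 := by
  intro N
  induction N with
  | zero =>
    intro cf hs k hk
    interval_cases k
    have hp0 : p 0 = 1 := (hmon 0).natDegree_eq_zero.mp (hdeg 0)
    rw [Finset.sum_range_one, hp0, smul_eq_C_mul, mul_one] at hs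
    exact_mod_cast (C_eq_zero).mp hs
  | succ N ih =>
    intro cf hs k hk
    have hN1 : cf (N+1) = 0 := by
      have hcz := congrArg (fun q : ℂ[X] => q.coeff (N+1)) hs
      simp only [finset_sum_coeff, coeff_smul, smul_eq_mul, coeff_zero] at hcz
      rw [Finset.sum_range_succ] at hcz
      have hzero : ∑ j ∈ Finset.range (N+1), cf j * (p j).coeff (N+1) = 0 := by
        refine Finset.sum_eq_zero fun j hj => ?_
        rw [coeff_eq_zero_of_natDegree_lt (by rw [hdeg]; simp at hj; omega), mul_zero]
      rw [hzero, zero_add] at hcz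
      have hpc : (p (N+1)).coeff (N+1) = 1 := by
        have := (hmon (N+1)).coeff_natDegree
        rwa [hdeg (N+1)] at this
      rwa [hpc, mul_one] at hcz
    rcases eq_or_lt_of_le hk with hke | hkl
    · rw [hke]; exact hN1
    · have hs' : ∑ k ∈ Finset.range (N+1), cf k • p k = 0 := by
        rw [Finset.sum_range_succ, hN1, zero_smul, add_zero] at hs
        exact hs
      exact ih cf hs' k (by omega)

/-- `T1 p_0 = t1·p_0`, and for `m ≥ 1`: if `m` is odd then
`T1 p_m = −p_{m+1} + b_m·p_m`, while if `m` is even then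
`T1 p_m = b_m·p_m + (b_m² − t1²)·p_{m−1}`, where
`b_m = (γ_m+t1+t0)(γ_m+t1−t0)/(2γ_m) − t1`. -/
theorem statement4 (t0 u0 t1 u1 a b c d : ℂ)
    (ha : a = t1 + u1) (hb : b = t1 - u1)
    (hc : c = t0 + u0 + 1/2) (hd : d = t0 - u0 + 1/2)
    (hreg : ∀ k : ℕ, 2*(t0 + t1) ≠ -(k : ℂ))
    (T0 T1 : Polynomial ℂ → Polynomial ℂ)
    (hT0 : ∀ (f : Polynomial ℂ) (x : ℂ),
      (1 - 2*x) * ((T0 f).eval x - t0 * f.eval x) =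
        (c - x) * (d - x) * (f.eval (1 - x) - f.eval x))
    (hT1 : ∀ (f : Polynomial ℂ) (x : ℂ),
      (2*x) * ((T1 f).eval x - t1 * f.eval x) =
        (a + x) * (b + x) * (f.eval (-x) - f.eval x))
    (γ : ℕ → ℂ)
    (hγe : ∀ n : ℕ, γ (2*n) = t0 + t1 + n)
    (hγo : ∀ n : ℕ, γ (2*n+1) = -(t0 + t1 + (n+1)))
    (p : ℕ → Polynomial ℂ)
    (hp : ∀ m : ℕ, (p m).Monic ∧ (p m).natDegree = m ∧
      T0 (p m) + T1 (p m) = γ m • p m)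
    (bb : ℕ → ℂ)
    (hbb : ∀ m : ℕ, bb m = (γ m + t1 + t0) * (γ m + t1 - t0) / (2 * γ m) - t1) :
    T1 (p 0) = t1 • p 0 ∧
    ∀ m : ℕ, 1 ≤ m →
      (Odd m → T1 (p m) = -(p (m+1)) + bb m • p m) ∧
      (Even m → T1 (p m) = bb m • p m + (bb m ^ 2 - t1 ^ 2) • p (m-1)) := by
  subst ha hb hc hd
  have hmon : ∀ m, (p m).Monic := fun m => (hp m).1
  have hdeg : ∀ m, (p m).natDegree = m := fun m => (hp m).2.1
  have heqm : ∀ m, T0 (p m) + T1 (p m) = γ m • p m := fun m => (hp m).2.2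
  have hab : (t1 + u1) + (t1 - u1) = 2 * t1 := by ring
  have hcd : (t0 + u0 + 1/2) + (t0 - u0 + 1/2) = 2 * t0 + 1 := by ring
  have gamma_ne : ∀ j k : ℕ, j ≠ k → γ j ≠ γ k := by
    intro j k hjk heq2
    rcases Nat.even_or_odd j with ⟨aj, rfl⟩ | ⟨aj, rfl⟩ <;>
      rcases Nat.even_or_odd k with ⟨ak, rfl⟩ | ⟨ak, rfl⟩
    · rw [show aj + aj = 2*aj from (two_mul _).symm, show ak + ak = 2*ak from (two_mul _).symm,
        hγe, hγe] at heq2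
      have hcast : (aj:ℂ) = ak := by linear_combination heq2
      exact hjk (by rw [Nat.cast_inj] at hcast; omega)
    · rw [show aj + aj = 2*aj from (two_mul _).symm, hγe, hγo] at heq2
      exact hreg (aj + ak + 1) (by push_cast; linear_combination heq2)
    · rw [show ak + ak = 2*ak from (two_mul _).symm, hγo, hγe] at heq2
      exact hreg (ak + aj + 1) (by push_cast; linear_combination -heq2)
    · rw [hγo, hγo] at heq2
      have hcast : (aj:ℂ) = ak := by linear_combination -heq2
      exact hjk (by rw [Nat.cast_inj] at hcast; omega)
  -- the odd case
  have oddcase : ∀ n : ℕ, T1 (p (2*n+1)) = -(p (2*n+1+1)) + bb (2*n+1) • p (2*n+1) := by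
    intro n
    have hγm : γ (2*n+1) = -(t0 + t1 + ((n:ℂ)+1)) := hγo n
    have hγm1 : γ (2*n+1+1) = t0 + t1 + ((n:ℂ)+1) := by
      have h := hγe (n+1)
      rw [show 2*(n+1) = 2*n+1+1 from by omega] at h
      rw [h]; push_cast; ring
    have hg0 : t0 + t1 + ((n:ℂ)+1) ≠ 0 := by
      intro h0
      exact hreg (2*n+2) (by push_cast; linear_combination 2*h0)
    have hγmne : γ (2*n+1) ≠ 0 := by rw [hγm]; exact neg_ne_zero.mpr hg0
    have hγrel : γ (2*n+1+1) = -γ (2*n+1) := by rw [hγm, hγm1]; ring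
    have hbbval : 2 * γ (2*n+1) * bb (2*n+1) = γ (2*n+1)^2 + t1^2 - t0^2 := by
      rw [hbb]
      field_simp [hγmne]
      ring
    set q : ℂ[X] := T1 (p (2*n+1)) + p (2*n+1+1) - bb (2*n+1) • p (2*n+1) with hqdef
    have e_T0q : T0 q = T0 (T1 (p (2*n+1))) + T0 (p (2*n+1+1))
        - bb (2*n+1) • T0 (p (2*n+1)) := by
      have h := T0_lin3 hT0 1 1 (-(bb (2*n+1))) (T1 (p (2*n+1))) (p (2*n+1+1)) (p (2*n+1))
      rw [show (1:ℂ) • T1 (p (2*n+1)) + (1:ℂ) • p (2*n+1+1) + (-(bb (2*n+1))) • p (2*n+1) = q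
        from by rw [hqdef]; module] at h
      rw [h]; module
    have e_T1q : T1 q = T1 (T1 (p (2*n+1))) + T1 (p (2*n+1+1))
        - bb (2*n+1) • T1 (p (2*n+1)) := by
      have h := T1_lin3 hT1 1 1 (-(bb (2*n+1))) (T1 (p (2*n+1))) (p (2*n+1+1)) (p (2*n+1))
      rw [show (1:ℂ) • T1 (p (2*n+1)) + (1:ℂ) • p (2*n+1+1) + (-(bb (2*n+1))) • p (2*n+1) = q
        from by rw [hqdef]; module] at h
      rw [h]; module
    have h_sq : T1 (T1 (p (2*n+1))) = (t1^2) • p (2*n+1) := T1_sq hab hT1 _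
    have h_T0pm : T0 (p (2*n+1)) = γ (2*n+1) • p (2*n+1) - T1 (p (2*n+1)) :=
      eq_sub_of_add_eq (heqm _)
    have h_T1pm : T1 (p (2*n+1)) = γ (2*n+1) • p (2*n+1) - T0 (p (2*n+1)) :=
      eq_sub_of_add_eq' (heqm _)
    have h_T0pm1 : T0 (p (2*n+1+1)) = γ (2*n+1+1) • p (2*n+1+1) - T1 (p (2*n+1+1)) :=
      eq_sub_of_add_eq (heqm _)
    have h_T0T1 : T0 (T1 (p (2*n+1))) = γ (2*n+1) • T0 (p (2*n+1)) - (t0^2) • p (2*n+1) := by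
      have e1 : T1 (p (2*n+1)) =
          γ (2*n+1) • p (2*n+1) + (-1:ℂ) • T0 (p (2*n+1)) + (0:ℂ) • (0:ℂ[X]) := by
        rw [h_T1pm]; module
      rw [e1, T0_lin3 hT0 _ _ _ _ _ _, T0_sq hcd hT0]
      module
    have heig : T0 q + T1 q = γ (2*n+1+1) • q := by
      rw [e_T0q, e_T1q, h_T0T1, h_sq, h_T0pm1, h_T0pm, hqdef]
      match_scalars
      · linear_combination -hbbval + bb (2*n+1) * hγrel
      · linear_combination -hγrel
      · ring
      · ring
    -- degree of q
    obtain ⟨hd1, hd2⟩ := T1_deg hT1 (p (2*n+1))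
    rw [hdeg (2*n+1)] at hd1 hd2
    have hd2' : (T1 (p (2*n+1))).coeff (2*n+1+1) = -1 := hd2 ⟨n, by ring⟩ (hmon _)
    have hqdeg : q.natDegree ≤ 2*n+1 := by
      rw [natDegree_le_iff_coeff_eq_zero]
      intro j hj
      rw [hqdef, coeff_sub, coeff_add, coeff_smul, smul_eq_mul]
      rcases eq_or_lt_of_le (Nat.succ_le_of_lt hj) with hje | hjl
      · rw [← hje, hd2',
          show (p (2*n+1+1)).coeff (2*n+1+1) = 1 from by
            have := (hmon (2*n+1+1)).coeff_natDegree
            rwa [hdeg (2*n+1+1)] at this,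
          coeff_eq_zero_of_natDegree_lt (by rw [hdeg]; omega : (p (2*n+1)).natDegree < 2*n+1+1)]
        ring
      · rw [coeff_eq_zero_of_natDegree_lt (lt_of_le_of_lt hd1 hjl),
            coeff_eq_zero_of_natDegree_lt (by rw [hdeg]; omega : (p (2*n+1+1)).natDegree < j),
            coeff_eq_zero_of_natDegree_lt (by rw [hdeg]; omega : (p (2*n+1)).natDegree < j)]
        ring
    obtain ⟨cf, hcf⟩ := span_p p hmon hdeg (2*n+1) q hqdeg
    obtain ⟨L0, hL0⟩ : ∃ L : ℂ[X] →ₗ[ℂ] ℂ[X], ∀ f, L f = T0 f :=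
      ⟨{ toFun := T0
         map_add' := fun f g => by
           have h := T0_lin3 hT0 1 1 0 f g (0:ℂ[X])
           simpa using h
         map_smul' := fun s f => by
           have h := T0_lin3 hT0 s 0 0 f (0:ℂ[X]) (0:ℂ[X])
           simpa using h }, fun f => rfl⟩
    obtain ⟨L1, hL1⟩ : ∃ L : ℂ[X] →ₗ[ℂ] ℂ[X], ∀ f, L f = T1 f :=
      ⟨{ toFun := T1
         map_add' := fun f g => by
           have h := T1_lin3 hT1 1 1 0 f g (0:ℂ[X])
           simpa using h
         map_smul' := fun s f => by
           have h := T1_lin3 hT1 s 0 0 f (0:ℂ[X]) (0:ℂ[X])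
           simpa using h }, fun f => rfl⟩
    have hsum0 : T0 q = ∑ k ∈ Finset.range (2*n+1+1), cf k • T0 (p k) := by
      rw [hcf, ← hL0, map_sum]
      exact Finset.sum_congr rfl fun k _ => by rw [map_smul, hL0]
    have hsum1 : T1 q = ∑ k ∈ Finset.range (2*n+1+1), cf k • T1 (p k) := by
      rw [hcf, ← hL1, map_sum]
      exact Finset.sum_congr rfl fun k _ => by rw [map_smul, hL1]
    have hzero : ∑ k ∈ Finset.range (2*n+1+1), (cf k * (γ k - γ (2*n+1+1))) • p k = 0 := by
      have h1 : T0 q + T1 q = γ (2*n+1+1) • q := heig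
      rw [hsum0, hsum1, hcf] at h1
      have h2 : ∑ k ∈ Finset.range (2*n+1+1), (cf k * (γ k - γ (2*n+1+1))) • p k
          = (∑ k ∈ Finset.range (2*n+1+1), cf k • T0 (p k)
            + ∑ k ∈ Finset.range (2*n+1+1), cf k • T1 (p k))
            - γ (2*n+1+1) • ∑ k ∈ Finset.range (2*n+1+1), cf k • p k := by
        rw [Finset.smul_sum, ← Finset.sum_add_distrib, ← Finset.sum_sub_distrib]
        refine Finset.sum_congr rfl fun k _ => ?_
        calc (cf k * (γ k - γ (2*n+1+1))) • p k
            = cf k • (γ k • p k) - γ (2*n+1+1) • (cf k • p k) := by module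
          _ = cf k • (T0 (p k) + T1 (p k)) - γ (2*n+1+1) • (cf k • p k) := by rw [heqm k]
          _ = cf k • T0 (p k) + cf k • T1 (p k) - γ (2*n+1+1) • (cf k • p k) := by module
      rw [h2, h1, sub_self]
    have hcfz : ∀ k, k ≤ 2*n+1 → cf k = 0 := by
      intro k hk
      have h3 := indep_p p hmon hdeg (2*n+1) _ hzero k hk
      rcases mul_eq_zero.mp h3 with h4 | h4
      · exact h4
      · exact absurd (by linear_combination h4 : γ k = γ (2*n+1+1))
          (gamma_ne k (2*n+1+1) (by omega))
    have hq0 : q = 0 := by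
      rw [hcf]
      exact Finset.sum_eq_zero fun k hk => by
        rw [hcfz k (by simp at hk; omega), zero_smul]
    have hq0' : T1 (p (2*n+1)) + p (2*n+1+1) - bb (2*n+1) • p (2*n+1) = 0 := by
      rw [← hqdef]; exact hq0
    have h7 : T1 (p (2*n+1)) - (-(p (2*n+1+1)) + bb (2*n+1) • p (2*n+1))
        = T1 (p (2*n+1)) + p (2*n+1+1) - bb (2*n+1) • p (2*n+1) := by module
    have h8 : T1 (p (2*n+1)) - (-(p (2*n+1+1)) + bb (2*n+1) • p (2*n+1)) = 0 := by
      rw [h7]; exact hq0'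
    exact sub_eq_zero.mp h8
  refine ⟨?_, ?_⟩
  · have hp0 : p 0 = 1 := (hmon 0).natDegree_eq_zero.mp (hdeg 0)
    rw [hp0]
    exact T1_one hT1
  · intro m hm
    constructor
    · rintro ⟨n, rfl⟩
      exact oddcase n
    · intro hev
      obtain ⟨k, rfl⟩ : ∃ k, m = 2*k+1+1 := by
        rcases hev with ⟨r, hr⟩; exact ⟨r-1, by omega⟩
      have ho := oddcase k
      have hsq := T1_sq hab hT1 (p (2*k+1))
      rw [ho] at hsq
      have hexp : T1 (-(p (2*k+1+1)) + bb (2*k+1) • p (2*k+1))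
          = -(T1 (p (2*k+1+1))) + bb (2*k+1) • T1 (p (2*k+1)) := by
        have h := T1_lin3 hT1 (-1) (bb (2*k+1)) 0 (p (2*k+1+1)) (p (2*k+1)) (0:ℂ[X])
        rw [show (-1:ℂ) • p (2*k+1+1) + bb (2*k+1) • p (2*k+1) + (0:ℂ) • (0:ℂ[X])
            = -(p (2*k+1+1)) + bb (2*k+1) • p (2*k+1) from by module] at h
        rw [h]; module
      rw [hexp, ho] at hsq
      have hγm1 : γ (2*k+1+1) = t0 + t1 + ((k:ℂ)+1) := by
        have h := hγe (k+1)
        rw [show 2*(k+1) = 2*k+1+1 from by omega] at h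
        rw [h]; push_cast; ring
      have hγm : γ (2*k+1) = -(t0 + t1 + ((k:ℂ)+1)) := hγo k
      have hg0 : t0 + t1 + ((k:ℂ)+1) ≠ 0 := by
        intro h0
        exact hreg (2*k+2) (by push_cast; linear_combination 2*h0)
      have hγrel2 : γ (2*k+1) = -(γ (2*k+1+1)) := by rw [hγm, hγm1]
      have hne2 : γ (2*k+1+1) ≠ 0 := by rw [hγm1]; exact hg0
      have hbm : bb (2*k+1) = -(bb (2*k+1+1)) := by
        rw [hbb (2*k+1), hbb (2*k+1+1), hγrel2]
        field_simp [hne2]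
        ring
      rw [hbm] at hsq
      rw [show 2*k+1+1-1 = 2*k+1 from rfl]
      have h8 := sub_eq_zero_of_eq hsq
      have h9 : T1 (p (2*k+1+1))
          - (bb (2*k+1+1) • p (2*k+1+1) + (bb (2*k+1+1)^2 - t1^2) • p (2*k+1))
          = -((-(T1 (p (2*k+1+1))) + (-(bb (2*k+1+1))) •
              (-(p (2*k+1+1)) + (-(bb (2*k+1+1))) • p (2*k+1))) - (t1^2) • p (2*k+1)) := by
        module
      rw [h8, neg_zero] at h9
      exact sub_eq_zero.mp h9
end

section
/- Define operators U0 and U1 on ℂ[x] by (U0 f)(x) = −(T0 f)(x) − (1/2)·f(x) + x·f(x) and (U1 f)(x) = −(T1 f)(x) − x·f(x). Then U0(U0 f) = u0²·f and U1(U1 f) = u1²·f for every polynomial f. -/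
open Polynomial

/-- Define `U0`, `U1` on `ℂ[x]` by `(U0 f)(x) = −(T0 f)(x) − (1/2)·f(x) + x·f(x)`
and `(U1 f)(x) = −(T1 f)(x) − x·f(x)`. Then `U0(U0 f) = u0²·f` and `U1(U1 f) = u1²·f`. -/
theorem statement5 (t0 u0 t1 u1 a b c d : ℂ)
    (ha : a = t1 + u1) (hb : b = t1 - u1)
    (hc : c = t0 + u0 + 1/2) (hd : d = t0 - u0 + 1/2)
    (T0 T1 : Polynomial ℂ → Polynomial ℂ)
    (hT0 : ∀ (f : Polynomial ℂ) (x : ℂ),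
      (1 - 2*x) * ((T0 f).eval x - t0 * f.eval x) =
        (c - x) * (d - x) * (f.eval (1 - x) - f.eval x))
    (hT1 : ∀ (f : Polynomial ℂ) (x : ℂ),
      (2*x) * ((T1 f).eval x - t1 * f.eval x) =
        (a + x) * (b + x) * (f.eval (-x) - f.eval x))
    (U0 U1 : Polynomial ℂ → Polynomial ℂ)
    (hU0 : ∀ (f : Polynomial ℂ) (x : ℂ),
      (U0 f).eval x = -(T0 f).eval x - (1/2) * f.eval x + x * f.eval x)
    (hU1 : ∀ (f : Polynomial ℂ) (x : ℂ),
      (U1 f).eval x = -(T1 f).eval x - x * f.eval x) :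
    ∀ f : Polynomial ℂ, U0 (U0 f) = u0^2 • f ∧ U1 (U1 f) = u1^2 • f := by
  subst ha hb hc hd
  intro f
  constructor
  · apply Polynomial.eq_of_infinite_eval_eq
    apply Set.Infinite.mono (s := ({(1:ℂ)/2}ᶜ : Set ℂ))
    · intro x hx
      have hx' : x ≠ 1/2 := hx
      have hx2 : (1:ℂ) - 2*x ≠ 0 := by
        intro h; apply hx'; linear_combination (-1/2 : ℂ) * h
      have e1 := hT0 f x
      have e2 := hT0 f (1-x)
      have hpt : (1:ℂ) - (1-x) = x := by ring
      rw [hpt] at e2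
      have e3 := hT0 (U0 f) x
      rw [hU0 f x, hU0 f (1-x)] at e3
      show (U0 (U0 f)).eval x = (u0^2 • f).eval x
      rw [hU0 (U0 f) x, hU0 f x, Polynomial.eval_smul, smul_eq_mul]
      refine mul_left_cancel₀ (pow_ne_zero 2 hx2) ?_
      linear_combination (-(1-2*x)) * e3 +
        ((1-2*x)^2/2 + t0*(1-2*x) - (t0+u0+1/2-x)*(t0-u0+1/2-x)) * e1 +
        (-(t0+u0+1/2-x)*(t0-u0+1/2-x)) * e2
    · exact Set.Finite.infinite_compl (Set.finite_singleton _)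
  · apply Polynomial.eq_of_infinite_eval_eq
    apply Set.Infinite.mono (s := ({(0:ℂ)}ᶜ : Set ℂ))
    · intro x hx
      have hx' : x ≠ 0 := hx
      have e1 := hT1 f x
      have e2 := hT1 f (-x)
      have hpt : -(-x) = x := neg_neg x
      rw [hpt] at e2
      have e3 := hT1 (U1 f) x
      rw [hU1 f x, hU1 f (-x)] at e3
      show (U1 (U1 f)).eval x = (u1^2 • f).eval x
      rw [hU1 (U1 f) x, hU1 f x, Polynomial.eval_smul, smul_eq_mul]
      have h2x : (2:ℂ)*x ≠ 0 := by
        simp [hx']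
      refine mul_left_cancel₀ (pow_ne_zero 2 h2x) ?_
      linear_combination (-(2*x)) * e3 +
        (2*x^2 + t1*(2*x) - (t1+u1+x)*(t1-u1+x)) * e1 +
        (-(t1+u1+x)*(t1-u1+x)) * e2
    · exact Set.Finite.infinite_compl (Set.finite_singleton _)
end

section
/- Assume 2(t0+t1) is not a nonpositive integer. If P, Q ∈ ℂ[X] are polynomials such that P(Y)f + T1(Q(Y)f) = 0 for every complex polynomial f (where P(Y), Q(Y) denote the operators on ℂ[x] obtained by substituting the operator Y for the variable of P, Q), then P = 0 and Q = 0. (Equivalently, the representation of the group algebra of the affine Weyl group generated by the operators T0 and T1 on ℂ[x] is faithful.) -/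
open Polynomial

lemma aux_negX_pow (e : ℕ) : ((-X : Polynomial ℂ))^e = C ((-1)^e) * X^e := by
  have : (-X : Polynomial ℂ) = C (-1) * X := by simp
  rw [this, mul_pow, ← C_pow]

lemma aux_coeff_comp_neg (p : Polynomial ℂ) (k : ℕ) :
    (p.comp (-X)).coeff k = (-1)^k * p.coeff k := by
  induction p using Polynomial.induction_on' with
  | add p q hp hq => simp only [add_comp, coeff_add, hp, hq]; ring
  | monomial e r =>
      rw [monomial_comp, aux_negX_pow, ← mul_assoc, ← C_mul, C_mul_X_pow_eq_monomial]
      rcases eq_or_ne e k with rfl | h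
      · simp [coeff_monomial]; ring
      · simp [coeff_monomial, h]

lemma aux_coeff_one_sub_pow (e k : ℕ) :
    ((1 - X : Polynomial ℂ)^e).coeff k = (-1)^k * (e.choose k : ℂ) := by
  have h1 : ((1 + X : Polynomial ℂ)^e).comp (-X) = (1 - X)^e := by
    rw [pow_comp, add_comp, one_comp, X_comp]; ring_nf
  rw [← h1, aux_coeff_comp_neg, coeff_one_add_X_pow]

lemma aux_comp_one_sub_coeff (p : Polynomial ℂ) (k N : ℕ) (h : p.natDegree < N) :
    (p.comp (1 - X)).coeff k
      = ∑ e ∈ Finset.range N, p.coeff e * ((-1)^k * (e.choose k : ℂ)) := by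
  rw [comp_eq_sum_left, coeff_sum, Polynomial.sum_def]
  rw [Finset.sum_subset (Polynomial.supp_subset_range h)]
  · exact Finset.sum_congr rfl fun e _ => by
      rw [coeff_C_mul, aux_coeff_one_sub_pow]
  · intro e _ he
    rw [Polynomial.notMem_support_iff.mp he]
    simp

lemma aux_C1 (p : Polynomial ℂ) (n : ℕ) (hp : p.natDegree ≤ n) :
    (p.comp (1 - X)).coeff n = (-1)^n * p.coeff n := by
  rw [aux_comp_one_sub_coeff p n (n+1) (Nat.lt_succ_of_le hp), Finset.sum_range_succ]
  have : ∑ e ∈ Finset.range n, p.coeff e * ((-1)^n * (e.choose n : ℂ)) = 0 := by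
    apply Finset.sum_eq_zero
    intro e he
    rw [Nat.choose_eq_zero_of_lt (Finset.mem_range.mp he)]
    simp
  rw [this, zero_add, Nat.choose_self]
  ring

lemma aux_C2 (p : Polynomial ℂ) (m : ℕ) (hp : p.natDegree ≤ 2*m+1) :
    (p.comp (1 - X)).coeff (2*m) = p.coeff (2*m) + (2*(m:ℂ)+1) * p.coeff (2*m+1) := by
  rw [aux_comp_one_sub_coeff p (2*m) (2*m+2) (by omega), Finset.sum_range_succ,
    Finset.sum_range_succ]
  have h0 : ∑ e ∈ Finset.range (2*m), p.coeff e * ((-1)^(2*m) * (e.choose (2*m) : ℂ)) = 0 := by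
    apply Finset.sum_eq_zero
    intro e he
    rw [Nat.choose_eq_zero_of_lt (Finset.mem_range.mp he)]
    simp
  rw [h0, zero_add, Nat.choose_self, Nat.choose_succ_self_right]
  have he : (-1 : ℂ)^(2*m) = 1 := by
    rw [pow_mul]; norm_num
  rw [he]
  push_cast
  ring

lemma aux_pow_even (k : ℕ) : (-1 : ℂ)^(2*k) = 1 := by rw [pow_mul]; norm_num

lemma aux_pow_odd (k : ℕ) : (-1 : ℂ)^(2*k+1) = -1 := by rw [pow_succ, aux_pow_even]; ring

/-- Faithfulness: if `P, Q ∈ ℂ[X]` are such that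
`P(Y)f + T1(Q(Y)f) = 0` for every polynomial `f`, where `P(Y)` denotes the operator
`Σ_k P.coeff k • Y^k` (iterates of `Y = T0 + T1`), then `P = 0` and `Q = 0`. -/
theorem statement6 (t0 u0 t1 u1 a b c d : ℂ)
    (ha : a = t1 + u1) (hb : b = t1 - u1)
    (hc : c = t0 + u0 + 1/2) (hd : d = t0 - u0 + 1/2)
    (hreg : ∀ k : ℕ, 2*(t0 + t1) ≠ -(k : ℂ))
    (T0 T1 : Polynomial ℂ → Polynomial ℂ)
    (hT0 : ∀ (f : Polynomial ℂ) (x : ℂ),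
      (1 - 2*x) * ((T0 f).eval x - t0 * f.eval x) =
        (c - x) * (d - x) * (f.eval (1 - x) - f.eval x))
    (hT1 : ∀ (f : Polynomial ℂ) (x : ℂ),
      (2*x) * ((T1 f).eval x - t1 * f.eval x) =
        (a + x) * (b + x) * (f.eval (-x) - f.eval x))
    (Y : Polynomial ℂ → Polynomial ℂ)
    (hY : ∀ f : Polynomial ℂ, Y f = T0 f + T1 f) :
    ∀ P Q : Polynomial ℂ,
      (∀ f : Polynomial ℂ,
        (∑ k ∈ Finset.range (P.natDegree + 1), P.coeff k • (Y^[k] f)) +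
          T1 (∑ k ∈ Finset.range (Q.natDegree + 1), Q.coeff k • (Y^[k] f)) = 0) →
      P = 0 ∧ Q = 0 := by
  -- polynomial versions of the defining identities
  have HT1 : ∀ f : Polynomial ℂ,
      (C 2 * X) * (T1 f - C t1 * f)
        = (C (a*b) + C (a+b) * X + X^2) * (f.comp (-X) - f) := by
    intro f
    have hq : (C (a*b) + C (a+b) * X + X^2 : Polynomial ℂ) = (C a + X) * (C b + X) := by
      rw [C_mul, C_add]; ring
    rw [hq]
    apply Polynomial.funext
    intro x
    simp only [eval_mul, eval_add, eval_sub, eval_C, eval_X, eval_comp, eval_neg]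
    linear_combination hT1 f x
  have HT0 : ∀ f : Polynomial ℂ,
      (1 - C 2 * X) * (T0 f - C t0 * f)
        = (C (c*d) + C (-(c+d)) * X + X^2) * (f.comp (1 - X) - f) := by
    intro f
    have hq : (C (c*d) + C (-(c+d)) * X + X^2 : Polynomial ℂ) = (C c - X) * (C d - X) := by
      rw [C_mul, C_neg, C_add]; ring
    rw [hq]
    apply Polynomial.funext
    intro x
    simp only [eval_mul, eval_add, eval_sub, eval_C, eval_X, eval_comp, eval_neg, eval_one]
    linear_combination hT0 f x
  -- coefficient of quadratic times p
  have mulq : ∀ (u v : ℂ) (p : Polynomial ℂ) (k : ℕ),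
      ((C u + C v * X + X^2) * p).coeff (k+2)
        = u * p.coeff (k+2) + v * p.coeff (k+1) + p.coeff k := by
    intro u v p k
    have e : (C u + C v * X + X^2) * p = C u * p + C v * (X * p) + X^2 * p := by ring
    rw [e, coeff_add, coeff_add, coeff_C_mul, coeff_C_mul, coeff_X_mul, coeff_X_pow_mul]
  -- coefficient extraction for T1
  have hT1c : ∀ (f : Polynomial ℂ) (j : ℕ),
      2 * ((T1 f).coeff (j+1) - t1 * f.coeff (j+1))
        = a*b*(((-1)^j - 1) * f.coeff (j+2))
          + (a+b)*((-(-1)^j - 1) * f.coeff (j+1)) + ((-1)^j - 1) * f.coeff j := by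
    intro f j
    have h := congrArg (fun p => Polynomial.coeff p (j+2)) (HT1 f)
    have hl : (C 2 * X * (T1 f - C t1 * f)).coeff (j+2)
        = 2 * ((T1 f).coeff (j+1) - t1 * f.coeff (j+1)) := by
      rw [mul_assoc, coeff_C_mul, coeff_X_mul, coeff_sub, coeff_C_mul]
    rw [hl, mulq] at h
    rw [h, coeff_sub, coeff_sub, coeff_sub, aux_coeff_comp_neg, aux_coeff_comp_neg,
      aux_coeff_comp_neg]
    have e2 : ((-1 : ℂ))^(j+2) = (-1)^j := by rw [pow_succ, pow_succ]; ring
    have e1 : ((-1 : ℂ))^(j+1) = -(-1)^j := by rw [pow_succ]; ring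
    rw [e2, e1]
    ring
  -- coefficient extraction for the (1 - 2X) factor
  have hlin : ∀ (p : Polynomial ℂ) (k : ℕ),
      ((1 - C 2 * X) * p).coeff (k+1) = p.coeff (k+1) - 2 * p.coeff k := by
    intro p k
    have e : (1 - C 2 * X) * p = p - C 2 * (X * p) := by ring
    rw [e, coeff_sub, coeff_C_mul, coeff_X_mul]
  have hdeg1X : (1 - X : Polynomial ℂ).natDegree = 1 := by
    rw [show (1 - X : Polynomial ℂ) = -(X - C 1) by simp, natDegree_neg, natDegree_X_sub_C]
  -- the key lemma: Y preserves degree ≤ 2m+1 and scales the top coefficient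
  have key : ∀ (m : ℕ) (f : Polynomial ℂ), f.natDegree ≤ 2*m+1 →
      (Y f).natDegree ≤ 2*m+1 ∧
      (Y f).coeff (2*m+1) = (-(t0+t1) - (m:ℂ) - 1) * f.coeff (2*m+1) := by
    intro m f hf
    have hfc : ∀ j, 2*m+1 < j → f.coeff j = 0 := natDegree_le_iff_coeff_eq_zero.mp hf
    set G := f.comp (1 - X) - f with hGdef
    have hGd : G.natDegree ≤ 2*m+1 := by
      refine (natDegree_sub_le _ _).trans (max_le ?_ hf)
      refine natDegree_comp_le.trans ?_
      rw [hdeg1X, mul_one]; exact hf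
    have hGc : ∀ j, 2*m+1 < j → G.coeff j = 0 := natDegree_le_iff_coeff_eq_zero.mp hGd
    have hGn : G.coeff (2*m+1) = -2 * f.coeff (2*m+1) := by
      rw [hGdef, coeff_sub, aux_C1 f (2*m+1) hf, aux_pow_odd]; ring
    have hGm : G.coeff (2*m) = (2*(m:ℂ)+1) * f.coeff (2*m+1) := by
      rw [hGdef, coeff_sub, aux_C2 f m hf]; ring
    set h := T0 f - C t0 * f with hhdef
    have hR : (1 - C 2 * X) * h = (C (c*d) + C (-(c+d)) * X + X^2) * G := HT0 f
    have hhd : h.natDegree ≤ 2*m+2 := by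
      by_cases h0 : h = 0
      · simp [h0]
      have hq0 : (1 - C 2 * X : Polynomial ℂ) ≠ 0 := by
        intro hh
        have h1 := congrArg (fun p => Polynomial.coeff p 1) hh
        simp only [coeff_sub, coeff_one, coeff_zero, coeff_C_mul, coeff_X_one] at h1
        norm_num at h1
      have hqd : (1 - C 2 * X : Polynomial ℂ).natDegree = 1 := by
        rw [show (1 - C 2 * X : Polynomial ℂ) = C (-2) * X + C 1 by
          rw [map_neg, map_one]; ring]
        exact natDegree_linear (by norm_num)
      have hRd : ((C (c*d) + C (-(c+d)) * X + X^2) * G).natDegree ≤ 2*m+3 := by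
        refine natDegree_mul_le.trans ?_
        have h2 : (C (c*d) + C (-(c+d)) * X + X^2 : Polynomial ℂ).natDegree ≤ 2 := by
          refine (natDegree_add_le _ _).trans (max_le ((natDegree_add_le _ _).trans
            (max_le ?_ ?_)) ?_)
          · rw [natDegree_C]; omega
          · exact (natDegree_C_mul_le _ _).trans (by simp)
          · simp
        omega
      have := natDegree_mul hq0 h0
      rw [hR] at this
      omega
    have hhc : ∀ j, 2*m+2 < j → h.coeff j = 0 := natDegree_le_iff_coeff_eq_zero.mp hhd
    -- h at 2m+2
    have hh2 : h.coeff (2*m+2) = f.coeff (2*m+1) := by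
      have eL : ((1 - C 2 * X) * h).coeff (2*m+3)
          = h.coeff (2*m+3) - 2 * h.coeff (2*m+2) := hlin h (2*m+2)
      have eR : ((C (c*d) + C (-(c+d)) * X + X^2) * G).coeff (2*m+3)
          = c*d * G.coeff (2*m+3) + (-(c+d)) * G.coeff (2*m+2) + G.coeff (2*m+1) :=
        mulq _ _ G (2*m+1)
      have e : h.coeff (2*m+3) - 2 * h.coeff (2*m+2)
          = c*d * G.coeff (2*m+3) + (-(c+d)) * G.coeff (2*m+2) + G.coeff (2*m+1) := by
        rw [← eL, ← eR, hR]
      rw [hhc (2*m+3) (by omega), hGc (2*m+3) (by omega), hGc (2*m+2) (by omega), hGn] at e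
      linear_combination -e/2
    -- h at 2m+1
    have hh1 : 2 * h.coeff (2*m+1)
        = f.coeff (2*m+1) - 2*(c+d) * f.coeff (2*m+1) - (2*(m:ℂ)+1) * f.coeff (2*m+1) := by
      have eL : ((1 - C 2 * X) * h).coeff (2*m+2)
          = h.coeff (2*m+2) - 2 * h.coeff (2*m+1) := hlin h (2*m+1)
      have eR : ((C (c*d) + C (-(c+d)) * X + X^2) * G).coeff (2*m+2)
          = c*d * G.coeff (2*m+2) + (-(c+d)) * G.coeff (2*m+1) + G.coeff (2*m) :=
        mulq _ _ G (2*m)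
      have e : h.coeff (2*m+2) - 2 * h.coeff (2*m+1)
          = c*d * G.coeff (2*m+2) + (-(c+d)) * G.coeff (2*m+1) + G.coeff (2*m) := by
        rw [← eL, ← eR, hR]
      rw [hh2, hGc (2*m+2) (by omega), hGn, hGm] at e
      linear_combination -e
    -- coefficients of T1 f
    have t1high : ∀ j, 2*m+2 ≤ j → (T1 f).coeff (j+1) = 0 := by
      intro j hj
      have e := hT1c f j
      rw [hfc (j+2) (by omega), hfc (j+1) (by omega), hfc j (by omega)] at e
      linear_combination e/2
    have t1c2 : (T1 f).coeff (2*m+2) = - f.coeff (2*m+1) := by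
      have e := hT1c f (2*m+1)
      rw [aux_pow_odd, hfc (2*m+1+2) (by omega), hfc (2*m+1+1) (by omega)] at e
      linear_combination e/2
    have t1c1 : 2 * (T1 f).coeff (2*m+1)
        = 2*t1 * f.coeff (2*m+1) - 2*(a+b) * f.coeff (2*m+1) := by
      have e := hT1c f (2*m)
      rw [aux_pow_even, hfc (2*m+2) (by omega)] at e
      linear_combination e
    -- assembling Y f
    have hYc : ∀ j, (Y f).coeff j = t0 * f.coeff j + h.coeff j + (T1 f).coeff j := by
      intro j
      have : T0 f = h + C t0 * f := by rw [hhdef]; ring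
      rw [hY, this, coeff_add, coeff_add, coeff_C_mul]
      ring
    constructor
    · rw [natDegree_le_iff_coeff_eq_zero]
      intro N hN
      rcases eq_or_lt_of_le (show 2*m+2 ≤ N by omega) with hN2 | hN2
      · rw [← hN2, hYc, hfc (2*m+2) (by omega), hh2, t1c2]
        ring
      · obtain ⟨j, rfl⟩ : ∃ j, N = j + 1 := ⟨N - 1, by omega⟩
        rw [hYc, hfc (j+1) (by omega), hhc (j+1) (by omega), t1high j (by omega)]
        ring
    · have e := hYc (2*m+1)
      rw [hY] at e ⊢
      linear_combination e + hh1/2 + t1c1/2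
        - f.coeff (2*m+1) * (hc + hd) - f.coeff (2*m+1) * (ha + hb)
  -- iterates of Y on X^(2m+1)
  have iter : ∀ (m k : ℕ), (Y^[k] (X^(2*m+1))).natDegree ≤ 2*m+1 ∧
      (Y^[k] (X^(2*m+1))).coeff (2*m+1) = (-(t0+t1) - (m:ℂ) - 1)^k := by
    intro m k
    induction k with
    | zero => simp [natDegree_X_pow, coeff_X_pow]
    | succ k ih =>
        obtain ⟨ih1, ih2⟩ := ih
        obtain ⟨d1, d2⟩ := key m _ ih1
        rw [Function.iterate_succ_apply']
        exact ⟨d1, by rw [d2, ih2, pow_succ]; ring⟩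
  -- the weighted sums
  have sums : ∀ (m : ℕ) (R : Polynomial ℂ),
      (∑ k ∈ Finset.range (R.natDegree + 1), R.coeff k • (Y^[k] (X^(2*m+1)))).natDegree ≤ 2*m+1
      ∧ (∑ k ∈ Finset.range (R.natDegree + 1), R.coeff k • (Y^[k] (X^(2*m+1)))).coeff (2*m+1)
          = R.eval (-(t0+t1) - (m:ℂ) - 1) := by
    intro m R
    constructor
    · apply natDegree_sum_le_of_forall_le
      intro k _
      exact (natDegree_smul_le _ _).trans (iter m k).1
    · rw [finset_sum_coeff, eval_eq_sum_range]
      refine Finset.sum_congr rfl fun k _ => ?_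
      rw [coeff_smul, (iter m k).2, smul_eq_mul]
  intro P Q hPQ
  have root : ∀ m : ℕ, Q.eval (-(t0+t1) - (m:ℂ) - 1) = 0 ∧
      P.eval (-(t0+t1) - (m:ℂ) - 1) = 0 := by
    intro m
    have H := hPQ (X^(2*m+1))
    set gP := ∑ k ∈ Finset.range (P.natDegree + 1), P.coeff k • (Y^[k] (X^(2*m+1))) with hgP
    set gQ := ∑ k ∈ Finset.range (Q.natDegree + 1), Q.coeff k • (Y^[k] (X^(2*m+1))) with hgQ
    obtain ⟨hPd, hPc⟩ := sums m P
    obtain ⟨hQd, hQc⟩ := sums m Q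
    have hPz : ∀ j, 2*m+1 < j → gP.coeff j = 0 := natDegree_le_iff_coeff_eq_zero.mp hPd
    have hQz : ∀ j, 2*m+1 < j → gQ.coeff j = 0 := natDegree_le_iff_coeff_eq_zero.mp hQd
    -- coefficient 2m+2 of the relation gives Q.eval = 0
    have hQ0 : Q.eval (-(t0+t1) - (m:ℂ) - 1) = 0 := by
      have e2 := congrArg (fun p => Polynomial.coeff p (2*m+2)) H
      simp only [coeff_add, coeff_zero] at e2
      have eT : 2 * ((T1 gQ).coeff (2*m+2) - t1 * gQ.coeff (2*m+2))
          = a*b*(((-1)^(2*m+1) - 1) * gQ.coeff (2*m+3))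
            + (a+b)*((-(-1)^(2*m+1) - 1) * gQ.coeff (2*m+2))
            + ((-1)^(2*m+1) - 1) * gQ.coeff (2*m+1) := hT1c gQ (2*m+1)
      rw [aux_pow_odd, hQz (2*m+3) (by omega), hQz (2*m+2) (by omega), hQc] at eT
      rw [hPz (2*m+2) (by omega)] at e2
      linear_combination eT/2 - e2
    refine ⟨hQ0, ?_⟩
    -- coefficient 2m+1 of the relation gives P.eval = 0
    have e1 := congrArg (fun p => Polynomial.coeff p (2*m+1)) H
    simp only [coeff_add, coeff_zero] at e1
    have eT : 2 * ((T1 gQ).coeff (2*m+1) - t1 * gQ.coeff (2*m+1))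
        = a*b*(((-1)^(2*m) - 1) * gQ.coeff (2*m+2))
          + (a+b)*((-(-1)^(2*m) - 1) * gQ.coeff (2*m+1))
          + ((-1)^(2*m) - 1) * gQ.coeff (2*m) := hT1c gQ (2*m)
    rw [aux_pow_even, hQz (2*m+2) (by omega), hQc, hQ0] at eT
    rw [hPc] at e1
    linear_combination e1 - eT/2
  have hinj : Function.Injective (fun m : ℕ => -(t0+t1) - (m:ℂ) - 1) := by
    intro m1 m2 h12
    simp only at h12
    have : (m1 : ℂ) = (m2 : ℂ) := by linear_combination -h12
    exact_mod_cast this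
  constructor
  · apply Polynomial.eq_zero_of_infinite_isRoot
    apply Set.infinite_of_injective_forall_mem hinj
    intro m
    exact (root m).2
  · apply Polynomial.eq_zero_of_infinite_isRoot
    apply Set.infinite_of_injective_forall_mem hinj
    intro m
    exact (root m).1
end

section
/- Assume a ≠ 0, b ≠ 0 and a+b ≠ 0, and let δ(x) = (a+x)(b+x). Then a complex polynomial f satisfies T1 f = −t1·f if and only if there exists an even polynomial q (i.e. q(x) = q(−x) for all x) such that f(x) = δ(x)·q(x) for all x. In other words, multiplication by the generalized Weyl denominator δ maps the space of even polynomials bijectively onto the (−t1)-eigenspace of T1. -/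
open Polynomial

lemma aux_eq_of_eval_cofinite {p q : Polynomial ℂ} {s : Set ℂ} (hs : s.Finite)
    (h : ∀ x ∉ s, p.eval x = q.eval x) : p = q := by
  have h1 : p - q = 0 := by
    apply Polynomial.eq_zero_of_infinite_isRoot
    apply Set.Infinite.mono (s := sᶜ) ?_ hs.infinite_compl
    intro x hx
    simp only [Set.mem_setOf_eq, Polynomial.IsRoot, eval_sub, sub_eq_zero]
    exact h x hx
  exact sub_eq_zero.mp h1

/-- Assume `a ≠ 0`, `b ≠ 0`, `a+b ≠ 0`, and let `δ(x) = (a+x)(b+x)`.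
A polynomial `f` satisfies `T1 f = −t1·f` iff `f = δ·q` for some even polynomial `q`. -/
theorem statement9 (t0 u0 t1 u1 a b c d : ℂ)
    (ha : a = t1 + u1) (hb : b = t1 - u1)
    (hc : c = t0 + u0 + 1/2) (hd : d = t0 - u0 + 1/2)
    (ha0 : a ≠ 0) (hb0 : b ≠ 0) (hab : a + b ≠ 0)
    (T1 : Polynomial ℂ → Polynomial ℂ)
    (hT1 : ∀ (f : Polynomial ℂ) (x : ℂ),
      (2*x) * ((T1 f).eval x - t1 * f.eval x) =
        (a + x) * (b + x) * (f.eval (-x) - f.eval x)) :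
    ∀ f : Polynomial ℂ,
      T1 f = (-t1) • f ↔
        ∃ q : Polynomial ℂ, (∀ x : ℂ, q.eval x = q.eval (-x)) ∧
          f = (C a + X) * (C b + X) * q := by
  intro f
  have h2t1 : a + b = 2 * t1 := by rw [ha, hb]; ring
  constructor
  · intro hf
    have key : ∀ x : ℂ, (a + x) * (b + x) * (f.eval (-x) - f.eval x)
        = (-2 * (a + b)) * x * f.eval x := by
      intro x
      have h1 := hT1 f x
      rw [hf] at h1
      simp only [eval_smul, smul_eq_mul] at h1
      linear_combination -h1 + 2 * x * f.eval x * h2t1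
    have hpoly : ((C a + X) * (C b + X)) * (f.comp (-X) - f)
        = C (-2 * (a + b)) * (X * f) := by
      apply Polynomial.funext
      intro x
      simp only [eval_mul, eval_add, eval_sub, eval_comp, eval_neg, eval_X, eval_C]
      linear_combination key x
    have hk0 : (-2 * (a + b) : ℂ) ≠ 0 := by
      intro h; apply hab
      have := mul_eq_zero.mp h
      rcases this with h | h
      · norm_num at h
      · exact h
    have hdvd : ((C a + X) * (C b + X)) ∣ X * f := by
      have hcc : (C (-2 * (a + b)) : Polynomial ℂ) * C ((-2 * (a + b))⁻¹) = 1 := by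
        rw [← C_mul, mul_inv_cancel₀ hk0, C_1]
      have hCk : (C (-2 * (a + b)) : Polynomial ℂ) ≠ 0 := C_ne_zero.mpr hk0
      refine ⟨C ((-2 * (a + b))⁻¹) * (f.comp (-X) - f), mul_left_cancel₀ hCk ?_⟩
      rw [← hpoly]
      linear_combination (-(((C a + X) * (C b + X)) * (f.comp (-X) - f))) * hcc
    have hcopa : IsCoprime (C a + X) (X : Polynomial ℂ) := by
      refine ⟨C a⁻¹, -C a⁻¹, ?_⟩
      have : (C a⁻¹ * (C a + X) + -C a⁻¹ * X : Polynomial ℂ) = C (a⁻¹ * a) := by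
        rw [C_mul]; ring
      rw [this, inv_mul_cancel₀ ha0, C_1]
    have hcopb : IsCoprime (C b + X) (X : Polynomial ℂ) := by
      refine ⟨C b⁻¹, -C b⁻¹, ?_⟩
      have : (C b⁻¹ * (C b + X) + -C b⁻¹ * X : Polynomial ℂ) = C (b⁻¹ * b) := by
        rw [C_mul]; ring
      rw [this, inv_mul_cancel₀ hb0, C_1]
    have hcop : IsCoprime ((C a + X) * (C b + X)) (X : Polynomial ℂ) :=
      IsCoprime.mul_left hcopa hcopb
    obtain ⟨q, hq⟩ := hcop.dvd_of_dvd_mul_left hdvd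
    refine ⟨q, ?_, hq⟩
    have hqpoly : q.comp (-X) = q := by
      apply aux_eq_of_eval_cofinite (s := ({a, b, -a, -b} : Set ℂ)) (Set.toFinite _)
      intro x hx
      simp only [Set.mem_insert_iff, Set.mem_singleton_iff, not_or] at hx
      obtain ⟨hxa, hxb, hxna, hxnb⟩ := hx
      have hk := key x
      rw [hq] at hk
      simp only [eval_mul, eval_add, eval_C, eval_X] at hk
      have hz : ((a + x) * (b + x) * ((a - x) * (b - x))) * (q.eval (-x) - q.eval x)
          = 0 := by linear_combination hk
      have hne : ((a + x) * (b + x) * ((a - x) * (b - x))) ≠ 0 := by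
        apply mul_ne_zero (mul_ne_zero ?_ ?_) (mul_ne_zero ?_ ?_)
        · intro h; exact hxna (by linear_combination h)
        · intro h; exact hxnb (by linear_combination h)
        · intro h; exact hxa (by linear_combination -h)
        · intro h; exact hxb (by linear_combination -h)
      have h5 := (mul_eq_zero.mp hz).resolve_left hne
      simp only [eval_comp, eval_neg, eval_X]
      linear_combination h5
    intro x
    have := congrArg (eval x) hqpoly
    simp only [eval_comp, eval_neg, eval_X] at this
    exact this.symm
  · rintro ⟨q, hq, rfl⟩
    apply aux_eq_of_eval_cofinite (s := ({0} : Set ℂ)) (Set.finite_singleton 0)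
    intro x hx
    have hx0 : x ≠ 0 := by simpa using hx
    have h1 := hT1 ((C a + X) * (C b + X) * q) x
    have hqx := hq x
    simp only [eval_mul, eval_add, eval_C, eval_X, eval_smul, smul_eq_mul] at h1 ⊢
    have h2 : (2 * x) * ((T1 ((C a + X) * (C b + X) * q)).eval x)
        = (2 * x) * (-t1 * ((a + x) * (b + x) * q.eval x)) := by
      linear_combination h1 - (a + x) * (b + x) * ((a - x) * (b - x)) * hqx
        - 2 * x * (a + x) * (b + x) * q.eval x * h2t1
    exact mul_left_cancel₀ (by simp [hx0]) h2
end

section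
/- For every n ≥ 1: (i) the polynomial P⁺_{2n} := p_{2n} + (b_{2n} − t1)·p_{2n−1} is even (invariant under x ↦ −x), and it is the unique monic even polynomial in the span of p_{2n} and p_{2n−1}; (ii) the polynomial P⁻_{2n} := p_{2n} + (b_{2n} + t1)·p_{2n−1} satisfies T1 P⁻_{2n} = −t1·P⁻_{2n}. Here b_{2n} = (γ_{2n}+t1+t0)(γ_{2n}+t1−t0)/(2γ_{2n}) − t1. -/
/-!
Write `T1 = t1 + A (σ - 1)` with `σ f (x) = f (-x)` and `A (x) = (a + x) (b + x) / (2 x)`.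
Since `A (x) + A (-x) = a + b = 2 t1`, `T1` satisfies the Hecke relation `T1² = t1²`; in the
same way `T0² = t0²`. For a `Y`-eigenvector `q` with eigenvalue `μ` these give
`Y (T1 q) = (μ² + t1² - t0²) q - μ T1 q`, so `T1 q - β q` is a `Y`-eigenvector with eigenvalue
`-μ` as soon as `2 μ β = μ² + t1² - t0²`; for `μ = γ_{2n}` this `β` is `b_{2n}`.

`Y` lowers no degree, and the spectrum `γ` is simple with `γ_{2n-1} = -γ_{2n}`, so every
eigenvector is a multiple of some `p_m`. Hence `T1` preserves `span {p_{2n}, p_{2n-1}}`: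
`T1 p_{2n} = b p_{2n} + κ p_{2n-1}` and `T1 p_{2n-1} = -b p_{2n-1} - p_{2n}`, the `-1` coming
from the coefficient of `x^{2n}`, and `T1² = t1²` forces `κ = b² - t1²`. Thus
`p_{2n} + (b ∓ t1) p_{2n-1}` are `±t1`-eigenvectors of `T1`. Finally `T1 f = t1 f` exactly when
`f` is even, and an even polynomial has no odd coefficients, which gives the uniqueness.
-/

open Polynomial

namespace Polynomial

/-- `T = t + (N / D) (σ - 1)` where `σ f = f.comp s`, with the denominator cleared. -/
def IsDemazureLusztig {K : Type*} [Field K] (T : K[X] → K[X]) (t : K) (s D N : K[X]) : Prop :=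
  ∀ f, D * (T f - C t * f) = N * (f.comp s - f)

section DemazureLusztig

variable {K : Type*} [Field K] {T : K[X] → K[X]} {t : K} {s D N : K[X]}

theorem IsDemazureLusztig.isLinearMap (hT : IsDemazureLusztig T t s D N) (hD : D ≠ 0) :
    IsLinearMap K T where
  map_add f g := mul_left_cancel₀ hD <| by
    linear_combination hT (f + g) - hT f - hT g + N * (by rw [add_comp] : (f + g).comp s = _)
  map_smul α f := mul_left_cancel₀ hD <| by
    simp only [smul_eq_C_mul]
    linear_combination hT (C α * f) - C α * hT f +
      N * (by rw [mul_comp, C_comp] : (C α * f).comp s = _)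

theorem IsDemazureLusztig.apply_apply (hT : IsDemazureLusztig T t s D N) (hD : D ≠ 0)
    (hs : s.comp s = X) (hDs : D.comp s = -D) (hNs : N - N.comp s = 2 * C t * D) (f : K[X]) :
    T (T f) = t ^ 2 • f := by
  have hTs := congrArg (·.comp s) (hT f)
  simp only [mul_comp, sub_comp, C_comp, comp_assoc, hs, comp_X, hDs] at hTs
  rw [smul_eq_C_mul, C_pow]
  refine mul_left_cancel₀ hD (mul_left_cancel₀ hD ?_)
  linear_combination
    D * hT (T f) + C t * D * hT f - N * hTs - N * hT f - N * (f.comp s - f) * hNs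

theorem IsDemazureLusztig.apply_eq_smul_iff (hT : IsDemazureLusztig T t s D N) (hD : D ≠ 0)
    (hN : N ≠ 0) {f : K[X]} : T f = t • f ↔ f.comp s = f := by
  rw [smul_eq_C_mul, ← sub_eq_zero, ← mul_right_inj' hD, mul_zero, hT, mul_eq_zero,
    or_iff_right hN, sub_eq_zero]

theorem natDegree_comp_sub_self_le (hs : s.natDegree = 1) (f : K[X]) :
    (f.comp s - f).natDegree ≤ f.natDegree :=
  (natDegree_sub_le _ _).trans (by rw [natDegree_comp, hs, mul_one, max_self])

theorem IsDemazureLusztig.natDegree_sub_le (hT : IsDemazureLusztig T t s D N)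
    (hD : D.natDegree = 1) (hN : N.natDegree ≤ 2) (hs : s.natDegree = 1) (f : K[X]) :
    (T f - C t * f).natDegree ≤ f.natDegree + 1 := by
  by_cases hg : T f - C t * f = 0
  · simp [hg]
  have hD0 : D ≠ 0 := by rintro rfl; simp at hD
  have := (natDegree_mul hD0 hg).symm.trans_le ((congrArg natDegree (hT f)).trans_le
    (natDegree_mul_le_of_le hN (natDegree_comp_sub_self_le hs f)))
  omega

theorem IsDemazureLusztig.natDegree_le (hT : IsDemazureLusztig T t s D N)
    (hD : D.natDegree = 1) (hN : N.natDegree ≤ 2) (hs : s.natDegree = 1) (f : K[X]) :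
    (T f).natDegree ≤ f.natDegree + 1 := by
  simpa using natDegree_add_le_of_degree_le (hT.natDegree_sub_le hD hN hs f)
    ((natDegree_C_mul_le t f).trans (Nat.le_succ _))

theorem IsDemazureLusztig.coeff_natDegree_succ (hT : IsDemazureLusztig T t s D N)
    (hD : D.natDegree = 1) (hN : N.natDegree ≤ 2) (hs : s.natDegree = 1) (f : K[X]) :
    D.coeff 1 * (T f).coeff (f.natDegree + 1) =
      N.coeff 2 * (s.leadingCoeff ^ f.natDegree - 1) * f.leadingCoeff := by
  have h := congrArg (coeff · (1 + (f.natDegree + 1))) (hT f)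
  rw [coeff_mul_add_eq_of_natDegree_le hD.le (hT.natDegree_sub_le hD hN hs f),
    show 1 + (f.natDegree + 1) = 2 + f.natDegree by ring,
    coeff_mul_add_eq_of_natDegree_le hN (natDegree_comp_sub_self_le hs f)] at h
  have hcomp : (f.comp s).coeff f.natDegree = f.leadingCoeff * s.leadingCoeff ^ f.natDegree := by
    simpa [hs] using coeff_comp_degree_mul_degree (p := f) (q := s) (by simp [hs])
  rw [coeff_sub, coeff_C_mul, coeff_eq_zero_of_natDegree_lt (Nat.lt_succ_self _), coeff_sub,
    hcomp, coeff_natDegree] at h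
  linear_combination h

end DemazureLusztig

section Even

theorem comp_neg_X_eq_self_iff {R : Type*} [CommRing R] [IsDomain R] [Infinite R] {f : R[X]} :
    f.comp (-X) = f ↔ ∀ x, f.eval x = f.eval (-x) := by
  refine ⟨fun h x => ?_, fun h => Polynomial.funext fun x => ?_⟩
  · simpa using congrArg (eval x) h.symm
  · simpa using (h x).symm

variable {K : Type*} [Field K]

theorem coeff_eq_zero_of_comp_neg_X_eq_self [NeZero (2 : K)] {f : K[X]} (h : f.comp (-X) = f)
    {k : ℕ} (hk : Odd k) : f.coeff k = 0 := by
  have := congrArg (coeff · k) h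
  simp only [show (-X : K[X]) = C (-1) * X by simp, comp_C_mul_X_coeff, hk.neg_one_pow] at this
  exact (mul_eq_zero.1 (by linear_combination -this : (2 : K) * f.coeff k = 0)).resolve_left
    two_ne_zero

theorem Monic.add_smul_of_natDegree_lt {P Q : K[X]} (hP : P.Monic)
    (h : Q.natDegree < P.natDegree) (c : K) : (P + c • Q).Monic :=
  hP.add_of_left ((degree_smul_le _ _).trans_lt (degree_lt_degree h))

theorem eq_of_monic_of_comp_neg_X_eq_self [NeZero (2 : K)] {P Q q : K[X]} {c : K}
    (hR : (P + c • Q).Monic) (hRe : (P + c • Q).comp (-X) = P + c • Q) (hQ : Q.Monic)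
    (hQodd : Odd Q.natDegree)
    (hq : q.Monic) (hqe : q.comp (-X) = q) (hspan : ∃ α β : K, q = α • P + β • Q) :
    q = P + c • Q := by
  obtain ⟨α, β, rfl⟩ := hspan
  have hdiff : α • P + β • Q - α • (P + c • Q) = (β - α * c) • Q := by module
  have hβ : β - α * c = 0 := by
    have he : ((β - α * c) • Q).comp (-X) = (β - α * c) • Q := by
      rw [← hdiff, sub_comp, hqe, smul_comp, hRe]
    simpa [hQ.coeff_natDegree] using coeff_eq_zero_of_comp_neg_X_eq_self he hQodd
  have hq' : α • P + β • Q = α • (P + c • Q) := by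
    rw [← sub_eq_zero, hdiff, hβ, zero_smul]
  have hα : α = 1 := by
    have := hq.leadingCoeff
    rwa [hq', smul_eq_C_mul, leadingCoeff_mul, leadingCoeff_C, hR.leadingCoeff, mul_one] at this
  rw [hq', hα, one_smul]

end Even

section Triangular

variable {K : Type*} [Field K] {Y : Module.End K K[X]} {p : ℕ → K[X]} {γ : ℕ → K}

theorem coeff_apply_of_degree_le (hY : ∀ f, (Y f).natDegree ≤ f.natDegree)
    (hp : ∀ m, (p m).Monic ∧ (p m).natDegree = m ∧ Y (p m) = γ m • p m)
    {f : K[X]} {k : ℕ} (hf : f.degree ≤ k) : (Y f).coeff k = γ k * f.coeff k := by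
  obtain ⟨hmon, hdeg, heig⟩ := hp k
  have hpk : (p k).coeff k = 1 := by rw [← hmon.coeff_natDegree, hdeg]
  set g := f - f.coeff k • p k
  have hg : g.degree < k := by
    refine (degree_lt_iff_coeff_zero _ _).2 fun j hj => ?_
    rcases hj.eq_or_lt with rfl | hj
    · simp [g, hpk]
    · simp [g, coeff_eq_zero_of_degree_lt (hf.trans_lt (WithBot.coe_lt_coe.2 hj)),
        coeff_eq_zero_of_natDegree_lt (by omega : (p k).natDegree < j)]
  have hYg : (Y g).coeff k = 0 := by
    by_cases hg0 : g = 0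
    · simp [hg0]
    · exact coeff_eq_zero_of_natDegree_lt
        ((hY g).trans_lt ((natDegree_lt_iff_degree_lt hg0).2 hg))
  have hf' : f = g + f.coeff k • p k := (sub_add_cancel _ _).symm
  rw [hf', map_add, map_smul, heig, coeff_add, hYg, coeff_add, coeff_smul, coeff_smul, coeff_smul,
    hpk, coeff_eq_zero_of_degree_lt hg]
  simp [mul_comm]

theorem eigenvalue_eq_of_apply_eq_smul (hY : ∀ f, (Y f).natDegree ≤ f.natDegree)
    (hp : ∀ m, (p m).Monic ∧ (p m).natDegree = m ∧ Y (p m) = γ m • p m)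
    {f : K[X]} {μ : K} (hf : f ≠ 0) (h : Y f = μ • f) : μ = γ f.natDegree := by
  have := coeff_apply_of_degree_le hY hp (degree_le_natDegree (p := f))
  rw [h, coeff_smul, smul_eq_mul, coeff_natDegree] at this
  exact mul_right_cancel₀ (leadingCoeff_ne_zero.2 hf) this

theorem eq_coeff_smul_of_apply_eq_smul (hY : ∀ f, (Y f).natDegree ≤ f.natDegree)
    (hp : ∀ m, (p m).Monic ∧ (p m).natDegree = m ∧ Y (p m) = γ m • p m)
    (hγ : Function.Injective γ) {f : K[X]} {m : ℕ} (h : Y f = γ m • f) :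
    f = f.coeff m • p m := by
  obtain ⟨hmon, hdeg, heig⟩ := hp m
  have hpm : (p m).coeff m = 1 := by rw [← hmon.coeff_natDegree, hdeg]
  by_contra hne
  set g := f - f.coeff m • p m
  have hg0 : g ≠ 0 := sub_ne_zero.2 hne
  have hYg : Y g = γ m • g := by
    rw [map_sub, map_smul, heig, h, smul_sub, smul_comm]
  have hgdeg : g.natDegree = m := (hγ (eigenvalue_eq_of_apply_eq_smul hY hp hg0 hYg)).symm
  apply hg0
  rw [← leadingCoeff_eq_zero, leadingCoeff, hgdeg, coeff_sub, coeff_smul, hpm, smul_eq_mul,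
    mul_one, sub_self]

end Triangular

end Polynomial

namespace Module.End

variable {K M : Type*} [Field K] [AddCommGroup M] [Module K M] {T0 T1 : Module.End K M}
  {t0 t1 : K}

theorem add_apply_apply_of_eigen (hH0 : ∀ f, T0 (T0 f) = t0 ^ 2 • f)
    (hH1 : ∀ f, T1 (T1 f) = t1 ^ 2 • f) {q : M} {μ : K} (hq : (T0 + T1) q = μ • q) :
    (T0 + T1) (T1 q) = (μ ^ 2 + t1 ^ 2 - t0 ^ 2) • q - μ • T1 q := by
  have hT0q : T0 q = μ • q - T1 q := eq_sub_of_add_eq hq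
  have := hH0 q
  rw [hT0q, map_sub, map_smul, hT0q] at this
  rw [LinearMap.add_apply, hH1]
  linear_combination (norm := module) -this

theorem add_apply_sub_smul_of_eigen (hH0 : ∀ f, T0 (T0 f) = t0 ^ 2 • f)
    (hH1 : ∀ f, T1 (T1 f) = t1 ^ 2 • f) {q : M} {μ β : K} (hq : (T0 + T1) q = μ • q)
    (hβ : 2 * μ * β = μ ^ 2 + t1 ^ 2 - t0 ^ 2) :
    (T0 + T1) (T1 q - β • q) = (-μ) • (T1 q - β • q) := by
  rw [map_sub, map_smul, add_apply_apply_of_eigen hH0 hH1 hq, hq, ← hβ]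
  module

theorem apply_add_smul_eq_smul (hH1 : ∀ f, T1 (T1 f) = t1 ^ 2 • f) {P Q : M}
    (hP : P ≠ 0) {β κ ε : K} (hTP : T1 P = β • P + κ • Q) (hTQ : T1 Q = -(β • Q) - P)
    (hε : ε ^ 2 = t1 ^ 2) :
    T1 (P + (β - ε) • Q) = ε • (P + (β - ε) • Q) := by
  have hκ : κ = β ^ 2 - t1 ^ 2 := by
    have h := hH1 P
    rw [hTP, map_add, map_smul, map_smul, hTP, hTQ] at h
    have : (β ^ 2 - κ - t1 ^ 2) • P = 0 := by linear_combination (norm := module) h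
    linear_combination -(smul_eq_zero.1 this).resolve_right hP
  rw [map_add, map_smul, hTP, hTQ, hκ]
  linear_combination (norm := module) hε • Q

end Module.End

namespace Polynomial

section HeckeEigenbasis

variable {K : Type*} [Field K] {T0 T1 : Module.End K K[X]} {t0 t1 : K} {p : ℕ → K[X]}
  {γ : ℕ → K} {k : ℕ} {β : K}

theorem exists_apply_succ_eq_smul_add_smul (hH0 : ∀ f, T0 (T0 f) = t0 ^ 2 • f)
    (hH1 : ∀ f, T1 (T1 f) = t1 ^ 2 • f) (hY : ∀ f, ((T0 + T1) f).natDegree ≤ f.natDegree)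
    (hp : ∀ m, (p m).Monic ∧ (p m).natDegree = m ∧ (T0 + T1) (p m) = γ m • p m)
    (hγ : Function.Injective γ) (hγk : γ k = -γ (k + 1))
    (hβ : 2 * γ (k + 1) * β = γ (k + 1) ^ 2 + t1 ^ 2 - t0 ^ 2) :
    ∃ κ : K, T1 (p (k + 1)) = β • p (k + 1) + κ • p k := by
  have h := Module.End.add_apply_sub_smul_of_eigen hH0 hH1 (hp (k + 1)).2.2 hβ
  rw [← hγk] at h
  exact ⟨_, eq_add_of_sub_eq' (eq_coeff_smul_of_apply_eq_smul hY hp hγ h)⟩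

theorem apply_eq_neg_smul_sub (hH0 : ∀ f, T0 (T0 f) = t0 ^ 2 • f)
    (hH1 : ∀ f, T1 (T1 f) = t1 ^ 2 • f) (hY : ∀ f, ((T0 + T1) f).natDegree ≤ f.natDegree)
    (hp : ∀ m, (p m).Monic ∧ (p m).natDegree = m ∧ (T0 + T1) (p m) = γ m • p m)
    (hγ : Function.Injective γ) (hγk : γ k = -γ (k + 1))
    (hβ : 2 * γ (k + 1) * β = γ (k + 1) ^ 2 + t1 ^ 2 - t0 ^ 2)
    (hcoeff : (T1 (p k)).coeff (k + 1) = -1) :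
    T1 (p k) = -(β • p k) - p (k + 1) := by
  have h := Module.End.add_apply_sub_smul_of_eigen hH0 hH1 (hp k).2.2 (β := -β)
    (by rw [hγk]; linear_combination hβ)
  rw [hγk, neg_neg] at h
  have h' := eq_coeff_smul_of_apply_eq_smul hY hp hγ h
  rw [coeff_sub, hcoeff, coeff_smul,
    coeff_eq_zero_of_natDegree_lt ((hp k).2.1.trans_lt k.lt_succ_self), smul_zero, sub_zero] at h'
  linear_combination (norm := module) h'

end HeckeEigenbasis

end Polynomial

namespace Wilson

variable {t0 t1 a b c d : ℂ} {T0 T1 : ℂ[X] → ℂ[X]}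

theorem isDemazureLusztig_T0 (hT0 : ∀ (f : ℂ[X]) (x : ℂ),
      (1 - 2 * x) * ((T0 f).eval x - t0 * f.eval x) =
        (c - x) * (d - x) * (f.eval (1 - x) - f.eval x)) :
    IsDemazureLusztig T0 t0 (1 - X) (1 - 2 * X) ((X - C c) * (X - C d)) := fun f =>
  Polynomial.funext fun x => by
    simp only [eval_mul, eval_sub, eval_one, eval_ofNat, eval_X, eval_C, eval_comp]
    linear_combination hT0 f x

theorem isDemazureLusztig_T1 (hT1 : ∀ (f : ℂ[X]) (x : ℂ),
      2 * x * ((T1 f).eval x - t1 * f.eval x) = (a + x) * (b + x) * (f.eval (-x) - f.eval x)) :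
    IsDemazureLusztig T1 t1 (-X) (2 * X) ((X + C a) * (X + C b)) := fun f =>
  Polynomial.funext fun x => by
    simp only [eval_mul, eval_sub, eval_add, eval_neg, eval_ofNat, eval_X, eval_C, eval_comp]
    linear_combination hT1 f x

theorem one_sub_two_mul_X_ne_zero : (1 - 2 * X : ℂ[X]) ≠ 0 := fun h => by
  simpa using congrArg (eval 0) h

theorem T0_apply_apply
    (hT0 : IsDemazureLusztig T0 t0 (1 - X) (1 - 2 * X) ((X - C c) * (X - C d)))
    (hcd : c + d = 2 * t0 + 1) (f : ℂ[X]) : T0 (T0 f) = t0 ^ 2 • f :=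
  hT0.apply_apply one_sub_two_mul_X_ne_zero (by simp) (by simp; ring) (by
    have hC : C c + C d = 2 * C t0 + 1 := by simpa [C_ofNat] using congrArg C hcd
    simp only [mul_comp, sub_comp, X_comp, C_comp]
    linear_combination (1 - 2 * X) * hC) f

theorem T1_apply_apply
    (hT1 : IsDemazureLusztig T1 t1 (-X) (2 * X) ((X + C a) * (X + C b)))
    (hab : a + b = 2 * t1) (f : ℂ[X]) : T1 (T1 f) = t1 ^ 2 • f :=
  hT1.apply_apply (mul_ne_zero two_ne_zero X_ne_zero) (by simp) (by simp) (by
    have hC : C a + C b = 2 * C t1 := by simpa [C_ofNat] using congrArg C hab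
    simp only [mul_comp, add_comp, X_comp, C_comp]
    linear_combination 2 * X * hC) f

theorem natDegree_T0_add_T1_le
    (hT0 : IsDemazureLusztig T0 t0 (1 - X) (1 - 2 * X) ((X - C c) * (X - C d)))
    (hT1 : IsDemazureLusztig T1 t1 (-X) (2 * X) ((X + C a) * (X + C b)))
    (f : ℂ[X]) : (T0 f + T1 f).natDegree ≤ f.natDegree := by
  have hD0 : (1 - 2 * X : ℂ[X]).natDegree = 1 := by compute_degree!
  have hD1 : (2 * X : ℂ[X]).natDegree = 1 := by compute_degree!
  have hN0 : ((X - C c) * (X - C d)).natDegree ≤ 2 := by compute_degree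
  have hN1 : ((X + C a) * (X + C b)).natDegree ≤ 2 := by compute_degree
  have hs0 : (1 - X : ℂ[X]).natDegree = 1 := by compute_degree!
  have hs1 : (-X : ℂ[X]).natDegree = 1 := by simp
  have hc0 := hT0.coeff_natDegree_succ hD0 hN0 hs0 f
  have hc1 := hT1.coeff_natDegree_succ hD1 hN1 hs1 f
  have hlc0 : (1 - X : ℂ[X]).leadingCoeff = -1 := by simp [leadingCoeff, hs0, coeff_one]
  -- `N0 / D0 ~ -X / 2` and `N1 / D1 ~ X / 2`, so the `X ^ (m + 1)` terms of `T0 f`, `T1 f` cancel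
  simp [hlc0, coeff_one, coeff_X, mul_sub, sub_mul, mul_add, add_mul, ← pow_two] at hc0 hc1
  rw [natDegree_le_iff_coeff_eq_zero]
  intro k hk
  rcases (Nat.succ_le_of_lt hk).eq_or_lt with rfl | hk
  · rw [coeff_add]
    linear_combination (hc1 - hc0) / 2
  · rw [coeff_add, coeff_eq_zero_of_natDegree_lt ((hT0.natDegree_le hD0 hN0 hs0 f).trans_lt hk),
      coeff_eq_zero_of_natDegree_lt ((hT1.natDegree_le hD1 hN1 hs1 f).trans_lt hk), add_zero]

theorem coeff_T1_natDegree_succ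
    (hT1 : IsDemazureLusztig T1 t1 (-X) (2 * X) ((X + C a) * (X + C b)))
    {f : ℂ[X]} {k : ℕ} (hf : f.Monic) (hk : f.natDegree = k) (hodd : Odd k) :
    (T1 f).coeff (k + 1) = -1 := by
  have h := hT1.coeff_natDegree_succ (by compute_degree!) (by compute_degree) (by simp) f
  simp [coeff_X, mul_add, add_mul, ← pow_two, hk, hodd.neg_one_pow, hf.leadingCoeff] at h
  linear_combination h / 2

theorem T1_apply_eq_smul_iff
    (hT1 : IsDemazureLusztig T1 t1 (-X) (2 * X) ((X + C a) * (X + C b))) {f : ℂ[X]} :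
    T1 f = t1 • f ↔ ∀ x, f.eval x = f.eval (-x) :=
  (hT1.apply_eq_smul_iff (mul_ne_zero two_ne_zero X_ne_zero)
    (mul_ne_zero (X_add_C_ne_zero a) (X_add_C_ne_zero b))).trans comp_neg_X_eq_self_iff

theorem eigenvalues_injective {γ : ℕ → ℂ} (hreg : ∀ k : ℕ, 2 * (t0 + t1) ≠ -(k : ℂ))
    (hγe : ∀ n : ℕ, γ (2 * n) = t0 + t1 + n)
    (hγo : ∀ n : ℕ, γ (2 * n + 1) = -(t0 + t1 + (n + 1))) : Function.Injective γ := by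
  intro i j h
  obtain ⟨k, rfl | rfl⟩ := Nat.even_or_odd' i <;>
    obtain ⟨l, rfl | rfl⟩ := Nat.even_or_odd' j <;> simp only [hγe, hγo] at h
  · simpa using h
  · exact absurd (by push_cast; linear_combination h) (hreg (k + l + 1))
  · exact absurd (by push_cast; linear_combination -h) (hreg (k + l + 1))
  · simpa using h

theorem eigenvalue_odd_eq_neg {γ : ℕ → ℂ} (hγe : ∀ n : ℕ, γ (2 * n) = t0 + t1 + n)
    (hγo : ∀ n : ℕ, γ (2 * n + 1) = -(t0 + t1 + (n + 1))) (m : ℕ) :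
    γ (2 * m + 1) = -γ (2 * m + 1 + 1) := by
  rw [hγo, show 2 * m + 1 + 1 = 2 * (m + 1) by ring, hγe]
  push_cast
  ring

theorem eigenvalue_even_ne_zero {γ : ℕ → ℂ}
    (hreg : ∀ k : ℕ, 2 * (t0 + t1) ≠ -(k : ℂ)) (hγe : ∀ n : ℕ, γ (2 * n) = t0 + t1 + n)
    (m : ℕ) : γ (2 * m + 1 + 1) ≠ 0 := by
  rw [show 2 * m + 1 + 1 = 2 * (m + 1) by ring, hγe]
  intro h
  apply hreg (2 * (m + 1))
  push_cast at h ⊢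
  linear_combination 2 * h

theorem two_mul_mul_b_eq {μ : ℂ} (hμ : μ ≠ 0) :
    2 * μ * ((μ + t1 + t0) * (μ + t1 - t0) / (2 * μ) - t1) = μ ^ 2 + t1 ^ 2 - t0 ^ 2 := by
  field_simp
  ring

end Wilson

/-- For `n ≥ 1`:
(i) `P⁺_{2n} := p_{2n} + (b_{2n} − t1)·p_{2n−1}` is even, and it is the unique monic even
polynomial in the span of `p_{2n}` and `p_{2n−1}`;
(ii) `P⁻_{2n} := p_{2n} + (b_{2n} + t1)·p_{2n−1}` satisfies `T1 P⁻_{2n} = −t1·P⁻_{2n}`. -/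
theorem statement10 (t0 u0 t1 u1 a b c d : ℂ)
    (ha : a = t1 + u1) (hb : b = t1 - u1)
    (hc : c = t0 + u0 + 1/2) (hd : d = t0 - u0 + 1/2)
    (hreg : ∀ k : ℕ, 2*(t0 + t1) ≠ -(k : ℂ))
    (T0 T1 : Polynomial ℂ → Polynomial ℂ)
    (hT0 : ∀ (f : Polynomial ℂ) (x : ℂ),
      (1 - 2*x) * ((T0 f).eval x - t0 * f.eval x) =
        (c - x) * (d - x) * (f.eval (1 - x) - f.eval x))
    (hT1 : ∀ (f : Polynomial ℂ) (x : ℂ),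
      (2*x) * ((T1 f).eval x - t1 * f.eval x) =
        (a + x) * (b + x) * (f.eval (-x) - f.eval x))
    (γ : ℕ → ℂ)
    (hγe : ∀ n : ℕ, γ (2*n) = t0 + t1 + n)
    (hγo : ∀ n : ℕ, γ (2*n+1) = -(t0 + t1 + (n+1)))
    (p : ℕ → Polynomial ℂ)
    (hp : ∀ m : ℕ, (p m).Monic ∧ (p m).natDegree = m ∧
      T0 (p m) + T1 (p m) = γ m • p m)
    (bb : ℕ → ℂ)
    (hbb : ∀ m : ℕ, bb m = (γ m + t1 + t0) * (γ m + t1 - t0) / (2 * γ m) - t1) :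
    ∀ n : ℕ, 1 ≤ n →
      ((p (2*n) + (bb (2*n) - t1) • p (2*n - 1)).Monic ∧
       (∀ x : ℂ, (p (2*n) + (bb (2*n) - t1) • p (2*n - 1)).eval x =
          (p (2*n) + (bb (2*n) - t1) • p (2*n - 1)).eval (-x)) ∧
       (∀ q : Polynomial ℂ, q.Monic → (∀ x : ℂ, q.eval x = q.eval (-x)) →
          (∃ α β : ℂ, q = α • p (2*n) + β • p (2*n - 1)) →
          q = p (2*n) + (bb (2*n) - t1) • p (2*n - 1))) ∧
      T1 (p (2*n) + (bb (2*n) + t1) • p (2*n - 1)) =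
        (-t1) • (p (2*n) + (bb (2*n) + t1) • p (2*n - 1)) := by
  intro n hn
  obtain ⟨m, rfl⟩ : ∃ m, n = m + 1 := ⟨n - 1, by omega⟩
  rw [show 2 * (m + 1) - 1 = 2 * m + 1 by omega, show 2 * (m + 1) = 2 * m + 1 + 1 by ring]
  have hT0' := Wilson.isDemazureLusztig_T0 hT0
  have hT1' := Wilson.isDemazureLusztig_T1 hT1
  let L0 := IsLinearMap.mk' T0 (hT0'.isLinearMap Wilson.one_sub_two_mul_X_ne_zero)
  let L1 := IsLinearMap.mk' T1 (hT1'.isLinearMap (mul_ne_zero two_ne_zero X_ne_zero))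
  have hH0 : ∀ f, L0 (L0 f) = t0 ^ 2 • f := Wilson.T0_apply_apply hT0' (by rw [hc, hd]; ring)
  have hH1 : ∀ f, L1 (L1 f) = t1 ^ 2 • f := Wilson.T1_apply_apply hT1' (by rw [ha, hb]; ring)
  have hY : ∀ f, ((L0 + L1) f).natDegree ≤ f.natDegree :=
    Wilson.natDegree_T0_add_T1_le hT0' hT1'
  have hγ := Wilson.eigenvalues_injective hreg hγe hγo
  have hγk := Wilson.eigenvalue_odd_eq_neg hγe hγo m
  have hβ := hbb (2 * m + 1 + 1) ▸
    Wilson.two_mul_mul_b_eq (Wilson.eigenvalue_even_ne_zero hreg hγe m)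
  obtain ⟨κ, hP⟩ := exists_apply_succ_eq_smul_add_smul hH0 hH1 hY hp hγ hγk hβ
  have hQ := apply_eq_neg_smul_sub hH0 hH1 hY hp hγ hγk hβ
    (Wilson.coeff_T1_natDegree_succ hT1' (hp _).1 (hp _).2.1 (odd_two_mul_add_one m))
  have hplus := Module.End.apply_add_smul_eq_smul hH1 (hp _).1.ne_zero hP hQ (ε := t1) rfl
  have hminus := Module.End.apply_add_smul_eq_smul hH1 (hp _).1.ne_zero hP hQ (neg_sq t1)
  rw [sub_neg_eq_add] at hminus
  have hmonic := (hp (2 * m + 1 + 1)).1.add_smul_of_natDegree_lt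
    (by rw [(hp (2 * m + 1)).2.1, (hp _).2.1]; omega) (bb (2 * m + 1 + 1) - t1)
  have heven := (Wilson.T1_apply_eq_smul_iff hT1').1 hplus
  refine ⟨⟨hmonic, heven, fun q hq hqe hspan => ?_⟩, hminus⟩
  exact eq_of_monic_of_comp_neg_X_eq_self hmonic (comp_neg_X_eq_self_iff.2 heven) (hp _).1
    ((hp _).2.1 ▸ odd_two_mul_add_one m) hq (comp_neg_X_eq_self_iff.2 hqe) hspan
end

section
/- Define the intertwiners S0 = U1∘Y − Y∘U1 and S1 = T1∘Y − Y∘T1, where (U1 f)(x) = −(T1 f)(x) − x·f(x). Then for every n ∈ ℤ≥0: S0 p_{2n} = (γ_{2n+1} − γ_{2n})·p_{2n+1} and S1 p_{2n+1} = 2γ_{2n+2}·p_{2n+2}. -/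
open Polynomial

/-- With `S0 = U1∘Y − Y∘U1` and `S1 = T1∘Y − Y∘T1`, where
`(U1 f)(x) = −(T1 f)(x) − x·f(x)`: for every `n`,
`S0 p_{2n} = (γ_{2n+1} − γ_{2n})·p_{2n+1}` and `S1 p_{2n+1} = 2γ_{2n+2}·p_{2n+2}`. -/
theorem statement12 (t0 u0 t1 u1 a b c d : ℂ)
    (ha : a = t1 + u1) (hb : b = t1 - u1)
    (hc : c = t0 + u0 + 1/2) (hd : d = t0 - u0 + 1/2)
    (hreg : ∀ k : ℕ, 2*(t0 + t1) ≠ -(k : ℂ))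
    (T0 T1 : Polynomial ℂ → Polynomial ℂ)
    (hT0 : ∀ (f : Polynomial ℂ) (x : ℂ),
      (1 - 2*x) * ((T0 f).eval x - t0 * f.eval x) =
        (c - x) * (d - x) * (f.eval (1 - x) - f.eval x))
    (hT1 : ∀ (f : Polynomial ℂ) (x : ℂ),
      (2*x) * ((T1 f).eval x - t1 * f.eval x) =
        (a + x) * (b + x) * (f.eval (-x) - f.eval x))
    (γ : ℕ → ℂ)
    (hγe : ∀ n : ℕ, γ (2*n) = t0 + t1 + n)
    (hγo : ∀ n : ℕ, γ (2*n+1) = -(t0 + t1 + (n+1)))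
    (p : ℕ → Polynomial ℂ)
    (hp : ∀ m : ℕ, (p m).Monic ∧ (p m).natDegree = m ∧
      T0 (p m) + T1 (p m) = γ m • p m)
    (Y U1 S0 S1 : Polynomial ℂ → Polynomial ℂ)
    (hY : ∀ f : Polynomial ℂ, Y f = T0 f + T1 f)
    (hU1 : ∀ (f : Polynomial ℂ) (x : ℂ),
      (U1 f).eval x = -(T1 f).eval x - x * f.eval x)
    (hS0 : ∀ f : Polynomial ℂ, S0 f = U1 (Y f) - Y (U1 f))
    (hS1 : ∀ f : Polynomial ℂ, S1 f = T1 (Y f) - Y (T1 f)) :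
    ∀ n : ℕ,
      S0 (p (2*n)) = (γ (2*n+1) - γ (2*n)) • p (2*n+1) ∧
      S1 (p (2*n+1)) = (2 * γ (2*n+2)) • p (2*n+2) := by
  subst ha hb hc hd
  -- two polynomials agreeing away from {0, 1/2} are equal
  have hext : ∀ P Q : Polynomial ℂ,
      (∀ x : ℂ, x ≠ 0 → x ≠ 1/2 → P.eval x = Q.eval x) → P = Q := by
    intro P Q h
    apply Polynomial.eq_of_infinite_eval_eq
    have hfin : ({0, 1/2} : Set ℂ).Finite := (Set.finite_singleton _).insert _
    apply Set.Infinite.mono (s := ({0, 1/2} : Set ℂ)ᶜ)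
    · intro x hx
      simp only [Set.mem_compl_iff, Set.mem_insert_iff, Set.mem_singleton_iff, not_or] at hx
      exact h x hx.1 hx.2
    · exact hfin.infinite_compl
  have h2x : ∀ x : ℂ, x ≠ 0 → (2*x) ≠ 0 := fun x hx => mul_ne_zero two_ne_zero hx
  have hwx : ∀ x : ℂ, x ≠ 1/2 → (1 - 2*x) ≠ 0 := by
    intro x hx h
    exact hx (by linear_combination -h/2)
  -- linearity of T1 and T0
  have hT1lin : ∀ (z w : ℂ) (f g : Polynomial ℂ),
      T1 (z • f + w • g) = z • T1 f + w • T1 g := by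
    intro z w f g
    apply hext; intro x hx0 _
    have h1 := hT1 (z • f + w • g) x
    have h2f := hT1 f x
    have h2g := hT1 g x
    simp only [eval_add, eval_smul, smul_eq_mul] at h1 ⊢
    apply mul_left_cancel₀ (h2x x hx0)
    linear_combination h1 - z * h2f - w * h2g
  have hT0lin : ∀ (z w : ℂ) (f g : Polynomial ℂ),
      T0 (z • f + w • g) = z • T0 f + w • T0 g := by
    intro z w f g
    apply hext; intro x _ hx12
    have h1 := hT0 (z • f + w • g) x
    have h2f := hT0 f x
    have h2g := hT0 g x
    simp only [eval_add, eval_smul, smul_eq_mul] at h1 ⊢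
    apply mul_left_cancel₀ (hwx x hx12)
    linear_combination h1 - z * h2f - w * h2g
  have hT1smul : ∀ (z : ℂ) (f : Polynomial ℂ), T1 (z • f) = z • T1 f := by
    intro z f
    have := hT1lin z 0 f 0
    simpa using this
  have hT0smul : ∀ (z : ℂ) (f : Polynomial ℂ), T0 (z • f) = z • T0 f := by
    intro z f
    have := hT0lin z 0 f 0
    simpa using this
  have hT1add : ∀ f g : Polynomial ℂ, T1 (f + g) = T1 f + T1 g := by
    intro f g
    have := hT1lin 1 1 f g
    simpa using this
  have hT0add : ∀ f g : Polynomial ℂ, T0 (f + g) = T0 f + T0 g := by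
    intro f g
    have := hT0lin 1 1 f g
    simpa using this
  -- the quadratic (Hecke) relations
  have hT1sq : ∀ f : Polynomial ℂ, T1 (T1 f) = (t1*t1) • f := by
    intro f
    apply hext; intro x hx0 _
    have e1 := hT1 (T1 f) x
    have e2 := hT1 f x
    have e3 := hT1 f (-x)
    rw [neg_neg] at e3
    simp only [eval_smul, smul_eq_mul]
    apply mul_left_cancel₀ (mul_ne_zero (h2x x hx0) (h2x x hx0))
    linear_combination (2*x) * e1 + (2*x*t1 - (t1+u1+x)*(t1-u1+x)) * e2
      - (t1+u1+x)*(t1-u1+x) * e3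
  have hT0sq : ∀ f : Polynomial ℂ, T0 (T0 f) = (t0*t0) • f := by
    intro f
    apply hext; intro x _ hx12
    have e1 := hT0 (T0 f) x
    have e2 := hT0 f x
    have e3 := hT0 f (1-x)
    rw [show (1:ℂ) - (1-x) = x from by ring] at e3
    simp only [eval_smul, smul_eq_mul]
    apply mul_left_cancel₀ (mul_ne_zero (hwx x hx12) (hwx x hx12))
    linear_combination (1-2*x) * e1
      + ((1-2*x)*t0 - (t0+u0+1/2-x)*(t0-u0+1/2-x)) * e2
      - (t0+u0+1/2-x)*(t0-u0+1/2-x) * e3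
  -- anticommutators with X
  have hXT1 : ∀ f : Polynomial ℂ,
      X * T1 f + T1 (X * f) = -((X^2 + C ((t1+u1)*(t1-u1))) * f) := by
    intro f
    apply hext; intro x hx0 _
    have e2 := hT1 f x
    have e4 := hT1 (X * f) x
    simp only [eval_mul, eval_X, eval_add, eval_pow, eval_C, eval_neg] at e4 ⊢
    apply mul_left_cancel₀ (h2x x hx0)
    linear_combination x * e2 + e4
  have hXT0 : ∀ f : Polynomial ℂ,
      X * T0 f + T0 (X * f)
        = T0 f + ((X^2 - X + C ((t0+u0+1/2)*(t0-u0+1/2) - t0)) * f) := by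
    intro f
    apply hext; intro x _ hx12
    have e2 := hT0 f x
    have e4 := hT0 (X * f) x
    simp only [eval_mul, eval_X, eval_add, eval_sub, eval_pow, eval_C] at e4 ⊢
    apply mul_left_cancel₀ (hwx x hx12)
    linear_combination (x-1) * e2 + e4
  -- polynomial form of the T1 relation, with C distributed
  have hPT1 : ∀ f : Polynomial ℂ,
      C 2 * (X * (T1 f - C t1 * f)) =
        C ((t1+u1)*(t1-u1)) * (f.comp (-X) - f)
          + C (2*t1) * (X * (f.comp (-X) - f))
          + X^2 * (f.comp (-X) - f) := by
    intro f
    apply hext; intro x hx0 _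
    simp only [eval_mul, eval_C, eval_X, eval_sub, eval_comp, eval_neg, eval_pow,
      eval_add]
    linear_combination hT1 f x
  -- coefficients of f.comp (-X)
  have hcompcoeff : ∀ (f : Polynomial ℂ) (k : ℕ),
      (f.comp (-X)).coeff k = (-1)^k * f.coeff k := by
    intro f
    induction f using Polynomial.induction_on' with
    | add q r hq hr =>
      intro k
      simp only [add_comp, coeff_add, hq, hr]
      ring
    | monomial n t =>
      intro k
      have h1 : ((-X : Polynomial ℂ))^n = C ((-1)^n) * X^n := by
        rw [neg_pow]
        congr 1
        rw [map_pow, map_neg, map_one]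
      rw [monomial_comp, h1, ← mul_assoc, ← C_mul, coeff_C_mul, coeff_X_pow,
        coeff_monomial]
      by_cases h : n = k
      · subst h; simp [mul_comm]
      · simp [h, Ne.symm h]
  have hcompdeg : ∀ f : Polynomial ℂ, (f.comp (-X)).natDegree ≤ f.natDegree := by
    intro f
    have := Polynomial.natDegree_comp_le (p := f) (q := (-X : Polynomial ℂ))
    simpa [natDegree_neg, natDegree_X] using this
  -- degree and top coefficient of T1 f
  have hT1degcoe : ∀ (f : Polynomial ℂ) (m : ℕ), f.natDegree ≤ m →
      (T1 f).natDegree ≤ m+1 ∧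
        2 * ((T1 f).coeff (m+1)) = (-1)^m * f.coeff m - f.coeff m := by
    intro f m hf
    have hdh : (f.comp (-X) - f).natDegree ≤ m :=
      le_trans (natDegree_sub_le _ _) (max_le (le_trans (hcompdeg f) hf) hf)
    set h : Polynomial ℂ := f.comp (-X) - f with hhdef
    have hRd : (C ((t1+u1)*(t1-u1)) * h + C (2*t1) * (X * h) + X^2 * h).natDegree
        ≤ m + 2 := by
      refine le_trans (natDegree_add_le _ _) (max_le (le_trans (natDegree_add_le _ _)
        (max_le ?_ ?_)) ?_)
      · exact le_trans (natDegree_C_mul_le _ _) (le_trans hdh (by omega))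
      · refine le_trans (natDegree_C_mul_le _ _) ?_
        refine le_trans natDegree_mul_le ?_
        have := natDegree_X (R := ℂ)
        omega
      · refine le_trans natDegree_mul_le ?_
        have : (X^2 : Polynomial ℂ).natDegree = 2 := natDegree_X_pow 2
        omega
    constructor
    · rw [natDegree_le_iff_coeff_eq_zero]
      intro N hN
      have h1 := congrArg (fun q : Polynomial ℂ => q.coeff (N+1)) (hPT1 f)
      rw [coeff_C_mul, coeff_X_mul, coeff_sub, coeff_C_mul] at h1
      rw [coeff_eq_zero_of_natDegree_lt (lt_of_le_of_lt hRd (by omega))] at h1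
      have hfN : f.coeff N = 0 :=
        coeff_eq_zero_of_natDegree_lt (lt_of_le_of_lt hf (by omega))
      rw [hfN] at h1
      linear_combination h1/2
    · have h1 := congrArg (fun q : Polynomial ℂ => q.coeff (m+2)) (hPT1 f)
      have e1 : (X * (T1 f - C t1 * f)).coeff (m+2)
          = (T1 f - C t1 * f).coeff (m+1) := coeff_X_mul _ (m+1)
      have e2 : (X * h).coeff (m+2) = h.coeff (m+1) := coeff_X_mul _ (m+1)
      rw [coeff_C_mul, e1, coeff_sub, coeff_C_mul] at h1
      rw [coeff_add, coeff_add, coeff_C_mul, coeff_C_mul, e2,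
        coeff_X_pow_mul] at h1
      have hh1 : h.coeff (m+1) = 0 :=
        coeff_eq_zero_of_natDegree_lt (lt_of_le_of_lt hdh (by omega))
      have hh2 : h.coeff (m+2) = 0 :=
        coeff_eq_zero_of_natDegree_lt (lt_of_le_of_lt hdh (by omega))
      have hfm1 : f.coeff (m+1) = 0 :=
        coeff_eq_zero_of_natDegree_lt (lt_of_le_of_lt hf (by omega))
      have hhm : h.coeff m = (-1)^m * f.coeff m - f.coeff m := by
        rw [hhdef, coeff_sub, hcompcoeff]
      rw [hh1, hh2, hfm1, hhm] at h1
      linear_combination h1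
  -- basic facts about the p m
  have hmono : ∀ m, (p m).Monic := fun m => (hp m).1
  have hdegp : ∀ m, (p m).natDegree = m := fun m => (hp m).2.1
  have hYp : ∀ m, Y (p m) = γ m • p m := fun m => by rw [hY]; exact (hp m).2.2
  have hcoeffp : ∀ m, (p m).coeff m = 1 := by
    intro m
    have h1 := (hmono m).coeff_natDegree
    rwa [hdegp m] at h1
  have hcoeffp' : ∀ k m : ℕ, k < m → (p k).coeff m = 0 := by
    intro k m hk
    exact coeff_eq_zero_of_natDegree_lt (by rw [hdegp]; exact hk)
  -- distinctness of eigenvalues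
  have hγne : ∀ k m : ℕ, k < m → γ k ≠ γ m := by
    have hs : ∀ i j : ℕ, t0 + t1 + (i:ℂ) ≠ -(t0 + t1 + ((j:ℂ)+1)) := by
      intro i j h
      apply hreg (i + j + 1)
      push_cast
      linear_combination h
    intro k m hkm h
    rcases Nat.even_or_odd k with ⟨i, hi⟩ | ⟨i, hi⟩ <;>
      rcases Nat.even_or_odd m with ⟨j, hj⟩ | ⟨j, hj⟩
    · have e1 : γ k = t0 + t1 + (i:ℂ) := by rw [show k = 2*i by omega, hγe]
      have e2 : γ m = t0 + t1 + (j:ℂ) := by rw [show m = 2*j by omega, hγe]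
      rw [e1, e2] at h
      have : (i:ℂ) = (j:ℂ) := by linear_combination h
      have := Nat.cast_inj.mp this
      omega
    · have e1 : γ k = t0 + t1 + (i:ℂ) := by rw [show k = 2*i by omega, hγe]
      have e2 : γ m = -(t0 + t1 + ((j:ℂ)+1)) := by rw [show m = 2*j+1 by omega, hγo]
      rw [e1, e2] at h
      exact hs i j h
    · have e1 : γ k = -(t0 + t1 + ((i:ℂ)+1)) := by rw [show k = 2*i+1 by omega, hγo]
      have e2 : γ m = t0 + t1 + (j:ℂ) := by rw [show m = 2*j by omega, hγe]
      rw [e1, e2] at h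
      exact hs j i h.symm
    · have e1 : γ k = -(t0 + t1 + ((i:ℂ)+1)) := by rw [show k = 2*i+1 by omega, hγo]
      have e2 : γ m = -(t0 + t1 + ((j:ℂ)+1)) := by rw [show m = 2*j+1 by omega, hγo]
      rw [e1, e2] at h
      have : (i:ℂ) = (j:ℂ) := by linear_combination -h
      have := Nat.cast_inj.mp this
      omega
  -- linearity of Y
  have hYlin : ∀ (z w : ℂ) (f g : Polynomial ℂ),
      Y (z • f + w • g) = z • Y f + w • Y g := by
    intro z w f g
    rw [hY, hY, hY, hT0lin, hT1lin]
    module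
  have hY0 : Y 0 = 0 := by
    have := hYlin 0 0 0 0
    simpa using this
  have hYsum : ∀ (N : ℕ) (cf : ℕ → ℂ),
      Y (∑ k ∈ Finset.range N, cf k • p k)
        = ∑ k ∈ Finset.range N, (cf k * γ k) • p k := by
    intro N cf
    induction N with
    | zero => simpa using hY0
    | succ N ih =>
      rw [Finset.sum_range_succ, Finset.sum_range_succ, ← ih]
      calc Y ((∑ k ∈ Finset.range N, cf k • p k) + cf N • p N)
          = Y ((1:ℂ) • (∑ k ∈ Finset.range N, cf k • p k) + cf N • p N) := by
            rw [one_smul]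
        _ = (1:ℂ) • Y (∑ k ∈ Finset.range N, cf k • p k) + cf N • Y (p N) :=
            hYlin 1 (cf N) _ _
        _ = Y (∑ k ∈ Finset.range N, cf k • p k) + (cf N * γ N) • p N := by
            rw [one_smul, hYp, smul_smul]
  -- every polynomial of degree ≤ N is a combination of p 0, ..., p N
  have hspan : ∀ (N : ℕ) (q : Polynomial ℂ), q.natDegree ≤ N →
      ∃ cf : ℕ → ℂ, q = ∑ k ∈ Finset.range (N+1), cf k • p k := by
    intro N
    induction N with
    | zero =>
      intro q hq
      refine ⟨fun _ => q.coeff 0, ?_⟩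
      have hp0 : p 0 = 1 := (hmono 0).natDegree_eq_zero.mp (hdegp 0)
      rw [Finset.sum_range_one, hp0]
      calc q = C (q.coeff 0) := eq_C_of_natDegree_le_zero hq
        _ = q.coeff 0 • 1 := by rw [smul_eq_C_mul, mul_one]
    | succ N ih =>
      intro q hq
      have hq' : (q - q.coeff (N+1) • p (N+1)).natDegree ≤ N := by
        rw [natDegree_le_iff_coeff_eq_zero]
        intro M hM
        rw [coeff_sub, coeff_smul, smul_eq_mul]
        by_cases hME : M = N+1
        · subst hME
          rw [hcoeffp (N+1)]
          ring
        · rw [coeff_eq_zero_of_natDegree_lt (lt_of_le_of_lt hq (by omega : N+1 < M)),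
            coeff_eq_zero_of_natDegree_lt
              (show (p (N+1)).natDegree < M by rw [hdegp]; omega)]
          ring
      obtain ⟨cf, hcf⟩ := ih _ hq'
      refine ⟨Function.update cf (N+1) (q.coeff (N+1)), ?_⟩
      rw [Finset.sum_range_succ, Function.update_self]
      have hcong : ∑ k ∈ Finset.range (N+1),
            Function.update cf (N+1) (q.coeff (N+1)) k • p k
          = ∑ k ∈ Finset.range (N+1), cf k • p k := by
        refine Finset.sum_congr rfl (fun k hk => ?_)
        rw [Function.update_of_ne (by simp only [Finset.mem_range] at hk; omega)]
      rw [hcong, ← hcf]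
      abel
  -- linear independence
  have hindep : ∀ (N : ℕ) (d : ℕ → ℂ),
      (∑ k ∈ Finset.range N, d k • p k) = 0 → ∀ k < N, d k = 0 := by
    intro N
    induction N with
    | zero => intro d _ k hk; omega
    | succ N ih =>
      intro d hsum k hk
      have htop : d N = 0 := by
        have h1 := congrArg (fun q : Polynomial ℂ => q.coeff N) hsum
        simp only [coeff_zero] at h1
        rw [finset_sum_coeff, Finset.sum_range_succ] at h1
        have hz : ∑ k ∈ Finset.range N, (d k • p k).coeff N = 0 := by
          refine Finset.sum_eq_zero (fun j hj => ?_)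
          rw [coeff_smul, hcoeffp' j N (Finset.mem_range.mp hj), smul_zero]
        rw [hz, zero_add, coeff_smul, hcoeffp N, smul_eq_mul, mul_one] at h1
        exact h1
      by_cases hkN : k = N
      · subst hkN; exact htop
      · refine ih d ?_ k (by omega)
        rw [Finset.sum_range_succ, htop, zero_smul, add_zero] at hsum
        exact hsum
  -- uniqueness of eigenvectors
  have huniq : ∀ (M : ℕ) (q : Polynomial ℂ), q.natDegree ≤ M →
      Y q = γ M • q → q = q.coeff M • p M := by
    intro M q hdq heig
    obtain ⟨cf, hcf⟩ := hspan M q hdq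
    have heq : ∑ k ∈ Finset.range (M+1), (cf k * γ k - γ M * cf k) • p k = 0 := by
      have h1 : Y q = ∑ k ∈ Finset.range (M+1), (cf k * γ k) • p k := by
        rw [hcf, hYsum]
      have h2 : γ M • q = ∑ k ∈ Finset.range (M+1), (γ M * cf k) • p k := by
        rw [hcf, Finset.smul_sum]
        exact Finset.sum_congr rfl (fun k _ => by rw [smul_smul])
      rw [heig, h2] at h1
      simp only [sub_smul, Finset.sum_sub_distrib]
      rw [← h1]
      abel
    have hzero := hindep (M+1) _ heq
    have hcfk : ∀ k < M, cf k = 0 := by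
      intro k hk
      have h1 := hzero k (by omega)
      have h2 : cf k * (γ k - γ M) = 0 := by linear_combination h1
      rcases mul_eq_zero.mp h2 with h3 | h3
      · exact h3
      · exact absurd (sub_eq_zero.mp h3) (hγne k M hk)
    have hqM : q = cf M • p M := by
      rw [hcf, Finset.sum_range_succ]
      rw [Finset.sum_eq_zero
        (fun k hk => by rw [hcfk k (Finset.mem_range.mp hk), zero_smul]), zero_add]
    have hcM : q.coeff M = cf M := by
      rw [hqM, coeff_smul, hcoeffp M, smul_eq_mul, mul_one]
    rw [hcM]
    exact hqM
  intro n
  -- eigenvalue facts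
  have hγodd : γ (2*n+1) = -(t0 + t1 + ((n:ℂ)+1)) := hγo n
  have hγeven : γ (2*n) = t0 + t1 + (n:ℂ) := hγe n
  have hγ2 : γ (2*n+2) = t0 + t1 + ((n:ℂ)+1) := by
    have h1 := hγe (n+1)
    rw [show 2*(n+1) = 2*n+2 by ring] at h1
    push_cast at h1
    exact h1
  constructor
  · -- S0 branch
    set P0 := p (2*n) with hP0
    set e := γ (2*n) with he
    have hYP0 : Y P0 = e • P0 := hYp _
    have heig : T0 P0 + T1 P0 = e • P0 := (hp (2*n)).2.2
    have hT0P0 : T0 P0 = e • P0 - T1 P0 := by rw [← heig]; abel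
    have hU1f : ∀ f : Polynomial ℂ, U1 f = -T1 f - X * f := by
      intro f
      apply hext; intro x _ _
      rw [hU1]
      simp [eval_sub, eval_neg, eval_mul, eval_X]
    -- action of Y on T1 P0
    have hT0r : T0 (T1 P0) = (e*e - t0*t0) • P0 - e • T1 P0 := by
      have h1 : T0 (T0 P0 + T1 P0) = T0 (e • P0) := by rw [heig]
      rw [hT0add, hT0sq, hT0smul, hT0P0] at h1
      have h2 : T0 (T1 P0) = e • (e • P0 - T1 P0) - (t0*t0) • P0 := by
        rw [← h1]; abel
      rw [h2]; module
    have hYT1P0 : Y (T1 P0) = (e*e + t1*t1 - t0*t0) • P0 - e • T1 P0 := by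
      rw [hY, hT0r, hT1sq]; module
    -- action of Y on X * P0
    have hYXP0 : Y (X * P0)
        = (e + ((t0+u0+1/2)*(t0-u0+1/2) - (t1+u1)*(t1-u1) - t0)) • P0
          - T1 P0 - e • (X * P0) - X * P0 := by
      have h1 := hXT0 P0
      have h2 := hXT1 P0
      have h3 : Y (X * P0) = T0 (X * P0) + T1 (X * P0) := hY _
      have h6 : T0 P0 + T1 P0 = e • P0 := heig
      simp only [smul_eq_C_mul, map_add, map_sub, map_mul] at h1 h2 h3 h6 ⊢
      linear_combination h3 + h1 + h2 + (1 - (X : Polynomial ℂ)) * h6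
    -- action of Y on u := U1 P0
    have hu : U1 P0 = -T1 P0 - X * P0 := hU1f P0
    have hYu : Y (U1 P0) = (-(e+1)) • U1 P0
        - (e*e + e + t1*t1 - t0*t0
            + ((t0+u0+1/2)*(t0-u0+1/2) - (t1+u1)*(t1-u1) - t0)) • P0 := by
      have husmul : U1 P0 = (-1 : ℂ) • T1 P0 + (-1 : ℂ) • (X * P0) := by
        rw [hu]; module
      rw [husmul, hYlin, hYT1P0, hYXP0]
      module
    -- S0 P0 in terms of U1 P0 and P0
    have hU1Y : U1 (Y P0) = e • U1 P0 := by
      rw [hYP0, hU1f (e • P0), hT1smul, mul_smul_comm, hu]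
      module
    have hq0 : S0 P0 = (2*e+1) • U1 P0
        + (e*e + e + t1*t1 - t0*t0
            + ((t0+u0+1/2)*(t0-u0+1/2) - (t1+u1)*(t1-u1) - t0)) • P0 := by
      rw [hS0, hU1Y, hYu]
      module
    have hγg : γ (2*n+1) = -(e+1) := by rw [hγodd, hγeven]; ring
    have hYq0 : Y (S0 P0) = γ (2*n+1) • S0 P0 := by
      rw [hq0, hYlin, hYu, hYP0, hγg]
      module
    -- degree and top coefficient
    have hdP0 : P0.natDegree ≤ 2*n := le_of_eq (hdegp _)
    obtain ⟨hdr, hcr⟩ := hT1degcoe P0 (2*n) hdP0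
    have hcr' : (T1 P0).coeff (2*n+1) = 0 := by
      have h2 : ((-1:ℂ))^(2*n) = 1 := Even.neg_one_pow ⟨n, by ring⟩
      rw [h2] at hcr
      linear_combination hcr/2
    have hdu : (U1 P0).natDegree ≤ 2*n+1 := by
      rw [hu]
      refine le_trans (natDegree_sub_le _ _) (max_le ?_ ?_)
      · rw [natDegree_neg]; exact hdr
      · refine le_trans natDegree_mul_le ?_
        rw [natDegree_X, hdegp]
        omega
    have hcu : (U1 P0).coeff (2*n+1) = -1 := by
      rw [hu, coeff_sub, coeff_neg, hcr', coeff_X_mul, hcoeffp]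
      ring
    have hdq0 : (S0 P0).natDegree ≤ 2*n+1 := by
      rw [hq0]
      refine le_trans (natDegree_add_le _ _) (max_le ?_ ?_)
      · exact le_trans (natDegree_smul_le _ _) hdu
      · exact le_trans (natDegree_smul_le _ _) (by rw [hdegp]; omega)
    have hcq0 : (S0 P0).coeff (2*n+1) = γ (2*n+1) - γ (2*n) := by
      rw [hq0, coeff_add, coeff_smul, coeff_smul, smul_eq_mul, smul_eq_mul, hcu,
        coeff_eq_zero_of_natDegree_lt (by rw [hdegp]; omega : P0.natDegree < 2*n+1),
        hγg]
      ring
    have hfin := huniq (2*n+1) (S0 P0) hdq0 hYq0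
    rw [hcq0] at hfin
    exact hfin
  · -- S1 branch
    set P1 := p (2*n+1) with hP1
    set g := γ (2*n+1) with hg
    have hYP1 : Y P1 = g • P1 := hYp _
    have heig : T0 P1 + T1 P1 = g • P1 := (hp (2*n+1)).2.2
    have hT0P1 : T0 P1 = g • P1 - T1 P1 := by
      rw [← heig]; abel
    have hT0r : T0 (T1 P1) = (g*g - t0*t0) • P1 - g • T1 P1 := by
      have h1 : T0 (T0 P1 + T1 P1) = T0 (g • P1) := by rw [heig]
      rw [hT0add, hT0sq, hT0smul, hT0P1] at h1
      have h2 : T0 (T1 P1) = g • (g • P1 - T1 P1) - (t0*t0) • P1 := by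
        rw [← h1]; abel
      rw [h2]; module
    have hYr : Y (T1 P1) = (g*g + t1*t1 - t0*t0) • P1 - g • T1 P1 := by
      rw [hY, hT0r, hT1sq]; module
    have hq1 : S1 P1 = (2*g) • T1 P1 - (g*g + t1*t1 - t0*t0) • P1 := by
      rw [hS1, hYP1, hT1smul, hYr]; module
    have hγ2g : γ (2*n+2) = -g := by rw [hγ2, hγodd]; ring
    have hYq1 : Y (S1 P1) = γ (2*n+2) • S1 P1 := by
      rw [hq1]
      have h3 : (2*g) • T1 P1 - (g*g + t1*t1 - t0*t0) • P1
          = (2*g) • T1 P1 + (-(g*g + t1*t1 - t0*t0)) • P1 := by module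
      rw [h3, hYlin, hYr, hYP1, hγ2g]
      module
    have hdP1 : P1.natDegree ≤ 2*n+1 := le_of_eq (hdegp _)
    obtain ⟨hdr, hcr⟩ := hT1degcoe P1 (2*n+1) hdP1
    have hcr' : (T1 P1).coeff (2*n+2) = -1 := by
      have h1 : P1.coeff (2*n+1) = 1 := hcoeffp _
      have h2 : ((-1:ℂ))^(2*n+1) = -1 := Odd.neg_one_pow ⟨n, by ring⟩
      rw [h1, h2] at hcr
      linear_combination hcr/2
    have hdq1 : (S1 P1).natDegree ≤ 2*n+2 := by
      rw [hq1]
      refine le_trans (natDegree_sub_le _ _) (max_le ?_ ?_)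
      · exact le_trans (natDegree_smul_le _ _) hdr
      · exact le_trans (natDegree_smul_le _ _) (by rw [hdegp]; omega)
    have hcq1 : (S1 P1).coeff (2*n+2) = 2 * γ (2*n+2) := by
      rw [hq1, coeff_sub, coeff_smul, coeff_smul, smul_eq_mul, smul_eq_mul, hcr',
        coeff_eq_zero_of_natDegree_lt (by rw [hdegp]; omega : P1.natDegree < 2*n+2),
        hγ2g]
      ring
    have hfin := huniq (2*n+2) (S1 P1) hdq1 hYq1
    rw [hcq1] at hfin
    exact hfin
end

section
/- Rodriguez-type formula: with S0 = U1∘Y − Y∘U1 and S1 = T1∘Y − Y∘T1, where (U1 f)(x) = −(T1 f)(x) − x·f(x), one has for every n ∈ ℤ≥0: (S1∘S0)^n applied to the constant polynomial 1 equals (−1)^n·(2t0+2t1+1)_{2n}·p_{2n}, and S0((S1∘S0)^n(1)) = (−1)^{n+1}·(2t0+2t1+1)_{2n+1}·p_{2n+1}. -/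
/-!
Since `Y` has the monic eigenpolynomials `p m` with pairwise distinct eigenvalues `γ m`, it is
triangular in the monomial basis with diagonal `γ`, so an eigenpolynomial of degree `≤ M` for
`γ M` is a multiple of `p M`, the multiple being its coefficient of `x ^ M`.

The relations `T0² = t0²`, `T1² = t1²` and those between `T0`, `T1` and multiplication by `x`
give `T1 Y + Y T1 = Y² + const` and `U1 Y + Y U1 = -U1 - Y² - Y + const`. Whenever
`A Y + Y A = c A + F(Y)`, the commutator `S = A Y - Y A` satisfies `Y S = c S - S Y`, so `S` sends
a `γ`-eigenvector to a `(c - γ)`-eigenvector. Hence `S0 p_{2k}` and `S1 p_{2k+1}` are the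
multiples `(γ_{m+1} - γ_m) p_{m+1}` of the next `p`, the factor coming from leading coefficients,
and the Rodrigues formula follows by induction.
-/

open Polynomial

theorem Polynomial.eq_of_forall_eval_mul_eq {R : Type*} [CommRing R] [IsDomain R] [Infinite R]
    {q f g : R[X]} (hq : q ≠ 0) (h : ∀ x, q.eval x * f.eval x = q.eval x * g.eval x) :
    f = g :=
  mul_left_cancel₀ hq (Polynomial.funext fun x => by simp only [eval_mul, h])

theorem Polynomial.one_sub_two_mul_X_ne_zero {R : Type*} [CommRing R] [Nontrivial R] :
    (1 - 2 * X : R[X]) ≠ 0 := fun h => by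
  simpa using congrArg (eval 0) h

theorem mul_commutator_eq_of_anticommutator {R : Type*} [Ring R] {A Y F : R} (c : R)
    (hc : Commute c Y) (hF : Commute F Y) (h : A * Y + Y * A = c * A + F) :
    Y * (A * Y - Y * A) = c * (A * Y - Y * A) - (A * Y - Y * A) * Y := by
  have key : A * (Y * Y) - (Y * Y) * A = c * (A * Y - Y * A) :=
    calc A * (Y * Y) - (Y * Y) * A = (A * Y + Y * A) * Y - Y * (A * Y + Y * A) := by noncomm_ring
      _ = c * (A * Y - Y * A) + (F * Y - Y * F) := by
        rw [h, add_mul, mul_add, ← mul_assoc Y c A, ← hc.eq]; noncomm_ring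
      _ = c * (A * Y - Y * A) := by rw [hF.eq, sub_self, add_zero]
  calc Y * (A * Y - Y * A) = (A * (Y * Y) - (Y * Y) * A) - (A * Y - Y * A) * Y := by noncomm_ring
    _ = _ := by rw [key]

theorem Module.End.apply_apply_of_mul_eq_smul_sub {R M : Type*} [CommRing R] [AddCommGroup M]
    [Module R M] {Y S : Module.End R M} {c μ : R} {v : M}
    (h : Y * S = algebraMap R (Module.End R M) c * S - S * Y) (hv : Y v = μ • v) :
    Y (S v) = (c - μ) • S v := by
  rw [← Module.End.mul_apply, h, LinearMap.sub_apply, Module.End.mul_apply, Module.End.mul_apply,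
    Module.algebraMap_end_apply, hv, map_smul, sub_smul]

section Hecke

variable {K R : Type*} [CommRing K] [Ring R] [Algebra K R] {T₀ T₁ x : R} {α₀ α₁ β₀ β₁ : K}

theorem anticommutator_T1 (h₀ : T₀ * T₀ = algebraMap K R α₀) (h₁ : T₁ * T₁ = algebraMap K R α₁) :
    T₁ * (T₀ + T₁) + (T₀ + T₁) * T₁ = (T₀ + T₁) * (T₀ + T₁) + algebraMap K R (α₁ - α₀) := by
  rw [map_sub, ← h₀, ← h₁]; noncomm_ring

theorem mul_commutator_T1 (h₀ : T₀ * T₀ = algebraMap K R α₀) (h₁ : T₁ * T₁ = algebraMap K R α₁) :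
    (T₀ + T₁) * (T₁ * (T₀ + T₁) - (T₀ + T₁) * T₁) =
      -((T₁ * (T₀ + T₁) - (T₀ + T₁) * T₁) * (T₀ + T₁)) := by
  have h := mul_commutator_eq_of_anticommutator (A := T₁) (Y := T₀ + T₁) 0 (Commute.zero_left _)
    (((Commute.refl _).mul_left (Commute.refl _)).add_left (Algebra.commute_algebraMap_left _ _))
    (by rw [zero_mul, zero_add]; exact anticommutator_T1 h₀ h₁)
  rw [h, zero_mul, zero_sub]

theorem mul_commutator_U1 (h₀ : T₀ * T₀ = algebraMap K R α₀) (h₁ : T₁ * T₁ = algebraMap K R α₁)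
    (hx₀ : T₀ * x + x * T₀ = T₀ + algebraMap K R β₀ - x + x * x)
    (hx₁ : T₁ * x + x * T₁ = algebraMap K R β₁ - x * x) :
    (T₀ + T₁) * ((-T₁ - x) * (T₀ + T₁) - (T₀ + T₁) * (-T₁ - x)) =
      -((-T₁ - x) * (T₀ + T₁) - (T₀ + T₁) * (-T₁ - x)) -
        ((-T₁ - x) * (T₀ + T₁) - (T₀ + T₁) * (-T₁ - x)) * (T₀ + T₁) := by
  have hU : (-T₁ - x) * (T₀ + T₁) + (T₀ + T₁) * (-T₁ - x) = -1 * (-T₁ - x) +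
      (-((T₀ + T₁) * (T₀ + T₁)) - (T₀ + T₁) - algebraMap K R (α₁ - α₀ + β₀ + β₁)) := by
    rw [← sub_eq_zero]
    calc
      _ = (T₀ * T₀ - algebraMap K R α₀) - (T₁ * T₁ - algebraMap K R α₁) -
          (T₁ * x + x * T₁ - (algebraMap K R β₁ - x * x)) -
          (T₀ * x + x * T₀ - (T₀ + algebraMap K R β₀ - x + x * x)) := by
        simp only [map_add, map_sub]; noncomm_ring
      _ = 0 := by rw [h₀, h₁, hx₀, hx₁]; simp
  have h := mul_commutator_eq_of_anticommutator (-1) ((Commute.one_left _).neg_left)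
    ((((Commute.refl _).mul_left (Commute.refl _)).neg_left.sub_left (Commute.refl _)).sub_left
      (Algebra.commute_algebraMap_left _ _)) hU
  rw [h, neg_one_mul]

end Hecke

structure IsMonicEigenbasis {K : Type*} [Field K] (Y : Module.End K K[X]) (γ : ℕ → K)
    (p : ℕ → K[X]) : Prop where
  monic : ∀ m, (p m).Monic
  natDegree_eq : ∀ m, (p m).natDegree = m
  apply_eq : ∀ m, Y (p m) = γ m • p m

namespace IsMonicEigenbasis

variable {K : Type*} [Field K] {Y : Module.End K K[X]} {γ : ℕ → K} {p : ℕ → K[X]}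

theorem coeff_self (h : IsMonicEigenbasis Y γ p) (m : ℕ) : (p m).coeff m = 1 := by
  simpa [h.natDegree_eq m] using (h.monic m).coeff_natDegree

theorem at_zero (h : IsMonicEigenbasis Y γ p) : p 0 = 1 :=
  (h.monic 0).natDegree_eq_zero.mp (h.natDegree_eq 0)

theorem natDegree_sub_coeff_smul_le (h : IsMonicEigenbasis Y γ p) {n : ℕ} {g : K[X]}
    (hg : g.natDegree ≤ n + 1) : (g - g.coeff (n + 1) • p (n + 1)).natDegree ≤ n := by
  rw [natDegree_le_iff_coeff_eq_zero]
  intro N hN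
  rcases (Nat.succ_le_of_lt hN).eq_or_lt with rfl | hN'
  · simp [h.coeff_self]
  · have hp : (p (n + 1)).coeff N = 0 :=
      coeff_eq_zero_of_natDegree_lt (by rw [h.natDegree_eq]; exact hN')
    simp [coeff_eq_zero_of_natDegree_lt (hg.trans_lt hN'), hp]

theorem natDegree_apply_le_and_coeff_apply (h : IsMonicEigenbasis Y γ p) {n : ℕ} {g : K[X]}
    (hg : g.natDegree ≤ n) : (Y g).natDegree ≤ n ∧ (Y g).coeff n = γ n * g.coeff n := by
  induction n generalizing g with
  | zero =>
    have hg0 : g = g.coeff 0 • p 0 := by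
      rw [h.at_zero, smul_eq_C_mul, mul_one]; exact eq_C_of_natDegree_le_zero hg
    rw [hg0, map_smul, h.apply_eq, smul_smul, h.at_zero, smul_eq_C_mul, mul_one]
    exact ⟨(natDegree_C _).le, by simp [mul_comm]⟩
  | succ n ih =>
    set r := g - g.coeff (n + 1) • p (n + 1)
    have hr : (Y r).natDegree ≤ n := (ih (h.natDegree_sub_coeff_smul_le hg)).1
    have hYg : Y g = Y r + (g.coeff (n + 1) * γ (n + 1)) • p (n + 1) := by
      rw [← smul_smul, ← h.apply_eq, ← map_smul, ← map_add, sub_add_cancel]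
    rw [hYg]
    refine ⟨natDegree_add_le_of_degree_le (hr.trans n.le_succ)
      ((natDegree_smul_le _ _).trans (h.natDegree_eq _).le), ?_⟩
    simp [coeff_eq_zero_of_natDegree_lt (hr.trans_lt n.lt_succ_self), h.coeff_self, mul_comm]

theorem eq_coeff_smul_of_apply_eq (h : IsMonicEigenbasis Y γ p) (hγ : Function.Injective γ)
    {M : ℕ} {q : K[X]} (hq : q.natDegree ≤ M) (hYq : Y q = γ M • q) :
    q = q.coeff M • p M := by
  set r := q - q.coeff M • p M
  have hrM : r.coeff M = 0 := by simp [r, h.coeff_self]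
  have hYr : Y r = γ M • r := by
    simp only [r, map_sub, map_smul, hYq, h.apply_eq, smul_sub, smul_comm (γ M)]
  suffices r = 0 from sub_eq_zero.mp this
  by_contra hr
  have hrdeg : r.natDegree ≤ M :=
    (natDegree_sub_le _ _).trans (max_le hq ((natDegree_smul_le _ _).trans (h.natDegree_eq M).le))
  have hlead : r.coeff r.natDegree ≠ 0 := leadingCoeff_ne_zero.mpr hr
  have hne : r.natDegree ≠ M := fun he => hlead (he ▸ hrM)
  have hcoeff := (h.natDegree_apply_le_and_coeff_apply le_rfl (g := r)).2
  rw [hYr, coeff_smul, smul_eq_mul] at hcoeff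
  exact hne (hγ (mul_right_cancel₀ hlead hcoeff).symm)

theorem commutator_apply (h : IsMonicEigenbasis Y γ p) (hγ : Function.Injective γ)
    {A : Module.End K K[X]} {m : ℕ} (hA : (A (p m)).natDegree ≤ m + 1)
    (hS : Y ((A * Y - Y * A) (p m)) = γ (m + 1) • (A * Y - Y * A) (p m)) :
    (A * Y - Y * A) (p m) = ((γ m - γ (m + 1)) * (A (p m)).coeff (m + 1)) • p (m + 1) := by
  have hSp : (A * Y - Y * A) (p m) = γ m • A (p m) - Y (A (p m)) := by
    simp [h.apply_eq]
  have hYA := h.natDegree_apply_le_and_coeff_apply hA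
  have hdeg : ((A * Y - Y * A) (p m)).natDegree ≤ m + 1 := by
    rw [hSp]
    exact (natDegree_sub_le _ _).trans (max_le ((natDegree_smul_le _ _).trans hA) hYA.1)
  rw [h.eq_coeff_smul_of_apply_eq hγ hdeg hS, hSp, coeff_sub, coeff_smul, hYA.2, smul_eq_mul,
    sub_mul]

end IsMonicEigenbasis

theorem iterate_comp_apply_of_alternating {R V : Type*} [CommRing R] [AddCommGroup V]
    [Module R V] {A B : V →ₗ[R] V} {v : ℕ → V} {ρ : ℕ → R}
    (hA : ∀ k, A (v (2 * k)) = -ρ (2 * k) • v (2 * k + 1))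
    (hB : ∀ k, B (v (2 * k + 1)) = ρ (2 * k + 1) • v (2 * k + 2)) (n : ℕ) :
    (B ∘ A)^[n] (v 0) = ((-1) ^ n * ∏ i ∈ Finset.range (2 * n), ρ i) • v (2 * n) ∧
      A ((B ∘ A)^[n] (v 0)) =
        ((-1) ^ (n + 1) * ∏ i ∈ Finset.range (2 * n + 1), ρ i) • v (2 * n + 1) := by
  have hodd {n : ℕ}
      (h : (B ∘ A)^[n] (v 0) = ((-1) ^ n * ∏ i ∈ Finset.range (2 * n), ρ i) • v (2 * n)) :
      A ((B ∘ A)^[n] (v 0)) =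
        ((-1) ^ (n + 1) * ∏ i ∈ Finset.range (2 * n + 1), ρ i) • v (2 * n + 1) := by
    rw [h, map_smul, hA, smul_smul, Finset.prod_range_succ]
    congr 1; ring
  have heven (n : ℕ) :
      (B ∘ A)^[n] (v 0) = ((-1) ^ n * ∏ i ∈ Finset.range (2 * n), ρ i) • v (2 * n) := by
    induction n with
    | zero => simp
    | succ n ih =>
      rw [Function.iterate_succ_apply', Function.comp_apply, hodd ih, map_smul, hB, smul_smul,
        show 2 * (n + 1) = 2 * n + 1 + 1 by ring, Finset.prod_range_succ, Finset.prod_range_succ,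
        Finset.prod_range_succ]
      congr 1; ring
  exact ⟨heven n, hodd (heven n)⟩

section Wilson

variable {K : Type*} [Field K] [CharZero K]

/-- `T f = t f + (c - x)(d - x)/(1 - 2x) · (f(1 - x) - f)`, with the denominator cleared. -/
def IsWilsonT0 (t c d : K) (T : K[X] → K[X]) : Prop :=
  ∀ (f : K[X]) (x : K), (1 - 2 * x) * ((T f).eval x - t * f.eval x) =
    (c - x) * (d - x) * (f.eval (1 - x) - f.eval x)

/-- `T f = t f + (a + x)(b + x)/(2x) · (f(-x) - f)`, with the denominator cleared. -/
def IsWilsonT1 (t a b : K) (T : K[X] → K[X]) : Prop :=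
  ∀ (f : K[X]) (x : K), (2 * x) * ((T f).eval x - t * f.eval x) =
    (a + x) * (b + x) * (f.eval (-x) - f.eval x)

namespace IsWilsonT1

variable {t a b : K} {T : K[X] → K[X]}

theorem isLinearMap (h : IsWilsonT1 t a b T) : IsLinearMap K T where
  map_add f g := eq_of_forall_eval_mul_eq X_ne_zero fun x => by
    have hfg := h (f + g) x
    simp only [eval_X, eval_add] at hfg ⊢
    linear_combination (hfg - h f x - h g x) / 2
  map_smul r f := eq_of_forall_eval_mul_eq X_ne_zero fun x => by
    have hrf := h (r • f) x
    simp only [eval_X, eval_smul, smul_eq_mul] at hrf ⊢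
    linear_combination (hrf - r * h f x) / 2

noncomputable def toEnd (h : IsWilsonT1 t a b T) : Module.End K K[X] :=
  IsLinearMap.mk' T h.isLinearMap

@[simp]
theorem toEnd_apply (h : IsWilsonT1 t a b T) (f : K[X]) : h.toEnd f = T f := rfl

theorem toEnd_mul_self (h : IsWilsonT1 t a b T) (hab : a + b = 2 * t) :
    h.toEnd * h.toEnd = algebraMap K _ (t ^ 2) :=
  LinearMap.ext fun f => eq_of_forall_eval_mul_eq (pow_ne_zero 2 X_ne_zero) fun x => by
    have hTf := h (T f) x
    have hf := h f x
    have hf' := h f (-x)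
    simp only [neg_neg] at hf'
    simp only [Module.End.mul_apply, toEnd_apply, Module.algebraMap_end_apply, eval_smul,
      smul_eq_mul, eval_pow, eval_X]
    linear_combination ((2 * x) * hTf - ((a + x) * (b + x)) * hf' +
      (t * (2 * x) - (a + x) * (b + x)) * hf) / 4 -
      x / 2 * (a + x) * (b + x) * (f.eval (-x) - f.eval x) * hab

theorem toEnd_mul_X_add_X_mul (h : IsWilsonT1 t a b T) (hab : a + b = 2 * t) :
    h.toEnd * LinearMap.mulLeft K X + LinearMap.mulLeft K X * h.toEnd =
      algebraMap K _ (-(a * b)) - LinearMap.mulLeft K X * LinearMap.mulLeft K X :=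
  LinearMap.ext fun f => eq_of_forall_eval_mul_eq X_ne_zero fun x => by
    have hXf := h (X * f) x
    have hf := h f x
    simp only [eval_mul, eval_X] at hXf
    simp only [LinearMap.add_apply, LinearMap.sub_apply, Module.End.mul_apply, toEnd_apply,
      LinearMap.mulLeft_apply, Module.algebraMap_end_apply, eval_smul, smul_eq_mul, eval_add,
      eval_sub, eval_mul, eval_X]
    linear_combination (hXf + x * hf) / 2 + (-x ^ 2 * f.eval x) * hab

theorem natDegree_le_and_coeff (h : IsWilsonT1 t a b T) {f : K[X]} {m : ℕ}
    (hf : f.natDegree ≤ m) :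
    (T f).natDegree ≤ m + 1 ∧ 2 * (T f).coeff (m + 1) = ((-1) ^ m - 1) * f.coeff m := by
  set Q : K[X] := (X + C a) * (X + C b)
  set D := f.comp (C (-1) * X) - f
  have hpoly : X * (C 2 * (T f - C t * f)) = Q * D := Polynomial.funext fun x => by
    simp only [Q, D, eval_mul, eval_X, eval_C, eval_sub, eval_add, eval_comp, neg_one_mul]
    linear_combination h f x
  have hQ : Q.Monic := (monic_X_add_C a).mul (monic_X_add_C b)
  have hQdeg : Q.natDegree = 2 := by
    rw [(monic_X_add_C a).natDegree_mul (monic_X_add_C b), natDegree_X_add_C, natDegree_X_add_C]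
  have hDdeg : D.natDegree ≤ m := by
    refine (natDegree_sub_le _ _).trans (max_le (natDegree_comp_le.trans ?_) hf)
    rw [natDegree_C_mul_X _ (neg_ne_zero.mpr one_ne_zero), mul_one]
    exact hf
  have hQD : (Q * D).natDegree ≤ m + 2 := by
    rw [add_comm]; exact natDegree_mul_le_of_le hQdeg.le hDdeg
  have hcoeff (N : ℕ) : 2 * (T f).coeff N = (Q * D).coeff (N + 1) + 2 * t * f.coeff N := by
    rw [← hpoly, coeff_X_mul, coeff_C_mul, coeff_sub, coeff_C_mul]
    ring
  constructor
  · rw [natDegree_le_iff_coeff_eq_zero]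
    intro N hN
    have hN' := hcoeff N
    rw [coeff_eq_zero_of_natDegree_lt (hQD.trans_lt (by omega)),
      coeff_eq_zero_of_natDegree_lt (hf.trans_lt (by omega))] at hN'
    simpa using hN'
  · rw [hcoeff, coeff_eq_zero_of_natDegree_lt (hf.trans_lt m.lt_succ_self), mul_zero, add_zero,
      show m + 1 + 1 = 2 + m by ring, ← hQdeg, coeff_mul_add_eq_of_natDegree_le le_rfl hDdeg,
      hQ.coeff_natDegree, one_mul, coeff_sub, comp_C_mul_X_coeff]
    ring

end IsWilsonT1

namespace IsWilsonT0

variable {t c d : K} {T : K[X] → K[X]}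

theorem isLinearMap (h : IsWilsonT0 t c d T) : IsLinearMap K T where
  map_add f g := eq_of_forall_eval_mul_eq one_sub_two_mul_X_ne_zero fun x => by
    have hfg := h (f + g) x
    simp only [eval_sub, eval_one, eval_mul, eval_ofNat, eval_X, eval_add] at hfg ⊢
    linear_combination hfg - h f x - h g x
  map_smul r f := eq_of_forall_eval_mul_eq one_sub_two_mul_X_ne_zero fun x => by
    have hrf := h (r • f) x
    simp only [eval_sub, eval_one, eval_mul, eval_ofNat, eval_X, eval_smul, smul_eq_mul] at hrf ⊢
    linear_combination hrf - r * h f x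

noncomputable def toEnd (h : IsWilsonT0 t c d T) : Module.End K K[X] :=
  IsLinearMap.mk' T h.isLinearMap

@[simp]
theorem toEnd_apply (h : IsWilsonT0 t c d T) (f : K[X]) : h.toEnd f = T f := rfl

theorem toEnd_mul_self (h : IsWilsonT0 t c d T) (hcd : c + d = 2 * t + 1) :
    h.toEnd * h.toEnd = algebraMap K _ (t ^ 2) :=
  LinearMap.ext fun f =>
    eq_of_forall_eval_mul_eq (pow_ne_zero 2 one_sub_two_mul_X_ne_zero) fun x => by
    have hTf := h (T f) x
    have hf := h f x
    have hf' := h f (1 - x)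
    simp only [sub_sub_cancel] at hf'
    simp only [Module.End.mul_apply, toEnd_apply, Module.algebraMap_end_apply, eval_smul,
      smul_eq_mul, eval_pow, eval_sub, eval_one, eval_mul, eval_ofNat, eval_X]
    linear_combination (1 - 2 * x) * hTf - ((c - x) * (d - x)) * hf' +
      (t * (1 - 2 * x) - (c - x) * (d - x)) * hf -
      (c - x) * (d - x) * (1 - 2 * x) * (f.eval (1 - x) - f.eval x) * hcd

theorem toEnd_mul_X_add_X_mul (h : IsWilsonT0 t c d T) (hcd : c + d = 2 * t + 1) :
    h.toEnd * LinearMap.mulLeft K X + LinearMap.mulLeft K X * h.toEnd =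
      h.toEnd + algebraMap K _ (c * d - t) - LinearMap.mulLeft K X +
        LinearMap.mulLeft K X * LinearMap.mulLeft K X :=
  LinearMap.ext fun f => eq_of_forall_eval_mul_eq one_sub_two_mul_X_ne_zero fun x => by
    have hXf := h (X * f) x
    have hf := h f x
    simp only [eval_mul, eval_X] at hXf
    simp only [LinearMap.add_apply, LinearMap.sub_apply, Module.End.mul_apply, toEnd_apply,
      LinearMap.mulLeft_apply, Module.algebraMap_end_apply, eval_smul, smul_eq_mul, eval_add,
      eval_sub, eval_one, eval_ofNat, eval_mul, eval_X]
    linear_combination hXf + (x - 1) * hf + x * (2 * x - 1) * f.eval x * hcd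

end IsWilsonT0

section Shift

variable {t₀ t₁ a b c d : K} {T₀ T₁ : K[X] → K[X]} {γ : ℕ → K} {p : ℕ → K[X]}

theorem commutator_T1_apply (h₀ : IsWilsonT0 t₀ c d T₀) (h₁ : IsWilsonT1 t₁ a b T₁)
    (hcd : c + d = 2 * t₀ + 1) (hab : a + b = 2 * t₁)
    (hp : IsMonicEigenbasis (h₀.toEnd + h₁.toEnd) γ p) (hγ : Function.Injective γ) {m : ℕ}
    (hm : Odd m) (hγm : γ (m + 1) = -γ m) :
    (h₁.toEnd * (h₀.toEnd + h₁.toEnd) - (h₀.toEnd + h₁.toEnd) * h₁.toEnd) (p m) =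
      (γ (m + 1) - γ m) • p (m + 1) := by
  have hS := Module.End.apply_apply_of_mul_eq_smul_sub (c := 0) (by
    rw [map_zero, zero_mul, zero_sub]
    exact mul_commutator_T1 (h₀.toEnd_mul_self hcd) (h₁.toEnd_mul_self hab)) (hp.apply_eq m)
  rw [zero_sub, ← hγm] at hS
  obtain ⟨hdeg, hcoeff⟩ := h₁.natDegree_le_and_coeff (hp.natDegree_eq m).le
  rw [hp.coeff_self, hm.neg_one_pow] at hcoeff
  rw [hp.commutator_apply hγ hdeg hS, h₁.toEnd_apply]
  congr 1
  linear_combination (γ m - γ (m + 1)) / 2 * hcoeff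

theorem commutator_U1_apply (h₀ : IsWilsonT0 t₀ c d T₀) (h₁ : IsWilsonT1 t₁ a b T₁)
    (hcd : c + d = 2 * t₀ + 1) (hab : a + b = 2 * t₁)
    (hp : IsMonicEigenbasis (h₀.toEnd + h₁.toEnd) γ p) (hγ : Function.Injective γ) {m : ℕ}
    (hm : Even m) (hγm : γ (m + 1) = -1 - γ m) :
    ((-h₁.toEnd - LinearMap.mulLeft K X) * (h₀.toEnd + h₁.toEnd) -
      (h₀.toEnd + h₁.toEnd) * (-h₁.toEnd - LinearMap.mulLeft K X) : Module.End K K[X]) (p m) =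
      (γ (m + 1) - γ m) • p (m + 1) := by
  set Y := h₀.toEnd + h₁.toEnd
  set U : Module.End K K[X] := -h₁.toEnd - LinearMap.mulLeft K X
  have hYS : Y * (U * Y - Y * U) =
      algebraMap K _ (-1) * (U * Y - Y * U) - (U * Y - Y * U) * Y := by
    rw [map_neg, map_one]
    convert mul_commutator_U1 (h₀.toEnd_mul_self hcd) (h₁.toEnd_mul_self hab)
      (h₀.toEnd_mul_X_add_X_mul hcd) (h₁.toEnd_mul_X_add_X_mul hab) using 2
    exact neg_one_mul (U * Y - Y * U)
  have hS := Module.End.apply_apply_of_mul_eq_smul_sub hYS (hp.apply_eq m)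
  rw [← hγm] at hS
  obtain ⟨hdeg, hcoeff⟩ := h₁.natDegree_le_and_coeff (hp.natDegree_eq m).le
  rw [hp.coeff_self, hm.neg_one_pow] at hcoeff
  have hUp : U (p m) = -T₁ (p m) - X * p m := rfl
  have hUdeg : (U (p m)).natDegree ≤ m + 1 := by
    rw [hUp]
    refine (natDegree_sub_le _ _).trans (max_le (natDegree_neg (T₁ (p m)) ▸ hdeg) ?_)
    exact natDegree_mul_le_of_le natDegree_X_le (hp.natDegree_eq m).le |>.trans_eq (add_comm _ _)
  rw [hp.commutator_apply hγ hUdeg hS, hUp, coeff_sub, coeff_neg, coeff_X_mul, hp.coeff_self]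
  congr 1
  linear_combination (γ (m + 1) - γ m) / 2 * hcoeff

end Shift

theorem injective_of_even_odd {s : K}
    (hs : ∀ k : ℕ, 2 * s ≠ -(k : K)) {γ : ℕ → K} (he : ∀ n : ℕ, γ (2 * n) = s + n)
    (ho : ∀ n : ℕ, γ (2 * n + 1) = -(s + (n + 1))) : Function.Injective γ := by
  intro i j hij
  obtain ⟨r, rfl | rfl⟩ := Nat.even_or_odd' i <;> obtain ⟨q, rfl | rfl⟩ := Nat.even_or_odd' j
  · rw [he, he] at hij
    have hrq : (r : K) = q := by linear_combination hij
    rw [Nat.cast_injective hrq]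
  · rw [he, ho] at hij
    exact absurd (by push_cast; linear_combination hij) (hs (r + q + 1))
  · rw [ho, he] at hij
    exact absurd (by push_cast; linear_combination -hij) (hs (r + q + 1))
  · rw [ho, ho] at hij
    have hrq : (r : K) = q := by linear_combination -hij
    rw [Nat.cast_injective hrq]

end Wilson

/-- Rodriguez-type formula: with `S0 = U1∘Y − Y∘U1`, `S1 = T1∘Y − Y∘T1`,
`(U1 f)(x) = −(T1 f)(x) − x·f(x)`: for every `n`,
`(S1∘S0)^n 1 = (−1)^n·(2t0+2t1+1)_{2n}·p_{2n}` and
`S0((S1∘S0)^n 1) = (−1)^{n+1}·(2t0+2t1+1)_{2n+1}·p_{2n+1}`. -/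
theorem statement13 (t0 u0 t1 u1 a b c d : ℂ)
    (ha : a = t1 + u1) (hb : b = t1 - u1)
    (hc : c = t0 + u0 + 1/2) (hd : d = t0 - u0 + 1/2)
    (hreg : ∀ k : ℕ, 2*(t0 + t1) ≠ -(k : ℂ))
    (T0 T1 : Polynomial ℂ → Polynomial ℂ)
    (hT0 : ∀ (f : Polynomial ℂ) (x : ℂ),
      (1 - 2*x) * ((T0 f).eval x - t0 * f.eval x) =
        (c - x) * (d - x) * (f.eval (1 - x) - f.eval x))
    (hT1 : ∀ (f : Polynomial ℂ) (x : ℂ),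
      (2*x) * ((T1 f).eval x - t1 * f.eval x) =
        (a + x) * (b + x) * (f.eval (-x) - f.eval x))
    (γ : ℕ → ℂ)
    (hγe : ∀ n : ℕ, γ (2*n) = t0 + t1 + n)
    (hγo : ∀ n : ℕ, γ (2*n+1) = -(t0 + t1 + (n+1)))
    (p : ℕ → Polynomial ℂ)
    (hp : ∀ m : ℕ, (p m).Monic ∧ (p m).natDegree = m ∧
      T0 (p m) + T1 (p m) = γ m • p m)
    (Y U1 S0 S1 : Polynomial ℂ → Polynomial ℂ)
    (hY : ∀ f : Polynomial ℂ, Y f = T0 f + T1 f)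
    (hU1 : ∀ (f : Polynomial ℂ) (x : ℂ),
      (U1 f).eval x = -(T1 f).eval x - x * f.eval x)
    (hS0 : ∀ f : Polynomial ℂ, S0 f = U1 (Y f) - Y (U1 f))
    (hS1 : ∀ f : Polynomial ℂ, S1 f = T1 (Y f) - Y (T1 f)) :
    ∀ n : ℕ,
      (S1 ∘ S0)^[n] 1 =
        ((-1)^n * ∏ i ∈ Finset.range (2*n), (2*t0 + 2*t1 + 1 + (i : ℂ))) • p (2*n) ∧
      S0 ((S1 ∘ S0)^[n] 1) =
        ((-1)^(n+1) * ∏ i ∈ Finset.range (2*n+1), (2*t0 + 2*t1 + 1 + (i : ℂ))) •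
          p (2*n+1) := by
  have hab : a + b = 2 * t1 := by rw [ha, hb]; ring
  have hcd : c + d = 2 * t0 + 1 := by rw [hc, hd]; ring
  have h₀ : IsWilsonT0 t0 c d T0 := hT0
  have h₁ : IsWilsonT1 t1 a b T1 := hT1
  have hbasis : IsMonicEigenbasis (h₀.toEnd + h₁.toEnd) γ p :=
    ⟨fun m => (hp m).1, fun m => (hp m).2.1, fun m => (hp m).2.2⟩
  have hγ : Function.Injective γ := injective_of_even_odd hreg hγe hγo
  have hY' : Y = ⇑(h₀.toEnd + h₁.toEnd) := funext hY
  have hU1' : U1 = ⇑(-h₁.toEnd - LinearMap.mulLeft ℂ X : Module.End ℂ ℂ[X]) :=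
    funext fun f => Polynomial.funext fun x => by simp [hU1]
  have hS0' : S0 = ⇑((-h₁.toEnd - LinearMap.mulLeft ℂ X) * (h₀.toEnd + h₁.toEnd) -
      (h₀.toEnd + h₁.toEnd) * (-h₁.toEnd - LinearMap.mulLeft ℂ X) : Module.End ℂ ℂ[X]) :=
    funext fun f => by rw [hS0, hU1', hY']; rfl
  have hS1' : S1 = ⇑(h₁.toEnd * (h₀.toEnd + h₁.toEnd) - (h₀.toEnd + h₁.toEnd) * h₁.toEnd) :=
    funext fun f => by rw [hS1, hY']; rfl
  have hγe' (k : ℕ) : γ (2 * k + 2) = t0 + t1 + (k + 1) := by simpa [mul_add] using hγe (k + 1)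
  intro n
  rw [hS0', hS1', ← hbasis.at_zero]
  refine iterate_comp_apply_of_alternating (fun k => ?_) (fun k => ?_) n
  · rw [commutator_U1_apply h₀ h₁ hcd hab hbasis hγ (even_two_mul k) (by rw [hγe, hγo]; ring),
      hγe, hγo]
    congr 1; push_cast; ring
  · rw [commutator_T1_apply h₀ h₁ hcd hab hbasis hγ (odd_two_mul_add_one k)
      (by rw [hγe', hγo]; ring), hγe', hγo]
    congr 1; push_cast; ring
end

section
/- Duality of the non-symmetric Wilson polynomials: assume in addition that 2(t1+u1) is not a nonpositive integer, and let q_n denote the non-symmetric Wilson polynomial of degree n for the dual parameters (u1, u0, t1, t0), whose eigenvalues are x_{2k} = t1+u1+k and x_{2k−1} = −(t1+u1+k). Then for all m, n ∈ ℤ≥0: p_m(−x_n)·q_n(−(t0+t1)) = p_m(−(t1+u1))·q_n(−γ_m). -/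
open Polynomial

namespace Stmt15Aux

lemma poly_cancel {r A B : Polynomial ℂ} (hr : r ≠ 0)
    (h : ∀ x : ℂ, r.eval x * (A.eval x - B.eval x) = 0) : A = B := by
  have h2 : r * (A - B) = 0 := by
    apply Polynomial.funext
    intro y
    simpa using h y
  rcases mul_eq_zero.mp h2 with h' | h'
  · exact absurd h' hr
  · exact sub_eq_zero.mp h'

lemma X_ne : (X : Polynomial ℂ) ≠ 0 := X_ne_zero
lemma X2_ne : ((X : Polynomial ℂ)^2) ≠ 0 := pow_ne_zero _ X_ne
lemma w_ne : ((1 : Polynomial ℂ) - 2*X) ≠ 0 := by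
  intro h
  have h0 := congrArg (eval 0) h
  simp at h0
lemma w2_ne : (((1 : Polynomial ℂ) - 2*X)^2) ≠ 0 := pow_ne_zero _ w_ne
lemma Xw_ne : ((X : Polynomial ℂ) * (1 - 2*X)) ≠ 0 := mul_ne_zero X_ne w_ne

/-- Shape of a "type 1" operator (Demazure-type in x ↦ -x) with parameters (t,u). -/
def H1 (t u : ℂ) (T : Polynomial ℂ → Polynomial ℂ) : Prop :=
  ∀ (f : Polynomial ℂ) (x : ℂ),
    2*x * ((T f).eval x - t * f.eval x)
      = ((t+u)+x) * ((t-u)+x) * (f.eval (-x) - f.eval x)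

/-- Shape of a "type 0" operator (Demazure-type in x ↦ 1-x) with parameters (t,u). -/
def H0 (t u : ℂ) (T : Polynomial ℂ → Polynomial ℂ) : Prop :=
  ∀ (f : Polynomial ℂ) (x : ℂ),
    (1 - 2*x) * ((T f).eval x - t * f.eval x)
      = ((t+u+1/2) - x) * ((t-u+1/2) - x) * (f.eval (1-x) - f.eval x)

section T1
variable {t u : ℂ} {T : Polynomial ℂ → Polynomial ℂ}

lemma h1_add (hT : H1 t u T) (f g : Polynomial ℂ) : T (f + g) = T f + T g := by
  apply poly_cancel X_ne
  intro x
  have h1 := hT (f+g) x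
  have h2 := hT f x
  have h3 := hT g x
  simp only [eval_add, eval_X] at h1 h2 h3 ⊢
  linear_combination h1/2 - h2/2 - h3/2

lemma h1_Cmul (hT : H1 t u T) (c : ℂ) (f : Polynomial ℂ) : T (C c * f) = C c * T f := by
  apply poly_cancel X_ne
  intro x
  have h1 := hT (C c * f) x
  have h2 := hT f x
  simp only [eval_mul, eval_C, eval_X] at h1 h2 ⊢
  linear_combination h1/2 - c*h2/2

lemma h1_even (hT : H1 t u T) (f : Polynomial ℂ)
    (hf : ∀ x : ℂ, f.eval (-x) = f.eval x) : T f = C t * f := by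
  apply poly_cancel X_ne
  intro x
  have h := hT f x
  simp only [eval_mul, eval_C, eval_X] at h ⊢
  linear_combination h/2 + (((t+u)+x) * ((t-u)+x)/2) * (hf x)

lemma h1_Xmul (hT : H1 t u T) (f : Polynomial ℂ) :
    T (X * f) = -(X * T f) - X^2*f - C ((t+u)*(t-u)) * f := by
  apply poly_cancel X_ne
  intro x
  have h1 := hT (X*f) x
  have h2 := hT f x
  simp only [eval_mul, eval_C, eval_X, eval_neg, eval_sub, eval_pow] at h1 h2 ⊢
  linear_combination h1/2 + x*h2/2

lemma h1_sq (hT : H1 t u T) (f : Polynomial ℂ) : T (T f) = C (t^2) * f := by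
  apply poly_cancel X2_ne
  intro x
  have h1 := hT f x
  have h2 := hT f (-x)
  have h3 := hT (T f) x
  simp only [neg_neg] at h2
  simp only [eval_mul, eval_C, eval_X, eval_pow]
  linear_combination x/2 * h3 + ((2*x*t - ((t+u)+x)*((t-u)+x))/4) * h1
    - (((t+u)+x)*((t-u)+x)/4) * h2

lemma h1_special (hT : H1 t u T) (hs : t + u ≠ 0) (f : Polynomial ℂ) :
    (T f).eval (-(t+u)) = t * f.eval (-(t+u)) := by
  have h := hT f (-(t+u))
  rw [add_neg_cancel, zero_mul, zero_mul] at h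
  have h2 : (2 : ℂ) * -(t+u) ≠ 0 :=
    mul_ne_zero two_ne_zero (neg_ne_zero.mpr hs)
  have h3 := (mul_eq_zero.mp h).resolve_left h2
  exact sub_eq_zero.mp h3

lemma h1_neg (hT : H1 t u T) (f : Polynomial ℂ) : T (-f) = -(T f) := by
  have h := h1_Cmul hT (-1) f
  simpa using h

lemma h1_evenmono (hT : H1 t u T) (r : ℕ) : T (X^(2*r)) = C t * X^(2*r) :=
  h1_even hT _ (fun x => by
    rw [eval_pow, eval_pow, eval_X, eval_X, Even.neg_pow (even_two_mul r)])

lemma h1_oddmono (hT : H1 t u T) (r : ℕ) :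
    T (X^(2*r+1)) = -(C t * X^(2*r+1)) - X^(2*r+2) - C ((t+u)*(t-u)) * X^(2*r) := by
  have he := h1_evenmono hT r
  have h := h1_Xmul hT (X^(2*r))
  rw [he] at h
  rw [show (X:Polynomial ℂ)^(2*r+1) = X * X^(2*r) by ring, h]
  ring

end T1

section T0
variable {t u : ℂ} {T : Polynomial ℂ → Polynomial ℂ}

lemma h0_add (hT : H0 t u T) (f g : Polynomial ℂ) : T (f + g) = T f + T g := by
  apply poly_cancel w_ne
  intro x
  have h1 := hT (f+g) x
  have h2 := hT f x
  have h3 := hT g x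
  simp only [eval_add, eval_sub, eval_mul, eval_one, eval_ofNat, eval_X] at h1 h2 h3 ⊢
  linear_combination h1 - h2 - h3

lemma h0_Cmul (hT : H0 t u T) (c : ℂ) (f : Polynomial ℂ) : T (C c * f) = C c * T f := by
  apply poly_cancel w_ne
  intro x
  have h1 := hT (C c * f) x
  have h2 := hT f x
  simp only [eval_add, eval_sub, eval_mul, eval_one, eval_ofNat, eval_X, eval_C] at h1 h2 ⊢
  linear_combination h1 - c*h2

lemma h0_invar (hT : H0 t u T) (f : Polynomial ℂ)
    (hf : ∀ x : ℂ, f.eval (1-x) = f.eval x) : T f = C t * f := by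
  apply poly_cancel w_ne
  intro x
  have h := hT f x
  simp only [eval_sub, eval_mul, eval_one, eval_ofNat, eval_X, eval_C]
  linear_combination h + (((t+u+1/2) - x) * ((t-u+1/2) - x)) * (hf x)

lemma h0_C (hT : H0 t u T) (k : ℂ) : T (C k) = C t * C k :=
  h0_invar hT (C k) (fun _ => by simp)

lemma h0_sq (hT : H0 t u T) (f : Polynomial ℂ) : T (T f) = C (t^2) * f := by
  apply poly_cancel w2_ne
  intro x
  have h1 := hT f x
  have h2 := hT f (1-x)
  have h3 := hT (T f) x
  rw [show (1:ℂ)-(1-x) = x by ring] at h2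
  simp only [eval_sub, eval_mul, eval_one, eval_ofNat, eval_X, eval_C, eval_pow]
  linear_combination (1-2*x) * h3 + ((1-2*x)*t - ((t+u+1/2) - x) * ((t-u+1/2) - x))*h1
    - (((t+u+1/2) - x) * ((t-u+1/2) - x))*h2

lemma h0_Xmul (hT : H0 t u T) (f : Polynomial ℂ) :
    T (X * f) = T f - X * T f + X^2*f - X*f + C ((t+u+1/2)*(t-u+1/2) - t) * f := by
  apply poly_cancel w_ne
  intro x
  have h1 := hT (X*f) x
  have h2 := hT f x
  simp only [eval_add, eval_sub, eval_mul, eval_one, eval_ofNat, eval_X, eval_C, eval_pow] at h1 h2 ⊢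
  linear_combination h1 - (1-x)*h2

lemma h0_neg (hT : H0 t u T) (f : Polynomial ℂ) : T (-f) = -(T f) := by
  have h := h0_Cmul hT (-1) f
  simpa using h

end T0

section Comb

/-- minus (A + B) : the negated Cherednik operator Y. -/
noncomputable def No (A B : Polynomial ℂ → Polynomial ℂ) (h : Polynomial ℂ) : Polynomial ℂ :=
  -(A h + B h)

/-- substitution of the polynomial `f` at the operator `No A B`, applied to `g`. -/
noncomputable def sb (A B : Polynomial ℂ → Polynomial ℂ) (f g : Polynomial ℂ) : Polynomial ℂ :=
  f.sum fun k c => C c * ((No A B)^[k] g)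

variable {ta ua tb ub : ℂ} {A B : Polynomial ℂ → Polynomial ℂ}

lemma no_add (hA : H0 ta ua A) (hB : H1 tb ub B) (f g : Polynomial ℂ) :
    No A B (f + g) = No A B f + No A B g := by
  unfold No
  rw [h0_add hA, h1_add hB]; ring

lemma no_Cmul (hA : H0 ta ua A) (hB : H1 tb ub B) (c : ℂ) (f : Polynomial ℂ) :
    No A B (C c * f) = C c * No A B f := by
  unfold No
  rw [h0_Cmul hA, h1_Cmul hB]; ring

lemma no_iter_add (hA : H0 ta ua A) (hB : H1 tb ub B) (k : ℕ) (f g : Polynomial ℂ) :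
    (No A B)^[k] (f + g) = (No A B)^[k] f + (No A B)^[k] g := by
  induction k with
  | zero => simp
  | succ n ih =>
      rw [Function.iterate_succ_apply', Function.iterate_succ_apply',
        Function.iterate_succ_apply', ih, no_add hA hB]

lemma no_iter_Cmul (hA : H0 ta ua A) (hB : H1 tb ub B) (k : ℕ) (c : ℂ) (f : Polynomial ℂ) :
    (No A B)^[k] (C c * f) = C c * (No A B)^[k] f := by
  induction k with
  | zero => simp
  | succ n ih =>
      rw [Function.iterate_succ_apply', Function.iterate_succ_apply', ih, no_Cmul hA hB]

lemma no_C (hA : H0 ta ua A) (hB : H1 tb ub B) (c : ℂ) :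
    No A B (C c) = C (-(ta+tb)) * C c := by
  unfold No
  rw [h0_C hA, h1_even hB (C c) (fun x => by simp)]
  rw [map_neg, map_add]
  ring

lemma no_eig (hA : H0 ta ua A) (hB : H1 tb ub B) {lam : ℂ} {g : Polynomial ℂ}
    (hg : A g + B g = lam • g) (k : ℕ) :
    (No A B)^[k] g = C ((-lam)^k) * g := by
  induction k with
  | zero => simp
  | succ n ih =>
      rw [Function.iterate_succ_apply', ih, no_Cmul hA hB]
      have hNog : No A B g = C (-lam) * g := by
        unfold No
        rw [hg, Polynomial.smul_eq_C_mul, map_neg]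
        ring
      rw [hNog, show ((-lam)^(n+1)) = (-lam)^n * (-lam) by ring, map_mul]
      ring

/-- the key commutation: Y(Xf) = -X·Yf + T0 f - X f + κ f, in `No`-form. -/
lemma nF4 (hA : H0 ta ua A) (hB : H1 tb ub B) (f : Polynomial ℂ) :
    No A B (X * f) =
      -(X * No A B f) + X*f + No A B f + B f
        - C ((ta+ua+1/2)*(ta-ua+1/2) - ta - (tb+ub)*(tb-ub)) * f := by
  apply poly_cancel Xw_ne
  intro x
  have hA1 := hA (X*f) x
  have hA2 := hA f x
  have hB1 := hB (X*f) x
  have hB2 := hB f x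
  simp only [No, eval_add, eval_sub, eval_mul, eval_one, eval_ofNat, eval_X, eval_C,
    eval_pow, eval_neg] at hA1 hA2 hB1 hB2 ⊢
  linear_combination (-x)*hA1 + x*(1-x)*hA2 - ((1-2*x)/2)*hB1 - (x*(1-2*x)/2)*hB2


lemma sb_C (c : ℂ) (g : Polynomial ℂ) : sb A B (C c) g = C c * g := by
  unfold sb
  rw [Polynomial.sum_C_index (by simp)]
  simp

lemma sb_mono (c : ℂ) (k : ℕ) (g : Polynomial ℂ) :
    sb A B (C c * X^k) g = C c * ((No A B)^[k] g) := by
  unfold sb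
  rw [C_mul_X_pow_eq_monomial, Polynomial.sum_monomial_index _ _ (by simp)]

lemma sb_pow (k : ℕ) (g : Polynomial ℂ) : sb A B (X^k) g = (No A B)^[k] g := by
  have := sb_mono (A := A) (B := B) 1 k g
  simpa using this

lemma sb_add_left (f1 f2 g : Polynomial ℂ) :
    sb A B (f1 + f2) g = sb A B f1 g + sb A B f2 g := by
  unfold sb
  rw [Polynomial.sum_add_index]
  · simp
  · intro a b1 b2
    rw [map_add]; ring

lemma sb_Cmul_left (c : ℂ) (f g : Polynomial ℂ) :
    sb A B (C c * f) g = C c * sb A B f g := by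
  induction f using Polynomial.induction_on with
  | C a => rw [← map_mul, sb_C, sb_C, map_mul]; ring
  | add p q hp hq => rw [mul_add, sb_add_left, sb_add_left, hp, hq]; ring
  | monomial n a _ =>
      rw [← mul_assoc, ← map_mul, sb_mono, sb_mono, ← mul_assoc, ← map_mul]

lemma sb_neg_left (f g : Polynomial ℂ) : sb A B (-f) g = -(sb A B f g) := by
  have h := sb_Cmul_left (A := A) (B := B) (-1) f g
  simpa using h

lemma sb_add_right (hA : H0 ta ua A) (hB : H1 tb ub B) (f g1 g2 : Polynomial ℂ) :
    sb A B f (g1 + g2) = sb A B f g1 + sb A B f g2 := by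
  unfold sb
  rw [← Polynomial.sum_add]
  congr 1
  funext k c
  rw [no_iter_add hA hB]
  ring

lemma sb_Cmul_right (hA : H0 ta ua A) (hB : H1 tb ub B) (c : ℂ) (f g : Polynomial ℂ) :
    sb A B f (C c * g) = C c * sb A B f g := by
  unfold sb
  rw [Polynomial.sum_def, Polynomial.sum_def, Finset.mul_sum]
  apply Finset.sum_congr rfl
  intro k _
  rw [no_iter_Cmul hA hB]
  ring

lemma sb_Xmul_left (f g : Polynomial ℂ) : sb A B (X * f) g = sb A B f (No A B g) := by
  induction f using Polynomial.induction_on with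
  | C a =>
      rw [show (X : Polynomial ℂ) * C a = C a * X^1 by ring, sb_mono, sb_C]
      simp
  | add p q hp hq => rw [mul_add, sb_add_left, sb_add_left, hp, hq]
  | monomial n a _ =>
      rw [show (X : Polynomial ℂ) * (C a * X^(n+1)) = C a * X^(n+2) by ring, sb_mono, sb_mono]
      rw [Function.iterate_succ_apply (No A B) (n+1) g]

lemma sb_eig (hA : H0 ta ua A) (hB : H1 tb ub B) {lam : ℂ} {g : Polynomial ℂ}
    (hg : A g + B g = lam • g) (f : Polynomial ℂ) :
    sb A B f g = C (f.eval (-lam)) * g := by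
  unfold sb
  rw [Polynomial.sum_def]
  rw [Finset.sum_congr rfl (fun k _ => by
    rw [no_eig hA hB hg, ← mul_assoc, ← map_mul] :
      ∀ k ∈ f.support, C (f.coeff k) * ((No A B)^[k] g)
        = C (f.coeff k * (-lam)^k) * g)]
  rw [← Finset.sum_mul, ← map_sum]
  congr 2
  rw [Polynomial.eval_eq_sum, Polynomial.sum_def]

lemma sb_neg_right (hA : H0 ta ua A) (hB : H1 tb ub B) (f g : Polynomial ℂ) :
    sb A B f (-g) = -(sb A B f g) := by
  have h := sb_Cmul_right hA hB (-1) f g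
  simpa using h

end Comb

section Dual

variable {τ κ0 ν μ0 : ℂ} {A B A' B' : Polynomial ℂ → Polynomial ℂ}

lemma no_neg (hA : H0 ta ua A) (hB : H1 tb ub B) (f : Polynomial ℂ) :
    No A B (-f) = -(No A B f) := by
  unfold No
  rw [h0_neg hA, h1_neg hB]; ring

lemma no_sq (hA : H0 κ0 μ0 A) (hB : H1 τ ν B) (h : Polynomial ℂ) :
    No A B (No A B h) = C (κ0^2+τ^2) * h + A (B h) + B (A h) := by
  have step : No A B (No A B h) = A (A h + B h) + B (A h + B h) := by
    unfold No
    rw [h0_neg hA, h1_neg hB]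
    ring
  rw [step, h0_add hA, h1_add hB, h0_sq hA, h1_sq hB, map_add]
  ring

lemma no_sq_comm (hA : H0 κ0 μ0 A) (hB : H1 τ ν B) (h : Polynomial ℂ) :
    No A B (No A B (B h)) = B (No A B (No A B h)) := by
  rw [no_sq hA hB (B h), no_sq hA hB h, h1_sq hB, h0_Cmul hA,
    h1_add hB, h1_add hB, h1_Cmul hB, h1_sq hB]
  ring

lemma niter2 (hA : H0 κ0 μ0 A) (hB : H1 τ ν B) (r : ℕ) (h : Polynomial ℂ) :
    (No A B)^[2*r] (B h) = B ((No A B)^[2*r] h) := by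
  induction r generalizing h with
  | zero => simp
  | succ n ih =>
      rw [Nat.mul_succ, Function.iterate_add_apply, Function.iterate_add_apply]
      have h2 : ∀ x : Polynomial ℂ, (No A B)^[2] x = No A B (No A B x) := fun x => rfl
      rw [h2, h2, no_sq_comm hA hB, ← ih]

lemma no_evz (hA : H0 κ0 μ0 A) (hB : H1 τ ν B) (hs : τ + ν ≠ 0) (h : Polynomial ℂ) :
    (No A B h).eval (-(τ+ν)) = -((A h).eval (-(τ+ν))) - τ * h.eval (-(τ+ν)) := by
  unfold No
  rw [eval_neg, eval_add, h1_special hB hs]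
  ring

lemma claimF (hA : H0 κ0 μ0 A) (hB : H1 τ ν B) (hs : τ + ν ≠ 0) (v : Polynomial ℂ) :
    (No A B (B v)).eval (-(τ+ν)) =
      -((No A B (No A B v)).eval (-(τ+ν))) - τ * (No A B v).eval (-(τ+ν))
        - (τ^2-κ0^2) * v.eval (-(τ+ν)) := by
  have hANv : A (No A B v) = -(C (κ0^2) * v + A (B v)) := by
    unfold No
    rw [h0_neg hA, h0_add hA, h0_sq hA]
  have e1 := no_evz hA hB hs v
  have e2 := no_evz hA hB hs (No A B v)
  have e3 := no_evz hA hB hs (B v)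
  rw [hANv] at e2
  rw [e3, e2, e1, h1_special hB hs]
  simp only [eval_neg, eval_add, eval_mul, eval_C]
  ring

lemma G2pow (hA : H0 κ0 μ0 A) (hB : H1 τ ν B) (hB' : H1 τ κ0 B') (hs : τ + ν ≠ 0)
    (i : ℕ) (g : Polynomial ℂ) :
    (sb A B (B' (X^i)) g).eval (-(τ+ν)) = (sb A B (X^i) (B g)).eval (-(τ+ν)) := by
  rcases Nat.even_or_odd i with ⟨r, hr⟩ | ⟨r, hr⟩
  · -- even
    rw [hr, show r + r = 2*r by ring, h1_evenmono hB' r, sb_mono, sb_pow,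
      niter2 hA hB r g, h1_special hB hs, eval_mul, eval_C]
  · -- odd
    rw [hr, h1_oddmono hB' r, sb_pow]
    rw [show -(C τ * X^(2*r+1)) - X^(2*r+2) - C ((τ+κ0)*(τ-κ0)) * X^(2*r)
        = -(C τ * X^(2*r+1)) + (-(X^(2*r+2))) + (-(C ((τ+κ0)*(τ-κ0)) * X^(2*r))) by ring]
    rw [sb_add_left, sb_add_left, sb_neg_left, sb_neg_left, sb_neg_left,
      sb_mono, sb_pow, sb_mono]
    have hit1 : (No A B)^[2*r+1] g = No A B ((No A B)^[2*r] g) :=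
      Function.iterate_succ_apply' _ _ _
    have hit2 : (No A B)^[2*r+2] g = No A B (No A B ((No A B)^[2*r] g)) := by
      rw [show 2*r+2 = (2*r+1)+1 by ring, Function.iterate_succ_apply' _ _ _, hit1]
    have hit3 : (No A B)^[2*r+1] (B g) = No A B (B ((No A B)^[2*r] g)) := by
      rw [Function.iterate_succ_apply' _ _ _, niter2 hA hB]
    rw [hit1, hit2, hit3, claimF hA hB hs ((No A B)^[2*r] g)]
    simp only [eval_add, eval_neg, eval_mul, eval_C]
    ring

lemma G2 (hA : H0 κ0 μ0 A) (hB : H1 τ ν B) (hB' : H1 τ κ0 B') (hs : τ + ν ≠ 0)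
    (f g : Polynomial ℂ) :
    (sb A B (B' f) g).eval (-(τ+ν)) = (sb A B f (B g)).eval (-(τ+ν)) := by
  induction f using Polynomial.induction_on with
  | C a =>
      rw [h1_even hB' (C a) (fun x => by simp), ← map_mul, sb_C, sb_C, eval_mul, eval_mul,
        eval_C, eval_C, h1_special hB hs]
      ring
  | add p q hp hq =>
      rw [h1_add hB', sb_add_left, sb_add_left, eval_add, eval_add, hp, hq]
  | monomial n a _ =>
      rw [h1_Cmul hB', sb_Cmul_left, sb_mono]
      simp only [eval_mul, eval_C]
      rw [← sb_pow (A := A) (B := B) (n+1) (B g), G2pow hA hB hB' hs (n+1) g, sb_pow]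

lemma G1 (hA : H0 κ0 μ0 A) (hB : H1 τ ν B) (hA' : H0 ν μ0 A') (hB' : H1 τ κ0 B')
    (hs : τ + ν ≠ 0) (f g : Polynomial ℂ) :
    (sb A B f (X * g)).eval (-(τ+ν)) = (sb A B (No A' B' f) g).eval (-(τ+ν)) := by
  induction f using Polynomial.induction_on generalizing g with
  | C a =>
      rw [sb_C, no_C hA' hB', ← map_mul, sb_C]
      simp only [eval_mul, eval_C, eval_X]
      ring
  | add p q hp hq =>
      rw [sb_add_left, no_add hA' hB', sb_add_left, eval_add, eval_add, hp, hq]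
  | monomial n a ih =>
      rw [show (C a * X^(n+1) : Polynomial ℂ) = X * (C a * X^n) by ring]
      rw [sb_Xmul_left, nF4 hA hB g]
      rw [show -(X * No A B g) + X*g + No A B g + B g
            - C ((κ0+μ0+1/2)*(κ0-μ0+1/2) - κ0 - (τ+ν)*(τ-ν)) * g
          = (-(X * No A B g)) + (X*g) + (No A B g) + (B g)
            + (-(C ((κ0+μ0+1/2)*(κ0-μ0+1/2) - κ0 - (τ+ν)*(τ-ν)) * g)) by ring]
      rw [sb_add_right hA hB, sb_add_right hA hB, sb_add_right hA hB, sb_add_right hA hB,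
        sb_neg_right hA hB, sb_neg_right hA hB, sb_Cmul_right hA hB]
      rw [nF4 hA' hB' (C a * X^n)]
      rw [show -(X * No A' B' (C a * X^n)) + X*(C a * X^n) + No A' B' (C a * X^n)
            + B' (C a * X^n)
            - C ((ν+μ0+1/2)*(ν-μ0+1/2) - ν - (τ+κ0)*(τ-κ0)) * (C a * X^n)
          = (-(X * No A' B' (C a * X^n))) + (X*(C a * X^n)) + (No A' B' (C a * X^n))
            + (B' (C a * X^n))
            + (-(C ((ν+μ0+1/2)*(ν-μ0+1/2) - ν - (τ+κ0)*(τ-κ0)) * (C a * X^n))) by ring]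
      rw [sb_add_left, sb_add_left, sb_add_left, sb_add_left, sb_neg_left, sb_neg_left]
      have k1 : (sb A B (C a * X^n) (X * No A B g)).eval (-(τ+ν))
          = (sb A B (X * No A' B' (C a * X^n)) g).eval (-(τ+ν)) := by
        rw [ih (No A B g), sb_Xmul_left]
      have k2 : (sb A B (C a * X^n) (X * g)).eval (-(τ+ν))
          = (sb A B (No A' B' (C a * X^n)) g).eval (-(τ+ν)) := ih g
      have k3 : (sb A B (C a * X^n) (No A B g)).eval (-(τ+ν))
          = (sb A B (X * (C a * X^n)) g).eval (-(τ+ν)) := by rw [sb_Xmul_left]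
      have k4 : (sb A B (C a * X^n) (B g)).eval (-(τ+ν))
          = (sb A B (B' (C a * X^n)) g).eval (-(τ+ν)) :=
        (G2 hA hB hB' hs (C a * X^n) g).symm
      have hκ : ((κ0+μ0+1/2)*(κ0-μ0+1/2) - κ0 - (τ+ν)*(τ-ν))
          = ((ν+μ0+1/2)*(ν-μ0+1/2) - ν - (τ+κ0)*(τ-κ0)) := by ring
      have kp : (sb A B (C ((ν+μ0+1/2)*(ν-μ0+1/2) - ν - (τ+κ0)*(τ-κ0)) * (C a * X^n)) g).eval (-(τ+ν))
          = ((ν+μ0+1/2)*(ν-μ0+1/2) - ν - (τ+κ0)*(τ-κ0)) * (sb A B (C a * X^n) g).eval (-(τ+ν)) := by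
        rw [sb_Cmul_left, eval_mul, eval_C]
      simp only [eval_add, eval_neg, eval_mul, eval_C]
      linear_combination -k1 + k2 + k3 + k4 + kp
        - eval (-(τ+ν)) (sb A B (C a * X^n) g) * hκ

lemma MAIN (hA : H0 κ0 μ0 A) (hB : H1 τ ν B) (hA' : H0 ν μ0 A') (hB' : H1 τ κ0 B')
    (hs : τ + ν ≠ 0) (g f : Polynomial ℂ) :
    (sb A B f g).eval (-(τ+ν)) = (sb A' B' g f).eval (-(τ+κ0)) := by
  induction g using Polynomial.induction_on generalizing f with
  | C a =>
      have hg : A (C a) + B (C a) = (κ0+τ) • C a := by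
        rw [h0_C hA, h1_even hB (C a) (fun x => by simp), Polynomial.smul_eq_C_mul, map_add]
        ring
      rw [sb_eig hA hB hg f, sb_C]
      simp only [eval_mul, eval_C]
      rw [show -(κ0+τ) = -(τ+κ0) by ring]
      ring
  | add p q hp hq =>
      rw [sb_add_right hA hB, sb_add_left, eval_add, eval_add, hp, hq]
  | monomial n a ih =>
      rw [show (C a * X^(n+1) : Polynomial ℂ) = X * (C a * X^n) by ring]
      rw [G1 hA hB hA' hB' hs f (C a * X^n), ih (No A' B' f), ← sb_Xmul_left]

end Dual
end Stmt15Aux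

/-- Duality of the non-symmetric Wilson polynomials. With `q_n` the
non-symmetric Wilson polynomials for the dual parameters `(u1, u0, t1, t0)` (so with
dual Hecke parameters `ã = t1+t0`, `b̃ = t1−t0`, `c̃ = u1+u0+1/2`, `d̃ = u1−u0+1/2`)
and eigenvalues `x_{2k} = t1+u1+k`, `x_{2k+1} = −(t1+u1+k+1)`, one has for all `m, n`:
`p_m(−x_n)·q_n(−(t0+t1)) = p_m(−(t1+u1))·q_n(−γ_m)`. -/
theorem statement15 (t0 u0 t1 u1 a b c d : ℂ)
    (ha : a = t1 + u1) (hb : b = t1 - u1)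
    (hc : c = t0 + u0 + 1/2) (hd : d = t0 - u0 + 1/2)
    (hreg : ∀ k : ℕ, 2*(t0 + t1) ≠ -(k : ℂ))
    (hreg' : ∀ k : ℕ, 2*(t1 + u1) ≠ -(k : ℂ))
    (T0 T1 : Polynomial ℂ → Polynomial ℂ)
    (hT0 : ∀ (f : Polynomial ℂ) (x : ℂ),
      (1 - 2*x) * ((T0 f).eval x - t0 * f.eval x) =
        (c - x) * (d - x) * (f.eval (1 - x) - f.eval x))
    (hT1 : ∀ (f : Polynomial ℂ) (x : ℂ),
      (2*x) * ((T1 f).eval x - t1 * f.eval x) =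
        (a + x) * (b + x) * (f.eval (-x) - f.eval x))
    (γ : ℕ → ℂ)
    (hγe : ∀ n : ℕ, γ (2*n) = t0 + t1 + n)
    (hγo : ∀ n : ℕ, γ (2*n+1) = -(t0 + t1 + (n+1)))
    (p : ℕ → Polynomial ℂ)
    (hp : ∀ m : ℕ, (p m).Monic ∧ (p m).natDegree = m ∧
      T0 (p m) + T1 (p m) = γ m • p m)
    -- dual operators, built from the dual parameters (u1, u0, t1, t0)
    (T0d T1d : Polynomial ℂ → Polynomial ℂ)
    (hT0d : ∀ (f : Polynomial ℂ) (x : ℂ),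
      (1 - 2*x) * ((T0d f).eval x - u1 * f.eval x) =
        ((u1 + u0 + 1/2) - x) * ((u1 - u0 + 1/2) - x) * (f.eval (1 - x) - f.eval x))
    (hT1d : ∀ (f : Polynomial ℂ) (x : ℂ),
      (2*x) * ((T1d f).eval x - t1 * f.eval x) =
        ((t1 + t0) + x) * ((t1 - t0) + x) * (f.eval (-x) - f.eval x))
    (xe : ℕ → ℂ)
    (hxe : ∀ k : ℕ, xe (2*k) = t1 + u1 + k)
    (hxo : ∀ k : ℕ, xe (2*k+1) = -(t1 + u1 + (k+1)))
    (q : ℕ → Polynomial ℂ)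
    (hq : ∀ n : ℕ, (q n).Monic ∧ (q n).natDegree = n ∧
      T0d (q n) + T1d (q n) = xe n • q n) :
    ∀ m n : ℕ,
      (p m).eval (-(xe n)) * (q n).eval (-(t0 + t1)) =
        (p m).eval (-(t1 + u1)) * (q n).eval (-(γ m)) := by
  intro m n
  have hA : Stmt15Aux.H0 u1 u0 T0d := hT0d
  have hB : Stmt15Aux.H1 t1 t0 T1d := hT1d
  have hA' : Stmt15Aux.H0 t0 u0 T0 := by
    intro f x
    have h := hT0 f x
    rw [hc, hd] at h
    exact h
  have hB' : Stmt15Aux.H1 t1 u1 T1 := by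
    intro f x
    have h := hT1 f x
    rw [ha, hb] at h
    exact h
  have hs : t1 + t0 ≠ 0 := by
    intro h
    apply hreg 0
    rw [show t0 + t1 = t1 + t0 by ring, h]
    norm_num
  have hmain := Stmt15Aux.MAIN hA hB hA' hB' hs (q n) (p m)
  rw [Stmt15Aux.sb_eig hA hB (hq n).2.2 (p m),
      Stmt15Aux.sb_eig hA' hB' (hp m).2.2 (q n)] at hmain
  simp only [eval_mul, eval_C] at hmain
  rw [show -(t0+t1) = -(t1+t0) by ring]
  linear_combination hmain
end
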